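/- arXiv:0809.1586 — 11 statements merged into one kernel-verified Lean document; each statement's English description precedes it below -/
import Mathlib

section
/- Let P(x) = Σ_{i=0}^m a_i x^i be a polynomial of degree m whose coefficients satisfy 0 ≤ a_0 ≤ a_1 ≤ ⋯ ≤ a_m, and let d be a positive real number. Then the polynomial P(x+d) is unimodal, i.e., its coefficient sequence b_0, b_1, …, b_m satisfies b_0 ≤ ⋯ ≤ b_{t-1} ≤ b_t ≥ b_{t+1} ≥ ⋯ ≥ b_m for some index 0 ≤ t ≤ m. -/
open Finset

/-- The coefficients of `P(x+d)` where `P(x) = ∑_{i=0}^m a i * x^i`: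
`b j = ∑_{i=j}^m a i * d^(i-j) * C(i,j)`. -/
noncomputable def shiftCoeff (a : ℕ → ℝ) (m : ℕ) (d : ℝ) (j : ℕ) : ℝ :=
  ∑ i ∈ Finset.Icc j m, a i * d ^ (i - j) * (i.choose j : ℝ)

/-- `t` is a mode of the finite sequence `b 0, b 1, …, b m`, i.e.
`b 0 ≤ ⋯ ≤ b t ≥ ⋯ ≥ b m`. -/
def IsMode (b : ℕ → ℝ) (m t : ℕ) : Prop :=
  t ≤ m ∧ (∀ i, i < t → b i ≤ b (i + 1)) ∧ (∀ i, t ≤ i → i < m → b (i + 1) ≤ b i)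

/-- `m̄(d) = ⌈(m - d)/(d + 1)⌉` (a nonnegative integer since `(m-d)/(d+1) > -1`). -/
noncomputable def mbar (m : ℕ) (d : ℝ) : ℕ := (⌈((m : ℝ) - d) / (d + 1)⌉).toNat

/-- The coefficients of `Q_m(x+d)` where `Q_m(x) = ∑_{i=0}^m x^i`:
`d_j = ∑_{i=j}^m d^(i-j) * C(i,j)`. -/
noncomputable def qCoeff (m : ℕ) (d : ℝ) (j : ℕ) : ℝ :=
  ∑ i ∈ Finset.Icc j m, d ^ (i - j) * (i.choose j : ℝ)


lemma shiftCoeff_of_gt {a : ℕ → ℝ} {m : ℕ} {d : ℝ} {j : ℕ} (h : m < j) :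
    shiftCoeff a m d j = 0 := by
  unfold shiftCoeff
  rw [Finset.Icc_eq_empty (by omega), Finset.sum_empty]

lemma shiftCoeff_nonneg {a : ℕ → ℝ} {m : ℕ} {d : ℝ} {j : ℕ} (hd : 0 ≤ d)
    (ha : ∀ i, i ≤ m → 0 ≤ a i) : 0 ≤ shiftCoeff a m d j := by
  apply Finset.sum_nonneg
  intro i hi
  rw [Finset.mem_Icc] at hi
  exact mul_nonneg (mul_nonneg (ha i hi.2) (pow_nonneg hd _)) (Nat.cast_nonneg _)

lemma shiftCoeff_succ (a : ℕ → ℝ) (m : ℕ) (d : ℝ) (j : ℕ) :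
    shiftCoeff a (m+1) d (j+1)
      = shiftCoeff (fun i => a (i+1)) m d j + d * shiftCoeff (fun i => a (i+1)) m d (j+1) := by
  unfold shiftCoeff
  have hmap : Finset.Icc (j+1) (m+1) = (Finset.Icc j m).map (addRightEmbedding 1) := by
    rw [Finset.map_add_right_Icc]
  rw [hmap, Finset.sum_map]
  have hterm : ∀ i ∈ Finset.Icc j m,
      a (addRightEmbedding 1 i) * d ^ (addRightEmbedding 1 i - (j+1)) *
        (((addRightEmbedding 1 i).choose (j+1) : ℕ) : ℝ)
        = a (i+1) * d ^ (i-j) * (i.choose j : ℝ) + a (i+1) * d ^ (i-j) * (i.choose (j+1) : ℝ) := by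
    intro i _
    have h1 : addRightEmbedding 1 i = i + 1 := rfl
    rw [h1, Nat.succ_sub_succ, Nat.choose_succ_succ]
    push_cast
    ring
  rw [Finset.sum_congr rfl hterm, Finset.sum_add_distrib]
  congr 1
  rw [Finset.mul_sum]
  have hsub : Finset.Icc (j+1) m ⊆ Finset.Icc j m := by
    apply Finset.Icc_subset_Icc_left
    omega
  rw [← Finset.sum_subset hsub (fun x hx hnx => ?_)]
  · apply Finset.sum_congr rfl
    intro i hi
    rw [Finset.mem_Icc] at hi
    have h2 : i - j = (i - (j+1)) + 1 := by omega
    rw [h2, pow_succ]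
    ring
  · rw [Finset.mem_Icc] at hx hnx
    have : x = j := by omega
    subst this
    rw [Nat.choose_succ_self]
    simp

lemma shiftCoeff_zero (a : ℕ → ℝ) (m : ℕ) (d : ℝ) :
    shiftCoeff a (m+1) d 0 = a 0 + d * shiftCoeff (fun i => a (i+1)) m d 0 := by
  unfold shiftCoeff
  have h1 : Finset.Icc 0 (m+1) = Finset.range (m+2) := by
    ext x; simp [Nat.lt_succ_iff]
  have h2 : Finset.Icc 0 m = Finset.range (m+1) := by
    ext x; simp [Nat.lt_succ_iff]
  rw [h1, h2, Finset.sum_range_succ']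
  simp only [Nat.choose_zero_right, Nat.cast_one, mul_one, Nat.sub_zero, pow_zero]
  rw [Finset.mul_sum, add_comm]
  congr 1
  apply Finset.sum_congr rfl
  intro i _
  rw [pow_succ]
  ring

lemma aux_unimodal (d : ℝ) (hd : 0 < d) :
    ∀ (m : ℕ) (a : ℕ → ℝ), 0 ≤ a 0 → (∀ i, i < m → a i ≤ a (i+1)) →
      ∃ t, IsMode (shiftCoeff a m d) m t := by
  intro m
  induction m with
  | zero =>
    intro a _ _
    exact ⟨0, le_rfl, fun i hi => absurd hi (Nat.not_lt_zero i),
      fun i _ hi => absurd hi (Nat.not_lt_zero i)⟩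
  | succ m ih =>
    intro a ha0 hmono
    have ha : ∀ i, i ≤ m + 1 → 0 ≤ a i := by
      intro i
      induction i with
      | zero => intro _; exact ha0
      | succ n ihn => intro h; exact (ihn (by omega)).trans (hmono n (by omega))
    obtain ⟨t', ht'm, hinc, hdec⟩ :=
      ih (fun i => a (i+1)) (ha0.trans (hmono 0 (by omega)))
        (fun i hi => hmono (i+1) (by omega))
    set b : ℕ → ℝ := shiftCoeff (fun i => a (i+1)) m d with hbdef
    set c : ℕ → ℝ := shiftCoeff a (m+1) d with hcdef
    have hbnn : ∀ j, 0 ≤ b j := fun j =>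
      shiftCoeff_nonneg hd.le (fun i hi => ha (i+1) (by omega))
    have hrec : ∀ j, c (j+1) = b j + d * b (j+1) := fun j => shiftCoeff_succ a m d j
    have h0 : c 0 = a 0 + d * b 0 := shiftCoeff_zero a m d
    have hdec' : ∀ i, t' ≤ i → b (i+1) ≤ b i := by
      intro i hi
      by_cases him : i < m
      · exact hdec i hi him
      · have hz : b (i+1) = 0 := shiftCoeff_of_gt (by omega)
        rw [hz]; exact hbnn i
    have hb0 : a 0 ≤ b 0 := by
      have h1 : a 0 ≤ a 1 := hmono 0 (by omega)
      have h2 : a 1 ≤ b 0 := by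
        have key := Finset.single_le_sum
          (f := fun i => a (i+1) * d ^ (i - 0) * ((i.choose 0 : ℕ) : ℝ))
          (fun i hi => by
            rw [Finset.mem_Icc] at hi
            exact mul_nonneg (mul_nonneg (ha (i+1) (by omega)) (pow_nonneg hd.le _))
              (Nat.cast_nonneg _))
          (Finset.mem_Icc.mpr ⟨le_rfl, Nat.zero_le m⟩)
        have hb0eq : b 0 = ∑ x ∈ Finset.Icc 0 m, a (x + 1) * d ^ x := by
          rw [hbdef]
          unfold shiftCoeff
          apply Finset.sum_congr rfl
          intro i _
          simp
        rw [hb0eq]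
        simpa using key
      linarith
    have hcinc : ∀ k, k + 1 < t' → c (k+1) ≤ c (k+1+1) := by
      intro k hk
      have e1 := hrec k
      have e2 := hrec (k+1)
      have h3 : b k ≤ b (k+1) := hinc k (by omega)
      have h4 : b (k+1) ≤ b (k+1+1) := hinc (k+1) hk
      rw [e1, e2]
      exact add_le_add h3 (mul_le_mul_of_nonneg_left h4 hd.le)
    have hcdec : ∀ k, t' ≤ k → c (k+1+1) ≤ c (k+1) := by
      intro k hk
      rw [hrec k, hrec (k+1)]
      have h3 : b (k+1) ≤ b k := hdec' k hk
      have h4 : b (k+1+1) ≤ b (k+1) := hdec' (k+1) (by omega)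
      exact add_le_add h3 (mul_le_mul_of_nonneg_left h4 hd.le)
    by_cases hA : c 0 ≤ c 1
    · by_cases hB : c (t'+1) ≤ c t'
      · refine ⟨t', by omega, ?_, ?_⟩
        · intro i hi
          rcases i with _ | k
          · exact hA
          · exact hcinc k hi
        · intro i hti _
          rcases Nat.eq_or_lt_of_le hti with h | h
          · rw [← h]; exact hB
          · obtain ⟨k, rfl⟩ : ∃ k, i = k+1 := ⟨i-1, by omega⟩
            exact hcdec k (by omega)
      · refine ⟨t'+1, by omega, ?_, ?_⟩
        · intro i hi
          rcases i with _ | k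
          · exact hA
          · by_cases hkt : k + 1 < t'
            · exact hcinc k hkt
            · have he : t' = k + 1 := by omega
              subst he
              exact (not_le.mp hB).le
        · intro i hti _
          obtain ⟨k, rfl⟩ : ∃ k, i = k+1 := ⟨i-1, by omega⟩
          exact hcdec k (by omega)
    · have ht0 : t' = 0 := by
        by_contra h
        have hb01 : b 0 ≤ b 1 := hinc 0 (by omega)
        apply hA
        have e1 : c 1 = b 0 + d * b 1 := hrec 0
        have hmul : d * b 0 ≤ d * b 1 := mul_le_mul_of_nonneg_left hb01 hd.le
        rw [h0, e1]
        linarith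
      refine ⟨0, by omega, fun i hi => absurd hi (Nat.not_lt_zero i), ?_⟩
      intro i _ _
      rcases i with _ | k
      · exact le_of_not_ge hA
      · exact hcdec k (by omega)

/-- Conjecture 1 of the paper.  If `P(x) = ∑ a_i x^i` has degree `m`
with `0 ≤ a_0 ≤ a_1 ≤ ⋯ ≤ a_m` and `d > 0`, then `P(x+d)` is unimodal. -/
theorem stmt_0 (m : ℕ) (hm : 0 < m) (a : ℕ → ℝ) (d : ℝ) (hd : 0 < d)
    (ha0 : 0 ≤ a 0) (hmono : ∀ i, i < m → a i ≤ a (i + 1)) (hdeg : a m ≠ 0) :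
    ∃ t, IsMode (shiftCoeff a m d) m t :=
  aux_unimodal d hd m a ha0 hmono
end

section
/- Let P(x) = Σ_{i=0}^m a_i x^i be a polynomial of degree m with nonnegative coefficients, let d > 0, and write P(x+d) = Σ_{j=0}^m b_j x^j, so b_j = Σ_{i=j}^m a_i d^{i-j} C(i,j). Then b_{m̄} ≥ b_{m̄+1} ≥ ⋯ ≥ b_m, where m̄ = ⌈(m−d)/(d+1)⌉. -/
open Finset

/-
Each coefficient `b_{j+1}` is dominated term by term by `b_j`. Since
`C(i, j+1) (j+1) = C(i, j) (i - j)`, the term of index `i` in `b_{j+1}` is at most the one in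
`b_j` as soon as `i - j ≤ d (j+1)`, and for `i ≤ m` this follows from `m - j ≤ d (j+1)`,
which is exactly the condition `j ≥ (m - d)/(d + 1)` defining `m̄`. The extra term `i = j`
of `b_j` is nonnegative.
-/

theorem sub_le_mul_of_mbar_le {m j : ℕ} {d : ℝ} (hd : -1 < d) (hj : mbar m d ≤ j) :
    (m : ℝ) - j ≤ d * (j + 1) := by
  have hceil : ((m : ℝ) - d) / (d + 1) ≤ j := by
    have hle : ⌈((m : ℝ) - d) / (d + 1)⌉ ≤ j :=
      (Int.self_le_toNat _).trans (by exact_mod_cast hj)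
    exact (Int.le_ceil _).trans (by exact_mod_cast hle)
  rw [div_le_iff₀ (by linarith)] at hceil
  linarith

theorem choose_succ_le_mul_choose {i j : ℕ} {d : ℝ} (hji : j ≤ i)
    (h : (i : ℝ) - j ≤ d * (j + 1)) : (i.choose (j + 1) : ℝ) ≤ d * i.choose j := by
  have hrec : (i.choose (j + 1) : ℝ) * (j + 1) = i.choose j * ((i : ℝ) - j) := by
    rw [← Nat.cast_sub hji]
    exact_mod_cast Nat.choose_succ_right_eq i j
  have hchoose : (0 : ℝ) ≤ i.choose j := by positivity
  rw [← mul_le_mul_iff_of_pos_right (by positivity : (0 : ℝ) < j + 1), hrec]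
  nlinarith

theorem shiftCoeff_succ_le {a : ℕ → ℝ} {m j : ℕ} {d : ℝ} (hd : 0 ≤ d)
    (ha : ∀ i, i ≤ m → 0 ≤ a i) (h : (m : ℝ) - j ≤ d * (j + 1)) :
    shiftCoeff a m d (j + 1) ≤ shiftCoeff a m d j := by
  have hterm : ∀ i ∈ Icc (j + 1) m,
      a i * d ^ (i - (j + 1)) * (i.choose (j + 1) : ℝ) ≤ a i * d ^ (i - j) * (i.choose j : ℝ) := by
    intro i hi
    obtain ⟨hji, him⟩ := mem_Icc.mp hi
    have hpow : d ^ (i - j) = d ^ (i - (j + 1)) * d := by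
      rw [← pow_succ]; congr 1; omega
    have him' : (i : ℝ) ≤ m := by exact_mod_cast him
    have hchoose := choose_succ_le_mul_choose (d := d) (by omega : j ≤ i) (by linarith)
    rw [hpow, mul_assoc, mul_assoc, mul_assoc]
    exact mul_le_mul_of_nonneg_left (mul_le_mul_of_nonneg_left hchoose (by positivity))
      (ha i him)
  calc shiftCoeff a m d (j + 1)
      ≤ ∑ i ∈ Icc (j + 1) m, a i * d ^ (i - j) * (i.choose j : ℝ) := sum_le_sum hterm
    _ ≤ shiftCoeff a m d j := by
      refine sum_le_sum_of_subset_of_nonneg (Icc_subset_Icc_left j.le_succ) fun i hi _ => ?_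
      have := ha i (mem_Icc.mp hi).2
      positivity

theorem stmt_2_general (m : ℕ) (a : ℕ → ℝ) (d : ℝ) (hd : 0 < d)
    (hnonneg : ∀ i, i ≤ m → 0 ≤ a i) :
    ∀ j, mbar m d ≤ j → j < m →
      shiftCoeff a m d (j + 1) ≤ shiftCoeff a m d j :=
  fun _ hj _ => shiftCoeff_succ_le hd.le hnonneg (sub_le_mul_of_mbar_le (by linarith) hj)

/-- first part of Lemma 2.2.  If `P(x) = ∑ a_i x^i` has degree `m`,
nonnegative coefficients, and `d > 0`, then the coefficients `b_j` of `P(x+d)`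
satisfy `b_{m̄} ≥ b_{m̄+1} ≥ ⋯ ≥ b_m` where `m̄ = ⌈(m-d)/(d+1)⌉`. -/
theorem stmt_2 (m : ℕ) (hm : 0 < m) (a : ℕ → ℝ) (d : ℝ) (hd : 0 < d)
    (hnonneg : ∀ i, i ≤ m → 0 ≤ a i) (hdeg : a m ≠ 0) :
    ∀ j, mbar m d ≤ j → j < m →
      shiftCoeff a m d (j + 1) ≤ shiftCoeff a m d j :=
  stmt_2_general m a d hd hnonneg
end

section
/- Let P(x) = Σ_{i=0}^m a_i x^i be a polynomial of degree m with nonnegative coefficients, and let d be a real number with d ≥ (m−1)/2. Then P(x+d) is unimodal, and it has 0 or 1 as a mode. -/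
open Finset

/-- second part of Lemma 2.2.  If `P(x) = ∑ a_i x^i` has degree `m`,
nonnegative coefficients, and `d ≥ (m-1)/2`, then `P(x+d)` is unimodal with mode
`0` or `1`. -/
theorem stmt_3 (m : ℕ) (hm : 0 < m) (a : ℕ → ℝ) (d : ℝ)
    (hd : ((m : ℝ) - 1) / 2 ≤ d)
    (hnonneg : ∀ i, i ≤ m → 0 ≤ a i) (hdeg : a m ≠ 0) :
    IsMode (shiftCoeff a m d) m 0 ∨ IsMode (shiftCoeff a m d) m 1 := by
  have hd0 : 0 ≤ d := by
    have : (0:ℝ) ≤ ((m:ℝ) - 1) / 2 := by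
      have : (1:ℝ) ≤ m := by exact_mod_cast hm
      linarith
    linarith
  -- key decreasing step for j ≥ 1
  have step : ∀ j : ℕ, 1 ≤ j → shiftCoeff a m d (j + 1) ≤ shiftCoeff a m d j := by
    intro j hj
    unfold shiftCoeff
    have h1 : ∑ i ∈ Finset.Icc (j+1) m, a i * d ^ (i - (j+1)) * (i.choose (j+1) : ℝ)
        ≤ ∑ i ∈ Finset.Icc (j+1) m, a i * d ^ (i - j) * (i.choose j : ℝ) := by
      apply Finset.sum_le_sum
      intro i hi
      rw [Finset.mem_Icc] at hi
      obtain ⟨hij, him⟩ := hi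
      have hji : j ≤ i := by omega
      have hch : (i.choose (j+1) : ℝ) * ((j:ℝ) + 1) = (i.choose j : ℝ) * ((i:ℝ) - j) := by
        have h := Nat.choose_succ_right_eq i j
        have h2 : ((i.choose (j+1) * (j+1) : ℕ) : ℝ) = ((i.choose j * (i - j) : ℕ) : ℝ) := by
          exact_mod_cast congrArg (Nat.cast (R := ℝ)) h
        push_cast [Nat.cast_sub hji] at h2
        linarith
      have hd2 : (i:ℝ) - j ≤ d * ((j:ℝ) + 1) := by
        have h1 : (i:ℝ) ≤ m := by exact_mod_cast him
        have h2 : (1:ℝ) ≤ j := by exact_mod_cast hj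
        nlinarith
      have hc0 : (0:ℝ) ≤ (i.choose j : ℝ) := by positivity
      have hcle : (i.choose (j+1) : ℝ) ≤ d * (i.choose j : ℝ) := by
        have hjpos : (0:ℝ) < (j:ℝ) + 1 := by positivity
        nlinarith [mul_le_mul_of_nonneg_left hd2 hc0]
      have hpow : i - j = (i - (j+1)) + 1 := by omega
      rw [hpow, pow_succ]
      have hpk : (0:ℝ) ≤ d ^ (i - (j+1)) := pow_nonneg hd0 _
      have hai : 0 ≤ a i := hnonneg i him
      nlinarith [mul_le_mul_of_nonneg_left hcle (mul_nonneg hai hpk)]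
    refine le_trans h1 ?_
    apply Finset.sum_le_sum_of_subset_of_nonneg
    · exact Finset.Icc_subset_Icc (by omega) le_rfl
    · intro i hi _
      rw [Finset.mem_Icc] at hi
      have := hnonneg i hi.2
      positivity
  by_cases h01 : shiftCoeff a m d 0 ≤ shiftCoeff a m d 1
  · right
    refine ⟨hm, ?_, ?_⟩
    · intro i hi
      interval_cases i
      exact h01
    · intro i hi _
      exact step i hi
  · left
    refine ⟨Nat.zero_le m, fun i hi => absurd hi (by omega), ?_⟩
    intro i _ him
    rcases Nat.eq_zero_or_pos i with rfl | hi
    · exact le_of_not_ge h01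
    · exact step i hi
end

section
/- Let P(x) = Σ_{i=0}^m a_i x^i be a polynomial of degree m with nonnegative coefficients, and let d be a real number with d ≥ m. Then the coefficient sequence b_0, b_1, …, b_m of P(x+d) is non-increasing: b_0 ≥ b_1 ≥ ⋯ ≥ b_m. -/
open Finset

/-- last part of Lemma 2.2.  If `P(x) = ∑ a_i x^i` has degree `m`,
nonnegative coefficients, and `d ≥ m`, then the coefficients of `P(x+d)` form a
non-increasing sequence. -/
theorem stmt_4 (m : ℕ) (hm : 0 < m) (a : ℕ → ℝ) (d : ℝ) (hd : (m : ℝ) ≤ d)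
    (hnonneg : ∀ i, i ≤ m → 0 ≤ a i) (hdeg : a m ≠ 0) :
    ∀ j, j < m → shiftCoeff a m d (j + 1) ≤ shiftCoeff a m d j := by
  intro j hj
  have hd0 : (0:ℝ) ≤ d := le_trans (by positivity) hd
  unfold shiftCoeff
  calc ∑ i ∈ Finset.Icc (j+1) m, a i * d ^ (i - (j+1)) * (i.choose (j+1) : ℝ)
      ≤ ∑ i ∈ Finset.Icc (j+1) m, a i * d ^ (i - j) * (i.choose j : ℝ) := by
        apply Finset.sum_le_sum
        intro i hi
        simp only [Finset.mem_Icc] at hi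
        obtain ⟨hji, him⟩ := hi
        have ha := hnonneg i him
        have hc : (i.choose (j+1) : ℝ) ≤ d * (i.choose j : ℝ) := by
          have h1 : i.choose (j+1) * (j+1) = i.choose j * (i - j) :=
            Nat.choose_succ_right_eq i j
          have h2 : (i.choose (j+1) : ℝ) * ((j:ℝ)+1) = (i.choose j : ℝ) * ((i - j : ℕ) : ℝ) := by
            exact_mod_cast congrArg (Nat.cast : ℕ → ℝ) h1
          have h3 : (i.choose (j+1) : ℝ) ≤ (i.choose j : ℝ) * ((i - j : ℕ) : ℝ) := by
            nlinarith [Nat.cast_nonneg (α := ℝ) (i.choose (j+1)), Nat.cast_nonneg (α := ℝ) j]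
          have h4 : ((i - j : ℕ) : ℝ) ≤ d := by
            have h5 : (i - j : ℕ) ≤ m := le_trans (Nat.sub_le i j) him
            calc ((i-j:ℕ):ℝ) ≤ (m:ℝ) := by exact_mod_cast h5
              _ ≤ d := hd
          calc (i.choose (j+1):ℝ) ≤ (i.choose j:ℝ) * ((i-j:ℕ):ℝ) := h3
            _ ≤ (i.choose j:ℝ) * d :=
                mul_le_mul_of_nonneg_left h4 (Nat.cast_nonneg _)
            _ = d * (i.choose j:ℝ) := mul_comm _ _
        have hpow : d ^ (i - (j+1)) * d = d ^ (i - j) := by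
          rw [← pow_succ]
          congr 1
          omega
        calc a i * d ^ (i - (j+1)) * (i.choose (j+1):ℝ)
            ≤ a i * d ^ (i - (j+1)) * (d * (i.choose j:ℝ)) :=
              mul_le_mul_of_nonneg_left hc (by positivity)
          _ = a i * (d ^ (i-(j+1)) * d) * (i.choose j:ℝ) := by ring
          _ = a i * d ^ (i - j) * (i.choose j:ℝ) := by rw [hpow]
    _ ≤ ∑ i ∈ Finset.Icc j m, a i * d ^ (i - j) * (i.choose j : ℝ) := by
        apply Finset.sum_le_sum_of_subset_of_nonneg
        · intro x hx
          simp only [Finset.mem_Icc] at *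
          omega
        · intro i hi _
          simp only [Finset.mem_Icc] at hi
          have := hnonneg i hi.2
          positivity
end

section
/- Let P(x) = Σ_{i=0}^m a_i x^i be a monic polynomial of degree m with nonnegative, non-decreasing coefficients (0 ≤ a_0 ≤ a_1 ≤ ⋯ ≤ a_m = 1), let d > 0, and suppose P(x) ≠ x^m. Then every mode of P(x+d) is at most m̄ = ⌈(m−d)/(d+1)⌉; equivalently, the greatest mode M^*(P,d) of P(x+d) satisfies M^*(P,d) ≤ m̄. (In fact, the coefficients b_j of P(x+d) satisfy b_{m̄+1} < b_{m̄}.) -/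
open Finset

lemma a_nonneg_aux (m : ℕ) (a : ℕ → ℝ) (ha0 : 0 ≤ a 0)
    (hmono : ∀ i, i < m → a i ≤ a (i + 1)) : ∀ i, i ≤ m → 0 ≤ a i := by
  intro i hi
  induction i with
  | zero => exact ha0
  | succ n ih => exact (ih (by omega)).trans (hmono n (by omega))

lemma a_mono_aux (m : ℕ) (a : ℕ → ℝ)
    (hmono : ∀ i, i < m → a i ≤ a (i + 1)) :
    ∀ i k, i ≤ k → k ≤ m → a i ≤ a k := by
  intro i k
  induction k with
  | zero => intro h _; simp [Nat.le_zero.mp h]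
  | succ n ih =>
    intro hik hkm
    rcases Nat.eq_or_lt_of_le hik with h | h
    · rw [h]
    · exact (ih (by omega) (by omega)).trans (hmono n (by omega))

lemma choose_cast_eq (i j : ℕ) (hji : j < i) :
    (i.choose (j + 1) : ℝ) * ((j : ℝ) + 1) = (i.choose j : ℝ) * ((i : ℝ) - (j : ℝ)) := by
  have h0 := Nat.choose_succ_right_eq i j
  have := congrArg (Nat.cast : ℕ → ℝ) h0
  push_cast [Nat.cast_sub hji.le] at this
  linarith [this]

lemma choose_ineq (i j : ℕ) (d : ℝ) (hji : j < i)
    (h : (i : ℝ) - (j : ℝ) ≤ d * ((j : ℝ) + 1)) :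
    (i.choose (j + 1) : ℝ) ≤ d * (i.choose j : ℝ) := by
  have h1 := choose_cast_eq i j hji
  have hc : (0 : ℝ) ≤ (i.choose j : ℝ) := by positivity
  have hj1 : (0 : ℝ) < (j : ℝ) + 1 := by positivity
  nlinarith [mul_le_mul_of_nonneg_left h hc]

lemma choose_sineq (i j : ℕ) (d : ℝ) (hji : j < i)
    (h : (i : ℝ) - (j : ℝ) < d * ((j : ℝ) + 1)) :
    (i.choose (j + 1) : ℝ) < d * (i.choose j : ℝ) := by
  have h1 := choose_cast_eq i j hji
  have hc : (0 : ℝ) < (i.choose j : ℝ) := by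
    exact_mod_cast Nat.choose_pos hji.le
  have hj1 : (0 : ℝ) < (j : ℝ) + 1 := by positivity
  nlinarith [mul_lt_mul_of_pos_left h hc]

/-- Corollary 2.1.  Let `P ∈ 𝐏^m_↑` (monic of degree `m` with
nonnegative non-decreasing coefficients), `d > 0`, and `P(x) ≠ x^m`.  Then the
coefficients `b_j` of `P(x+d)` satisfy `b_{m̄+1} < b_{m̄}`, and every mode of
`P(x+d)` is at most `m̄ = ⌈(m-d)/(d+1)⌉`. -/
theorem stmt_5 (m : ℕ) (hm : 0 < m) (a : ℕ → ℝ) (d : ℝ) (hd : 0 < d)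
    (ha0 : 0 ≤ a 0) (hmono : ∀ i, i < m → a i ≤ a (i + 1)) (hmonic : a m = 1)
    (hne : ∃ i, i < m ∧ a i ≠ 0) :
    shiftCoeff a m d (mbar m d + 1) < shiftCoeff a m d (mbar m d) ∧
      ∀ t, IsMode (shiftCoeff a m d) m t → t ≤ mbar m d := by
  have hd1 : (0 : ℝ) < d + 1 := by linarith
  set j := mbar m d with hjdef
  have hnn := a_nonneg_aux m a ha0 hmono
  have hmonot := a_mono_aux m a hmono
  have ham1 : 0 < a (m - 1) := by
    obtain ⟨i, him, hai⟩ := hne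
    have hi0 : 0 < a i := lt_of_le_of_ne (hnn i him.le) (Ne.symm hai)
    exact hi0.trans_le (hmonot i (m - 1) (by omega) (by omega))
  -- j ≤ m
  have hjm : j ≤ m := by
    have hx : ((m : ℝ) - d) / (d + 1) ≤ (m : ℝ) := by
      rw [div_le_iff₀ hd1]
      nlinarith [Nat.cast_nonneg (α := ℝ) m]
    have h2 : ⌈((m : ℝ) - d) / (d + 1)⌉ ≤ (m : ℤ) := Int.ceil_le.mpr (by exact_mod_cast hx)
    simpa [hjdef, mbar] using Int.toNat_le.mpr h2
  -- key: m ≤ j(d+1)+d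
  have hkey : (m : ℝ) ≤ (j : ℝ) * (d + 1) + d := by
    have h2 : (⌈((m : ℝ) - d) / (d + 1)⌉ : ℝ) ≤ (j : ℝ) := by
      rw [hjdef, mbar]
      exact_mod_cast Int.self_le_toNat _
    have h1 : ((m : ℝ) - d) / (d + 1) ≤ (j : ℝ) := (Int.le_ceil _).trans h2
    rw [div_le_iff₀ hd1] at h1
    linarith
  have hb : shiftCoeff a m d (j + 1) < shiftCoeff a m d j := by
    rcases eq_or_lt_of_le hjm with hcase | hlt
    · -- j = m
      rw [hcase]
      have h0 : shiftCoeff a m d (m + 1) = 0 := by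
        simp [shiftCoeff, Finset.Icc_eq_empty (by omega : ¬ m + 1 ≤ m)]
      have h1 : shiftCoeff a m d m = 1 := by
        simp [shiftCoeff, Finset.Icc_self, hmonic]
      rw [h0, h1]; norm_num
    · -- j < m
      have e1 : shiftCoeff a m d j
          = a j + ∑ i ∈ Ioc j m, a i * d ^ (i - j) * (i.choose j : ℝ) := by
        rw [shiftCoeff, Finset.Icc_eq_cons_Ioc hjm, Finset.sum_cons]
        simp
      have e2 : shiftCoeff a m d (j + 1)
          = ∑ i ∈ Ioc j m, a i * d ^ (i - (j + 1)) * (i.choose (j + 1) : ℝ) := by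
        rw [shiftCoeff, Finset.Icc_add_one_left_eq_Ioc]
      have hterm : ∀ i ∈ Ioc j m,
          a i * d ^ (i - (j + 1)) * (i.choose (j + 1) : ℝ)
            ≤ a i * d ^ (i - j) * (i.choose j : ℝ) := by
        intro i hi
        rw [Finset.mem_Ioc] at hi
        have hji : j < i := hi.1
        have hupper : (i : ℝ) - (j : ℝ) ≤ d * ((j : ℝ) + 1) := by
          have : (i : ℝ) ≤ (m : ℝ) := by exact_mod_cast hi.2
          linarith
        have hci := choose_ineq i j d hji hupper
        have hpow : d ^ (i - j) = d ^ (i - (j + 1)) * d := by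
          rw [← pow_succ]
          congr 1
          omega
        have hnni : 0 ≤ a i * d ^ (i - (j + 1)) := by
          have := hnn i hi.2
          positivity
        calc a i * d ^ (i - (j + 1)) * (i.choose (j + 1) : ℝ)
            ≤ a i * d ^ (i - (j + 1)) * (d * (i.choose j : ℝ)) :=
              mul_le_mul_of_nonneg_left hci hnni
          _ = a i * d ^ (i - j) * (i.choose j : ℝ) := by rw [hpow]; ring
      rcases eq_or_lt_of_le (Nat.succ_le_of_lt hlt) with hA | hB
      · -- j + 1 = m
        have hsum := Finset.sum_le_sum hterm
        have haj : 0 < a j := by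
          have : j = m - 1 := by omega
          rwa [this]
        rw [e1, e2]; linarith
      · -- j + 1 < m
        have hmem : m - 1 ∈ Ioc j m := by
          rw [Finset.mem_Ioc]; omega
        have hstrict : a (m - 1) * d ^ ((m - 1) - (j + 1)) * ((m - 1).choose (j + 1) : ℝ)
            < a (m - 1) * d ^ ((m - 1) - j) * ((m - 1).choose j : ℝ) := by
          have hji : j < m - 1 := by omega
          have hupper : ((m - 1 : ℕ) : ℝ) - (j : ℝ) < d * ((j : ℝ) + 1) := by
            have hc : ((m - 1 : ℕ) : ℝ) = (m : ℝ) - 1 := by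
              rw [Nat.cast_sub hm]; norm_num
            rw [hc]; linarith
          have hci := choose_sineq (m - 1) j d hji hupper
          have hpow : d ^ ((m - 1) - j) = d ^ ((m - 1) - (j + 1)) * d := by
            rw [← pow_succ]
            congr 1
            omega
          have hposc : 0 < a (m - 1) * d ^ ((m - 1) - (j + 1)) := by positivity
          calc a (m - 1) * d ^ ((m - 1) - (j + 1)) * ((m - 1).choose (j + 1) : ℝ)
              < a (m - 1) * d ^ ((m - 1) - (j + 1)) * (d * ((m - 1).choose j : ℝ)) :=
                mul_lt_mul_of_pos_left hci hposc
            _ = a (m - 1) * d ^ ((m - 1) - j) * ((m - 1).choose j : ℝ) := by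
                rw [hpow]; ring
        have hsum := Finset.sum_lt_sum hterm ⟨m - 1, hmem, hstrict⟩
        have haj : 0 ≤ a j := hnn j hjm
        rw [e1, e2]; linarith
  refine ⟨hb, ?_⟩
  rintro t ⟨htm, hinc, _⟩
  by_contra hcon
  push_neg at hcon
  exact absurd (hinc j hcon) (not_le.mpr hb)
end

section
/- Let m be a positive integer, d > 0, and define d_j = Σ_{i=j}^m d^{i−j} C(i,j) for j = 0, 1, …, m (these are the coefficients of Q_m(x+d) where Q_m(x) = Σ_{i=0}^m x^i). Then the sequence {d_j} is strictly log-concave: d_{j−1} d_{j+1} < d_j^2 for all 0 < j < m. In fact, d_j^2 − d_{j−1} d_{j+1} = Σ_{i=j}^m [(m−i+1)/(j+1)] C(m+1,j) C(i,j) d^{m+i−2j} > 0. -/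
open Finset

lemma choose_pred_cast (i j : ℕ) (hj : 1 ≤ j) (hij : j ≤ i) :
    (i.choose (j-1) : ℝ) = (i.choose j : ℝ) * j / ((i:ℝ) - j + 1) := by
  have key := Nat.choose_succ_right_eq i (j-1)
  rw [Nat.sub_add_cancel hj] at key
  have hle : j - 1 ≤ i := by omega
  have hcast : (i.choose j : ℝ) * j = (i.choose (j-1) : ℝ) * ((i:ℝ) - (j:ℝ) + 1) := by
    have := congrArg (Nat.cast : ℕ → ℝ) key
    push_cast [Nat.cast_sub hle, Nat.cast_sub hj] at this
    linarith [this]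
  have hden : ((i:ℝ) - j + 1) ≠ 0 := by
    have : (j:ℝ) ≤ i := by exact_mod_cast hij
    linarith
  field_simp
  linarith [hcast]

lemma choose_succ_cast (i j : ℕ) (hij : j ≤ i) :
    (i.choose (j+1) : ℝ) = (i.choose j : ℝ) * ((i:ℝ) - j) / ((j:ℝ) + 1) := by
  have key := Nat.choose_succ_right_eq i j
  have hcast : (i.choose (j+1) : ℝ) * ((j:ℝ)+1) = (i.choose j : ℝ) * ((i:ℝ) - j) := by
    have := congrArg (Nat.cast : ℕ → ℝ) key
    push_cast [Nat.cast_sub hij] at this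
    linarith [this]
  have hden : ((j:ℝ)+1) ≠ 0 := by positivity
  field_simp
  linarith [hcast]

lemma choose_up_cast (i j : ℕ) (hj : 1 ≤ j) (hij : j ≤ i) :
    ((i+1).choose j : ℝ) = (i.choose j : ℝ) * ((i:ℝ) + 1) / ((i:ℝ) - j + 1) := by
  have hp : (i+1).choose j = i.choose (j-1) + i.choose j := by
    have h := Nat.choose_succ_succ i (j-1)
    simp only [Nat.succ_eq_add_one, Nat.sub_add_cancel hj] at h
    exact h
  have hden : ((i:ℝ) - j + 1) ≠ 0 := by
    have : (j:ℝ) ≤ i := by exact_mod_cast hij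
    linarith
  have := choose_pred_cast i j hj hij
  rw [show ((i+1).choose j : ℝ) = (i.choose (j-1) : ℝ) + (i.choose j : ℝ) by exact_mod_cast congrArg (Nat.cast : ℕ → ℝ) hp, this]
  field_simp
  ring


lemma star_coeff (n i j : ℕ) (hj : 1 ≤ j) (hjn : j ≤ n) (hji : j ≤ i) :
    (((n:ℝ)+2-(i:ℝ))/((j:ℝ)+1)) * ((n+2).choose j : ℝ) * (i.choose j : ℝ)
      - (((n:ℝ)-(i:ℝ))/((j:ℝ)+1)) * ((n+1).choose j : ℝ) * ((i+1).choose j : ℝ)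
    = 2 * (i.choose j : ℝ) * ((n+1).choose j : ℝ)
      - (i.choose (j-1) : ℝ) * ((n+1).choose (j+1) : ℝ)
      - ((n+1).choose (j-1) : ℝ) * (i.choose (j+1) : ℝ) := by
  have hjn1 : j ≤ n + 1 := by omega
  have e1 := choose_pred_cast i j hj hji
  have e2 := choose_succ_cast i j hji
  have e3 := choose_up_cast i j hj hji
  have e4 := choose_pred_cast (n+1) j hj hjn1
  have e5 := choose_succ_cast (n+1) j hjn1
  have e6 := choose_up_cast (n+1) j hj hjn1
  push_cast at e1 e2 e3 e4 e5 e6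
  rw [show ((n:ℕ)+2) = (n+1)+1 from rfl] at *
  push_cast at e6 ⊢
  rw [e1, e2, e3, e4, e5, e6]
  have hi : (j:ℝ) ≤ i := by exact_mod_cast hji
  have hn : (j:ℝ) ≤ n := by exact_mod_cast hjn
  have d1 : ((i:ℝ) - j + 1) ≠ 0 := by linarith
  have d2 : ((j:ℝ)+1) ≠ 0 := by positivity
  have d3 : ((n:ℝ)+1 - j + 1) ≠ 0 := by linarith
  field_simp
  ring


lemma pow_pair (d X Y : ℝ) (a b c : ℕ) (h : a + b = c) :
    (d ^ a * X) * (d ^ b * Y) = X * Y * d ^ c := by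
  subst h; rw [pow_add]; ring

lemma ptwise (d : ℝ) (n i j : ℕ) (hj : 1 ≤ j) (hjn : j + 1 ≤ n)
    (hi1 : j - 1 ≤ i) (hi2 : i ≤ n) :
    ((n:ℝ) + 1 - (i:ℝ) + 1) / ((j:ℝ)+1) * ((n+1+1).choose j : ℝ) * (i.choose j : ℝ) *
        d ^ (n + 1 + i - 2*j)
    = ((n:ℝ) - ((i:ℝ)+1) + 1) / ((j:ℝ)+1) * ((n+1).choose j : ℝ) * ((i+1).choose j : ℝ) *
        d ^ (n + (i+1) - 2*j)
      + (2 * (d ^ (i-j) * (i.choose j : ℝ)) * (d ^ (n+1-j) * ((n+1).choose j : ℝ))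
        - (d ^ (i-(j-1)) * (i.choose (j-1) : ℝ)) * (d ^ (n+1-(j+1)) * ((n+1).choose (j+1) : ℝ))
        - (d ^ (n+1-(j-1)) * ((n+1).choose (j-1) : ℝ)) * (d ^ (i-(j+1)) * (i.choose (j+1) : ℝ))) := by
  rcases Nat.lt_or_ge i j with hlt | hge
  · -- i = j - 1, i.e. j = i + 1
    have hj' : j = i + 1 := by omega
    subst hj'
    simp only [Nat.add_sub_cancel, Nat.choose_succ_self, Nat.cast_zero,
      Nat.choose_self, Nat.cast_one, Nat.sub_self, pow_zero,
      Nat.choose_eq_zero_of_lt (show i < i + 2 by omega), mul_zero, zero_mul, mul_one, one_mul]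
    rw [show n + (i+1) - 2*(i+1) = n + 1 - (i+1+1) by omega]
    have e := choose_succ_cast (n+1) (i+1) (by omega)
    push_cast at e ⊢
    rw [e]
    have d2 : ((i:ℝ)+1+1) ≠ 0 := by positivity
    field_simp
    ring
  · rcases Nat.eq_or_lt_of_le hge with heq | hgt
    · -- i = j
      subst heq
      have hz : (Nat.choose j (j+1) : ℝ) = 0 := by simp [Nat.choose_succ_self]
      rw [hz]
      rw [show j - j = 0 by omega, pow_zero,
        show j - (j-1) = 1 by omega, pow_one,
        show n + 1 + j - 2*j = n + 1 - j by omega,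
        show n + (j+1) - 2*j = n + 1 - j by omega]
      have hs := star_coeff n j j hj (by omega) le_rfl
      rw [hz] at hs
      have hpw : d * (j.choose (j-1) : ℝ) * (d ^ (n+1-(j+1)) * ((n+1).choose (j+1) : ℝ))
          = (j.choose (j-1) : ℝ) * ((n+1).choose (j+1) : ℝ) * d ^ (n+1-j) := by
        rw [show (n+1-j : ℕ) = 1 + (n+1-(j+1)) by omega, pow_add, pow_one]; ring
      linear_combination (d ^ (n+1-j)) * hs + hpw
    · -- i ≥ j + 1 : generic case
      rw [mul_assoc 2,
        pow_pair d _ _ _ _ _ (show (i-j) + (n+1-j) = n+1+i-2*j by omega),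
        pow_pair d _ _ _ _ _ (show (i-(j-1)) + (n+1-(j+1)) = n+1+i-2*j by omega),
        pow_pair d _ _ _ _ _ (show (n+1-(j-1)) + (i-(j+1)) = n+1+i-2*j by omega),
        show n + (i+1) - 2*j = n+1+i-2*j by omega]
      have hs := star_coeff n i j hj (by omega) (by omega)
      linear_combination (d ^ (n+1+i-2*j)) * hs


lemma bnd (d : ℝ) (n j : ℕ) (hj : 1 ≤ j) (hjn : j + 1 ≤ n) :
    (((n+1 : ℕ):ℝ) - ((n+1 : ℕ):ℝ) + 1) / ((j:ℝ)+1) * ((n+1+1).choose j : ℝ) *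
        ((n+1).choose j : ℝ) * d ^ (n+1+(n+1) - 2*j)
    = (d ^ (n+1-j) * ((n+1).choose j : ℝ))^2
      - (d ^ (n+1-(j-1)) * ((n+1).choose (j-1) : ℝ)) *
        (d ^ (n+1-(j+1)) * ((n+1).choose (j+1) : ℝ)) := by
  rw [sq, pow_pair d _ _ _ _ _ (show (n+1-j) + (n+1-j) = n+1+(n+1)-2*j by omega),
    pow_pair d _ _ _ _ _ (show (n+1-(j-1)) + (n+1-(j+1)) = n+1+(n+1)-2*j by omega)]
  have e4 := choose_pred_cast (n+1) j hj (by omega)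
  have e5 := choose_succ_cast (n+1) j (by omega)
  have e6 := choose_up_cast (n+1) j hj (by omega)
  push_cast at e4 e5 e6 ⊢
  rw [e4, e5, e6]
  have hn : (j:ℝ) ≤ n := by exact_mod_cast (show j ≤ n by omega)
  have d1 : ((n:ℝ)+1 - j + 1) ≠ 0 := by linarith
  have d2 : ((j:ℝ)+1) ≠ 0 := by positivity
  field_simp
  ring



lemma key_ident (d : ℝ) (j : ℕ) (hj : 1 ≤ j) :
    ∀ m, j + 1 ≤ m → qCoeff m d j ^ 2 - qCoeff m d (j - 1) * qCoeff m d (j + 1) =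
      ∑ i ∈ Finset.Icc j m,
        (((m : ℝ) - (i : ℝ) + 1) / ((j : ℝ) + 1)) * ((m + 1).choose j : ℝ) *
          (i.choose j : ℝ) * d ^ (m + i - 2 * j) := by
  intro m hm
  induction m, hm using Nat.le_induction with
  | base =>
    obtain ⟨p, rfl⟩ : ∃ p, j = p + 1 := ⟨j - 1, by omega⟩
    have h1 : qCoeff (p+1+1) d (p+1) = 1 + d * ((p+2 : ℕ) : ℝ) := by
      unfold qCoeff
      rw [Finset.sum_Icc_succ_top (by omega), Finset.Icc_self, Finset.sum_singleton]
      rw [Nat.sub_self, Nat.choose_self, show p+1+1 - (p+1) = 1 by omega, pow_zero, pow_one]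
      rw [show p+1+1 = p+2 from rfl, Nat.choose_succ_self_right]
      push_cast; ring
    have h2 : qCoeff (p+1+1) d (p+1+1) = 1 := by
      unfold qCoeff
      rw [Finset.Icc_self, Finset.sum_singleton, Nat.sub_self, Nat.choose_self, pow_zero]
      norm_num
    have h3 : qCoeff (p+1+1) d (p+1-1) = 1 + d * ((p+1 : ℕ) : ℝ)
        + d^2 * ((p+2).choose p : ℝ) := by
      unfold qCoeff
      rw [show (p+1-1 : ℕ) = p by omega]
      rw [show (p+1+1 : ℕ) = p+1+1 from rfl, Finset.sum_Icc_succ_top (by omega),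
        Finset.sum_Icc_succ_top (by omega), Finset.Icc_self, Finset.sum_singleton]
      rw [Nat.sub_self, Nat.choose_self, pow_zero, show p+1-p = 1 by omega, pow_one,
        show p+1+1-p = 2 by omega, Nat.choose_succ_self_right, show p+1+1 = p+2 from rfl]
      push_cast; ring
    rw [h1, h2, h3]
    rw [Finset.sum_Icc_succ_top (by omega), Finset.Icc_self, Finset.sum_singleton]
    rw [show p+1+1 + (p+1) - 2*(p+1) = 1 by omega, pow_one,
      show p+1+1 + (p+1+1) - 2*(p+1) = 2 by omega,
      Nat.choose_self, show p+1+1 = p+2 from rfl, Nat.choose_succ_self_right]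
    -- choose facts
    have c1 : (((p+2).choose p : ℕ) : ℝ) = ((p:ℝ)+2)*((p:ℝ)+1)/2 := by
      have h := Nat.choose_succ_right_eq (p+2) p
      rw [Nat.choose_succ_self_right, show p+2-p = 2 by omega] at h
      have h2 := congrArg (Nat.cast : ℕ → ℝ) h
      push_cast at h2
      linarith
    have c2 : (((p+2+1).choose (p+1) : ℕ) : ℝ) = ((p:ℝ)+3)*((p:ℝ)+2)/2 := by
      have h := Nat.choose_succ_right_eq (p+3) (p+1)
      rw [show p+1+1 = p+2 from rfl, show p+3-(p+1) = 2 by omega] at h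
      rw [show (p+3 : ℕ).choose (p+2) = p+3 by
        rw [show (p+3:ℕ) = (p+2)+1 from rfl, Nat.choose_succ_self_right]] at h
      have h2 := congrArg (Nat.cast : ℕ → ℝ) h
      push_cast at h2
      rw [show (p+2+1 : ℕ) = p+3 from rfl]
      push_cast
      linarith
    rw [c1, c2]
    have d2 : ((p:ℝ)+1+1) ≠ 0 := by positivity
    push_cast
    field_simp
    ring
  | succ n hn IH =>
    have hq : ∀ k, k ≤ n + 1 → qCoeff (n+1) d k
        = qCoeff n d k + d ^ (n+1-k) * ((n+1).choose k : ℝ) := by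
      intro k hk
      unfold qCoeff
      rw [Finset.sum_Icc_succ_top hk]
    rw [hq j (by omega), hq (j-1) (by omega), hq (j+1) (by omega)]
    -- split the RHS sum
    have hsplit : (∑ i ∈ Finset.Icc j (n+1),
          (((n+1 : ℕ) : ℝ) - (i:ℝ) + 1) / ((j:ℝ)+1) * (((n+1)+1).choose j : ℝ) *
            (i.choose j : ℝ) * d ^ ((n+1) + i - 2*j))
        = (∑ i ∈ Finset.Icc (j-1) n,
            (((n+1 : ℕ) : ℝ) - (i:ℝ) + 1) / ((j:ℝ)+1) * (((n+1)+1).choose j : ℝ) *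
              (i.choose j : ℝ) * d ^ ((n+1) + i - 2*j))
          + (((n+1 : ℕ) : ℝ) - ((n+1 : ℕ):ℝ) + 1) / ((j:ℝ)+1) * (((n+1)+1).choose j : ℝ) *
              (((n+1) : ℕ).choose j : ℝ) * d ^ ((n+1) + (n+1) - 2*j) := by
      rw [Finset.sum_Icc_succ_top (show j ≤ n+1 by omega)]
      congr 1
      apply Finset.sum_subset (Finset.Icc_subset_Icc_left (by omega))
      intro x hx hxn
      have hx' : x = j - 1 := by
        simp only [Finset.mem_Icc] at hx hxn; omega
      subst hx'
      simp [Nat.choose_eq_zero_of_lt (show j-1 < j by omega)]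
    -- pointwise identity on Icc (j-1) n
    have hpt : (∑ i ∈ Finset.Icc (j-1) n,
          (((n+1 : ℕ) : ℝ) - (i:ℝ) + 1) / ((j:ℝ)+1) * (((n+1)+1).choose j : ℝ) *
            (i.choose j : ℝ) * d ^ ((n+1) + i - 2*j))
        = ∑ i ∈ Finset.Icc (j-1) n,
            (((n : ℝ) - ((i+1 : ℕ):ℝ) + 1) / ((j:ℝ)+1) * ((n+1).choose j : ℝ) *
              ((i+1).choose j : ℝ) * d ^ (n + (i+1) - 2*j)
            + (2 * (d ^ (i-j) * (i.choose j : ℝ)) * (d ^ (n+1-j) * ((n+1).choose j : ℝ))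
              - (d ^ (i-(j-1)) * (i.choose (j-1) : ℝ)) *
                  (d ^ (n+1-(j+1)) * ((n+1).choose (j+1) : ℝ))
              - (d ^ (n+1-(j-1)) * ((n+1).choose (j-1) : ℝ)) *
                  (d ^ (i-(j+1)) * (i.choose (j+1) : ℝ)))) := by
      refine Finset.sum_congr rfl fun i hi => ?_
      simp only [Finset.mem_Icc] at hi
      have h := ptwise d n i j hj hn hi.1 hi.2
      push_cast
      push_cast at h
      linear_combination h
    -- reindex the shifted sum
    have hreidx : (∑ i ∈ Finset.Icc (j-1) n,
          ((n : ℝ) - ((i+1 : ℕ):ℝ) + 1) / ((j:ℝ)+1) * ((n+1).choose j : ℝ) *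
            ((i+1).choose j : ℝ) * d ^ (n + (i+1) - 2*j))
        = ∑ i ∈ Finset.Icc j n,
            ((n : ℝ) - (i:ℝ) + 1) / ((j:ℝ)+1) * ((n+1).choose j : ℝ) *
              (i.choose j : ℝ) * d ^ (n + i - 2*j) := by
      have hmap : (Finset.Icc (j-1) n).map (addRightEmbedding 1) = Finset.Icc j (n+1) := by
        rw [Finset.map_add_right_Icc]; congr 1; omega
      have h1 : (∑ i ∈ Finset.Icc j (n+1),
            ((n : ℝ) - (i:ℝ) + 1) / ((j:ℝ)+1) * ((n+1).choose j : ℝ) *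
              (i.choose j : ℝ) * d ^ (n + i - 2*j))
          = ∑ i ∈ Finset.Icc (j-1) n,
              ((n : ℝ) - ((i+1 : ℕ):ℝ) + 1) / ((j:ℝ)+1) * ((n+1).choose j : ℝ) *
                ((i+1).choose j : ℝ) * d ^ (n + (i+1) - 2*j) := by
        rw [← hmap, Finset.sum_map]
        rfl
      rw [Finset.sum_Icc_succ_top (show j ≤ n+1 by omega)] at h1
      have hz : ((n : ℝ) - ((n+1 : ℕ):ℝ) + 1) = 0 := by push_cast; ring
      rw [hz] at h1
      simp only [zero_div, zero_mul] at h1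
      linarith [h1]
    -- expand the cross-term sum
    have hDj : qCoeff n d j = ∑ i ∈ Finset.Icc (j-1) n, d ^ (i-j) * (i.choose j : ℝ) := by
      unfold qCoeff
      apply Finset.sum_subset (Finset.Icc_subset_Icc_left (by omega))
      intro x hx hxn
      have hx' : x = j - 1 := by simp only [Finset.mem_Icc] at hx hxn; omega
      subst hx'
      simp [Nat.choose_eq_zero_of_lt (show j-1 < j by omega)]
    have hDj1 : qCoeff n d (j+1)
        = ∑ i ∈ Finset.Icc (j-1) n, d ^ (i-(j+1)) * (i.choose (j+1) : ℝ) := by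
      unfold qCoeff
      apply Finset.sum_subset (Finset.Icc_subset_Icc_left (by omega))
      intro x hx hxn
      have hx' : x < j + 1 := by simp only [Finset.mem_Icc] at hx hxn; omega
      simp [Nat.choose_eq_zero_of_lt hx']
    have hDjm : qCoeff n d (j-1)
        = ∑ i ∈ Finset.Icc (j-1) n, d ^ (i-(j-1)) * (i.choose (j-1) : ℝ) := rfl
    have hg : (∑ i ∈ Finset.Icc (j-1) n,
          (2 * (d ^ (i-j) * (i.choose j : ℝ)) * (d ^ (n+1-j) * ((n+1).choose j : ℝ))
            - (d ^ (i-(j-1)) * (i.choose (j-1) : ℝ)) *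
                (d ^ (n+1-(j+1)) * ((n+1).choose (j+1) : ℝ))
            - (d ^ (n+1-(j-1)) * ((n+1).choose (j-1) : ℝ)) *
                (d ^ (i-(j+1)) * (i.choose (j+1) : ℝ))))
        = 2 * qCoeff n d j * (d ^ (n+1-j) * ((n+1).choose j : ℝ))
          - qCoeff n d (j-1) * (d ^ (n+1-(j+1)) * ((n+1).choose (j+1) : ℝ))
          - (d ^ (n+1-(j-1)) * ((n+1).choose (j-1) : ℝ)) * qCoeff n d (j+1) := by
      rw [hDj, hDj1, hDjm]
      simp only [Finset.mul_sum, Finset.sum_mul, ← Finset.sum_sub_distrib]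
      try exact Finset.sum_congr rfl fun i _ => by ring
    have hbnd := bnd d n j hj hn
    rw [hsplit, hpt, Finset.sum_add_distrib, hreidx, hg]
    rw [show ((n:ℕ)+1+1) = n+1+1 from rfl] at hbnd
    rw [hbnd]
    linear_combination IH


/-- Proposition 3.2.  The coefficients `d_j = ∑_{i=j}^m d^{i-j} C(i,j)`
of `Q_m(x+d)` form a strictly log-concave sequence; in fact
`d_j² − d_{j−1} d_{j+1} = ∑_{i=j}^m ((m−i+1)/(j+1)) C(m+1,j) C(i,j) d^{m+i−2j} > 0`. -/
theorem stmt_7 (m : ℕ) (hm : 0 < m) (d : ℝ) (hd : 0 < d) :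
    ∀ j, 0 < j → j < m →
      (qCoeff m d j ^ 2 - qCoeff m d (j - 1) * qCoeff m d (j + 1) =
        ∑ i ∈ Finset.Icc j m,
          (((m : ℝ) - (i : ℝ) + 1) / ((j : ℝ) + 1)) * ((m + 1).choose j : ℝ) *
            (i.choose j : ℝ) * d ^ (m + i - 2 * j)) ∧
      qCoeff m d (j - 1) * qCoeff m d (j + 1) < qCoeff m d j ^ 2 := by
  intro j hj0 hjm
  have hid := key_ident d j hj0 m (by omega)
  refine ⟨hid, ?_⟩
  have hpos : 0 < ∑ i ∈ Finset.Icc j m,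
      (((m : ℝ) - (i : ℝ) + 1) / ((j : ℝ) + 1)) * ((m + 1).choose j : ℝ) *
        (i.choose j : ℝ) * d ^ (m + i - 2 * j) := by
    apply Finset.sum_pos
    · intro i hi
      simp only [Finset.mem_Icc] at hi
      have h1 : (i:ℝ) ≤ (m:ℝ) := by exact_mod_cast hi.2
      have h2 : (0:ℝ) < ((m + 1).choose j : ℝ) := by
        exact_mod_cast Nat.choose_pos (show j ≤ m+1 by omega)
      have h3 : (0:ℝ) < (i.choose j : ℝ) := by
        exact_mod_cast Nat.choose_pos hi.1
      have h4 : (0:ℝ) < d ^ (m + i - 2 * j) := by positivity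
      have h5 : (0:ℝ) < ((m : ℝ) - (i : ℝ) + 1) / ((j : ℝ) + 1) := by
        apply div_pos <;> [linarith; positivity]
      positivity
    · exact ⟨j, by simp only [Finset.mem_Icc]; omega⟩
  linarith [hid, hpos]
end

section
/- Let m be a positive integer, d ≥ 1 a real number, and Q_m(x) = Σ_{i=0}^m x^i. Then every mode of Q_m(x+d) equals m̄ − 1 or m̄, where m̄ = ⌈(m−d)/(d+1)⌉. Moreover, if ⌈(m+1−d)/(d+1)⌉ = m̄ + 1, then Q_m(x+d) has the unique mode m̄. -/
open Finset

lemma lemH (k q : ℕ) : ∑ r ∈ range (k+1), (q+r).choose r = (q+k+1).choose k := by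
  induction k with
  | zero => simp
  | succ k ih =>
    rw [Finset.sum_range_succ, ih]
    exact (Nat.choose_succ_succ (q+k+1) k).symm

lemma lemI (p : ℕ) : ∀ (c e : ℕ),
    (c+p+e).choose (c+p) * ∏ k ∈ range p, (c+1+k) =
    (c+p+e).choose c * ∏ k ∈ range p, (e+1+k) := by
  induction p with
  | zero => simp
  | succ p ih =>
    intro c e
    have h1 : ∏ k ∈ range (p+1), (c+1+k) = (∏ k ∈ range p, (c+1+k)) * (c+1+p) :=
      Finset.prod_range_succ _ _
    have h2 : ∏ k ∈ range (p+1), (e+1+k) = (e+1) * ∏ k ∈ range p, (e+1+1+k) := by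
      rw [Finset.prod_range_succ']
      rw [mul_comm]
      congr 1
      exact Finset.prod_congr rfl (fun k _ => by omega)
    have h3 : (c+(p+1)+e).choose (c+p+1) * (c+p+1) =
        (c+(p+1)+e).choose (c+p) * ((c+(p+1)+e) - (c+p)) :=
      Nat.choose_succ_right_eq _ _
    have h4 : (c+(p+1)+e) - (c+p) = e + 1 := by omega
    have ihe := ih c (e+1)
    have hn : c + p + (e+1) = c+(p+1)+e := by ring
    rw [hn] at ihe
    calc (c+(p+1)+e).choose (c+p+1) * ∏ k ∈ range (p+1), (c+1+k)
        = ((c+(p+1)+e).choose (c+p+1) * (c+p+1)) * ∏ k ∈ range p, (c+1+k) := by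
          rw [h1]; ring
      _ = (e+1) * ((c+(p+1)+e).choose (c+p) * ∏ k ∈ range p, (c+1+k)) := by
          rw [h3, h4]; ring
      _ = (e+1) * ((c+(p+1)+e).choose c * ∏ k ∈ range p, ((e+1)+1+k)) := by
          rw [ihe]
      _ = (c+(p+1)+e).choose c * ∏ k ∈ range (p+1), (e+1+k) := by
          rw [h2]; ring

lemma lemR (d : ℝ) (hd : 0 < d) (p c e : ℕ) (hp : 0 < p)
    (h : ∀ u ∈ range p, d * ((c:ℝ)+1+u) < ((e:ℝ)+1+u)) :
    d^p * ((c+p+e).choose c : ℝ) < ((c+p+e).choose (c+p) : ℝ) := by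
  have hprodpos : (0:ℝ) < ∏ k ∈ range p, ((c:ℝ)+1+k) := by
    apply Finset.prod_pos; intro k _; positivity
  have key : (∏ k ∈ range p, (d * ((c:ℝ)+1+k))) < ∏ k ∈ range p, ((e:ℝ)+1+k) := by
    apply Finset.prod_lt_prod_of_nonempty
    · intro k _; positivity
    · exact h
    · exact Finset.nonempty_range_iff.mpr hp.ne'
  have hId : ((c+p+e).choose (c+p) : ℝ) * ∏ k ∈ range p, ((c:ℝ)+1+k) =
      ((c+p+e).choose c : ℝ) * ∏ k ∈ range p, ((e:ℝ)+1+k) := by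
    have := lemI p c e
    have := congrArg (Nat.cast (R := ℝ)) this
    push_cast at this
    convert this using 2 <;> simp
  have hchoosec : (0:ℝ) ≤ ((c+p+e).choose c : ℝ) := by positivity
  have hprodd : ∏ k ∈ range p, (d * ((c:ℝ)+1+k)) = d^p * ∏ k ∈ range p, ((c:ℝ)+1+k) := by
    rw [Finset.prod_mul_distrib, Finset.prod_const, Finset.card_range]
  have h2 : ((c+p+e).choose c : ℝ) * (d^p * ∏ k ∈ range p, ((c:ℝ)+1+k)) ≤
      ((c+p+e).choose c : ℝ) * ∏ k ∈ range p, ((e:ℝ)+1+k) := by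
    apply mul_le_mul_of_nonneg_left _ hchoosec
    rw [← hprodd]; exact le_of_lt key
  by_cases hc0 : ((c+p+e).choose c : ℝ) = 0
  · exfalso
    have : c ≤ c+p+e := by omega
    have := Nat.choose_pos this
    simp [Nat.cast_eq_zero] at hc0
    omega
  · have hcpos : (0:ℝ) < ((c+p+e).choose c : ℝ) := by
      have : c ≤ c+p+e := by omega
      exact_mod_cast Nat.choose_pos this
    have h3 : d^p * ((c+p+e).choose c : ℝ) * ∏ k ∈ range p, ((c:ℝ)+1+k) <
        ((c+p+e).choose c : ℝ) * ∏ k ∈ range p, ((e:ℝ)+1+k) := by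
      calc d^p * ((c+p+e).choose c : ℝ) * ∏ k ∈ range p, ((c:ℝ)+1+k)
          = ((c+p+e).choose c : ℝ) * ∏ k ∈ range p, (d * ((c:ℝ)+1+k)) := by
            rw [hprodd]; ring
        _ < ((c+p+e).choose c : ℝ) * ∏ k ∈ range p, ((e:ℝ)+1+k) :=
            (mul_lt_mul_iff_right₀ hcpos).mpr key
    rw [← hId] at h3
    exact lt_of_mul_lt_mul_right h3 (le_of_lt hprodpos)

lemma qCoeff_succ_top (m : ℕ) (d : ℝ) (j : ℕ) (h : j ≤ m + 1) :
    qCoeff (m+1) d j = qCoeff m d j + d ^ (m+1-j) * (((m+1).choose j : ℕ) : ℝ) := by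
  unfold qCoeff
  exact Finset.sum_Icc_succ_top h _

lemma qCoeff_self (j : ℕ) (d : ℝ) : qCoeff j d j = 1 := by
  unfold qCoeff
  rw [Finset.Icc_self, Finset.sum_singleton]
  simp

lemma qCoeff_pred (i : ℕ) (d : ℝ) : qCoeff (i+1) d i = 1 + ((i:ℝ)+1) * d := by
  unfold qCoeff
  rw [Finset.sum_Icc_succ_top (by omega)]
  rw [Finset.Icc_self, Finset.sum_singleton]
  simp [Nat.choose_succ_self_right]
  ring

lemma lemA (d : ℝ) (i : ℕ) : ∀ M, i ≤ M →
    qCoeff (M+1) d (i+1) - qCoeff (M+1) d i =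
      (∑ n ∈ Icc (i+1) M, d ^ (n-i) * ((n.choose (i+1) : ℕ) : ℝ))
        - d ^ (M+1-i) * (((M+1).choose i : ℕ) : ℝ) := by
  refine Nat.le_induction ?_ ?_
  · rw [qCoeff_self, qCoeff_pred]
    rw [show Icc (i+1) i = ∅ from Finset.Icc_eq_empty (by omega), Finset.sum_empty]
    rw [show i+1-i = 1 by omega]
    simp [Nat.choose_succ_self_right]
    ring
  · intro M hM ih
    rw [qCoeff_succ_top (M+1) d (i+1) (by omega), qCoeff_succ_top (M+1) d i (by omega)]
    rw [Finset.sum_Icc_succ_top (by omega : i+1 ≤ M+1)]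
    have e4 : M+1+1-(i+1) = M+1-i := by omega
    have hpas : (((M+1+1).choose (i+1) : ℕ) : ℝ)
        = (((M+1).choose i : ℕ) : ℝ) + (((M+1).choose (i+1) : ℕ) : ℝ) := by
      exact_mod_cast Nat.choose_succ_succ (M+1) i
    rw [e4, hpas]
    linear_combination ih

lemma L2aux (d : ℝ) (hd : 1 ≤ d) (i : ℕ) : ∀ m, i+1 ≤ m →
    ((m:ℝ)+1 ≤ ((i:ℝ)+1)*(d+1)) →
    qCoeff m d (i+1) - qCoeff m d i ≤ -(((i:ℝ)+1)*d) := by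
  refine Nat.le_induction ?_ ?_
  · intro _
    rw [qCoeff_self, qCoeff_pred]
    ring_nf
    linarith
  · intro m hm ih hcond
    have hd0 : (0:ℝ) < d := by linarith
    have ih' := ih (by push_cast at hcond ⊢; linarith)
    rw [qCoeff_succ_top m d (i+1) (by omega), qCoeff_succ_top m d i (by omega)]
    have e1 : m+1-(i+1) = m-i := by omega
    have e2 : m+1-i = (m-i)+1 := by omega
    have hbin : (((m+1).choose (i+1) : ℕ) : ℝ) * ((i:ℝ)+1)
        = (((m+1).choose i : ℕ) : ℝ) * ((m:ℝ)+1-i) := by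
      have h := Nat.choose_succ_right_eq (m+1) i
      have := congrArg (Nat.cast (R := ℝ)) h
      push_cast at this
      rw [this]
      have : ((m+1-i : ℕ) : ℝ) = (m:ℝ)+1-i := by
        have : i ≤ m+1 := by omega
        push_cast [this]
        ring
      rw [this]
    have hle : (((m+1).choose (i+1) : ℕ) : ℝ) ≤ d * (((m+1).choose i : ℕ) : ℝ) := by
      have hip : (0:ℝ) < (i:ℝ)+1 := by positivity
      have h1 : ((m:ℝ)+1-i) ≤ ((i:ℝ)+1)*d := by push_cast at hcond; linarith
      have h2 : (((m+1).choose (i+1) : ℕ) : ℝ) * ((i:ℝ)+1)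
          ≤ (((m+1).choose i : ℕ) : ℝ) * (((i:ℝ)+1)*d) := by
        rw [hbin]
        apply mul_le_mul_of_nonneg_left h1 (by positivity)
      nlinarith
    have hpow : (0:ℝ) < d ^ (m-i) := by positivity
    have hinc : d ^ (m+1-(i+1)) * (((m+1).choose (i+1) : ℕ) : ℝ)
        - d ^ (m+1-i) * (((m+1).choose i : ℕ) : ℝ) ≤ 0 := by
      rw [e1, e2, pow_succ]
      nlinarith
    linarith

lemma L2' (d : ℝ) (hd : 1 ≤ d) (m i : ℕ) (h1 : i+1 ≤ m)
    (h2 : (m:ℝ)+1 ≤ ((i:ℝ)+1)*(d+1)) : qCoeff m d (i+1) < qCoeff m d i := by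
  have := L2aux d hd i m h1 h2
  have hd0 : (0:ℝ) < d := by linarith
  have : qCoeff m d (i+1) - qCoeff m d i < 0 := by nlinarith [this]
  linarith

lemma L1' (d : ℝ) (hd : 1 ≤ d) (m i : ℕ) (h1 : i+1 ≤ m)
    (h2 : ((i:ℝ)+2)*(d+1) < (m:ℝ)+2) : qCoeff m d i < qCoeff m d (i+1) := by
  have hd0 : (0:ℝ) < d := by linarith
  have hm' : 2*i+3 ≤ m := by
    by_contra h
    push_neg at h
    have : (m:ℝ) ≤ 2*(i:ℝ)+2 := by exact_mod_cast Nat.lt_succ_iff.mp h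
    nlinarith
  obtain ⟨s, rfl⟩ : ∃ s, m = 2*i+3+s := ⟨m - (2*i+3), by omega⟩
  push_cast at h2
  have e : 2*i+3+s = (2*i+2+s)+1 := by ring
  rw [e]
  have hA := lemA d i (2*i+2+s) (by omega)
  have eexp : (2*i+2+s)+1-i = i+3+s := by omega
  rw [eexp] at hA
  have hchoose : ((((2*i+2+s)+1).choose i : ℕ) : ℝ)
      = ∑ r ∈ range (i+1), (((i+2+s)+r).choose r : ℝ) := by
    have h := lemH i (i+2+s)
    have e2 : (i+2+s)+i+1 = (2*i+2+s)+1 := by omega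
    rw [e2] at h
    rw [← h]
    push_cast
    rfl
  have key : d^(i+3+s) * ((((2*i+2+s)+1).choose i : ℕ):ℝ)
      < ∑ n ∈ Icc (i+1) (2*i+2+s), d^(n-i) * ((n.choose (i+1) : ℕ) : ℝ) := by
    calc d^(i+3+s) * ((((2*i+2+s)+1).choose i : ℕ):ℝ)
        = ∑ r ∈ range (i+1), d^(i+3+s) * (((i+2+s)+r).choose r : ℝ) := by
          rw [hchoose, Finset.mul_sum]
      _ < ∑ r ∈ range (i+1), d^(r+s+2) * (((i+2+s)+r).choose (i+1) : ℝ) := by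
          apply Finset.sum_lt_sum_of_nonempty (Finset.nonempty_range_iff.mpr (by omega))
          intro r hr
          rw [Finset.mem_range] at hr
          obtain ⟨p, hp⟩ : ∃ p, i+1 = r + p := ⟨i+1-r, by omega⟩
          have hp1 : 1 ≤ p := by omega
          have harg : (i+2+s)+r = r + p + (r+s+1) := by omega
          have hexp : i+3+s = (r+s+2) + p := by omega
          have hR := lemR d hd0 p r (r+s+1) (by omega) ?_
          · rw [harg, hp, hexp, pow_add]
            have hpow : (0:ℝ) < d^(r+s+2) := by positivity
            have h3 := mul_lt_mul_of_pos_left hR hpow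
            ring_nf at h3 ⊢
            linarith
          · intro u hu
            rw [Finset.mem_range] at hu
            have hur : (u:ℝ) + (r:ℝ) ≤ (i:ℝ) := by exact_mod_cast (by omega : u + r ≤ i)
            push_cast
            nlinarith [mul_nonneg (sub_nonneg.mpr hd)
              (show (0:ℝ) ≤ (i:ℝ)+1-(r:ℝ)-(u:ℝ) from by linarith)]
      _ = ∑ n ∈ Icc (i+2+s) (2*i+2+s), d^(n-i) * ((n.choose (i+1) : ℕ) : ℝ) := by
          rw [show Icc (i+2+s) (2*i+2+s) = Ico (i+2+s) ((2*i+2+s)+1) by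
            rw [Finset.Ico_add_one_right_eq_Icc]]
          rw [Finset.sum_Ico_eq_sum_range]
          have e3 : (2*i+2+s)+1-(i+2+s) = i+1 := by omega
          rw [e3]
          apply Finset.sum_congr rfl
          intro r hr
          have e4 : (i+2+s)+r-i = r+s+2 := by omega
          rw [e4]
      _ ≤ ∑ n ∈ Icc (i+1) (2*i+2+s), d^(n-i) * ((n.choose (i+1) : ℕ) : ℝ) := by
          apply Finset.sum_le_sum_of_subset_of_nonneg
          · exact Finset.Icc_subset_Icc_left (by omega)
          · intro n _ _
            positivity
  linarith

/-- Proposition 3.4.  Let `d ≥ 1`.  Every mode of `Q_m(x+d)` equals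
`m̄ − 1` or `m̄`, where `m̄ = ⌈(m−d)/(d+1)⌉`.  Moreover, if
`⌈(m+1−d)/(d+1)⌉ = m̄ + 1` then `Q_m(x+d)` has the unique mode `m̄`. -/
theorem stmt_9 (m : ℕ) (hm : 0 < m) (d : ℝ) (hd : 1 ≤ d) :
    (∀ t, IsMode (qCoeff m d) m t → t = mbar m d - 1 ∨ t = mbar m d) ∧
    (mbar (m + 1) d = mbar m d + 1 →
      ∀ t, IsMode (qCoeff m d) m t ↔ t = mbar m d) := by
  have hd0 : (0:ℝ) < d := by linarith
  have hd1 : (0:ℝ) < d + 1 := by linarith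
  set B := mbar m d with hBdef
  set x : ℝ := ((m : ℝ) - d) / (d + 1) with hxdef
  have hxB : (B:ℝ) ≥ x := by
    have h1 : x ≤ (⌈x⌉ : ℝ) := Int.le_ceil x
    have h2 : (⌈x⌉ : ℤ) ≤ (⌈x⌉.toNat : ℤ) := Int.self_le_toNat _
    have h2' : ((⌈x⌉ : ℤ) : ℝ) ≤ ((⌈x⌉.toNat : ℤ) : ℝ) := by exact_mod_cast h2
    have : ((⌈x⌉.toNat : ℤ) : ℝ) = (B : ℝ) := by
      rw [hBdef]; unfold mbar; push_cast; rfl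
    linarith
  have hxm1 : (-1 : ℝ) < x := by
    rw [hxdef, lt_div_iff₀ hd1]
    have : (1:ℝ) ≤ (m:ℝ) := by exact_mod_cast hm
    linarith
  have hceil0 : 0 ≤ ⌈x⌉ := by
    have : (-1 : ℤ) < ⌈x⌉ := Int.lt_ceil.mpr (by push_cast; linarith)
    omega
  have hBceil : ((B : ℕ) : ℝ) = ((⌈x⌉ : ℤ) : ℝ) := by
    rw [hBdef]; unfold mbar
    rw [← hxdef]
    exact_mod_cast congrArg (fun z : ℤ => (z : ℝ)) (Int.toNat_of_nonneg hceil0)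
  have hBlt : (B:ℝ) < x + 1 := by
    rw [hBceil]
    exact Int.ceil_lt_add_one x
  -- products
  have hxmul : x * (d+1) = (m:ℝ) - d := by
    rw [hxdef]; field_simp
  have hBge' : ((m:ℝ) - d) ≤ (B:ℝ) * (d+1) := by
    have h1 : x * (d+1) ≤ (B:ℝ) * (d+1) :=
      mul_le_mul_of_nonneg_right (ge_iff_le.mp hxB) (le_of_lt hd1)
    linarith
  have hBlt' : (B:ℝ) * (d+1) < (m:ℝ) + 1 := by
    have h1 : ((B:ℝ)) * (d+1) < (x+1)*(d+1) := mul_lt_mul_of_pos_right hBlt hd1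
    have h2 : (x+1)*(d+1) = x*(d+1) + (d+1) := by ring
    linarith
  have hBm : B < m := by
    have h2 : 2 * (B:ℝ) < (m:ℝ) + 1 := by nlinarith
    have : 2 * B < m + 1 := by exact_mod_cast h2
    omega
  -- part 1
  have part1 : ∀ t, IsMode (qCoeff m d) m t → t = B - 1 ∨ t = B := by
    rintro t ⟨htm, hinc, hdec⟩
    rcases Nat.lt_trichotomy t B with hlt | heq | hgt
    · by_cases hEq : t = B - 1
      · exact Or.inl hEq
      · exfalso
        have ht2 : t + 2 ≤ B := by omega
        have hcast : (t:ℝ) + 2 ≤ (B:ℝ) := by exact_mod_cast ht2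
        have hL1 : qCoeff m d t < qCoeff m d (t+1) := by
          apply L1' d hd m t (by omega)
          have : ((t:ℝ)+2)*(d+1) ≤ (B:ℝ)*(d+1) :=
            mul_le_mul_of_nonneg_right hcast (le_of_lt hd1)
          linarith
        have := hdec t (le_refl t) (by omega)
        linarith
    · exact Or.inr heq
    · exfalso
      obtain ⟨u, rfl⟩ : ∃ u, t = u + 1 := ⟨t - 1, by omega⟩
      have hcast : (B:ℝ) + 1 ≤ (u:ℝ) + 1 := by exact_mod_cast hgt
      have hL2 : qCoeff m d (u+1) < qCoeff m d u := by
        apply L2' d hd m u htm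
        have : ((B:ℝ)+1)*(d+1) ≤ ((u:ℝ)+1)*(d+1) :=
          mul_le_mul_of_nonneg_right hcast (le_of_lt hd1)
        nlinarith
      have := hinc u (by omega)
      linarith
  refine ⟨part1, ?_⟩
  intro hcond t
  -- key consequence of hcond
  have hcond' : ((B:ℝ)+1)*(d+1) < (m:ℝ) + 2 := by
    have hy : (B:ℝ) < (((m:ℝ)+1) - d)/(d+1) := by
      by_contra hle
      push_neg at hle
      have hceil : ⌈(((m+1:ℕ) : ℝ) - d)/(d+1)⌉ ≤ (B:ℤ) := by
        apply Int.ceil_le.mpr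
        push_cast
        exact hle
      have : mbar (m+1) d ≤ B := by
        unfold mbar
        calc (⌈(((m+1:ℕ) : ℝ) - d)/(d+1)⌉).toNat ≤ ((B:ℤ)).toNat :=
              Int.toNat_le_toNat hceil
          _ = B := Int.toNat_natCast B
      omega
    rw [lt_div_iff₀ hd1] at hy
    nlinarith
  constructor
  · intro hmode
    rcases part1 t hmode with h1 | h2
    · rcases Nat.eq_zero_or_pos B with hB0 | hBpos
      · omega
      · exfalso
        obtain ⟨htm, hinc, hdec⟩ := hmode
        have hBt : B = t + 1 := by omega
        have hBtr : (B:ℝ) = (t:ℝ) + 1 := by exact_mod_cast hBt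
        rw [hBtr] at hcond'
        have hL1 : qCoeff m d t < qCoeff m d (t+1) := by
          apply L1' d hd m t (by omega)
          calc ((t:ℝ)+2)*(d+1) = (((t:ℝ)+1)+1)*(d+1) := by ring
            _ < (m:ℝ)+2 := hcond'
        have := hdec t (le_refl t) (by omega)
        linarith
    · exact h2
  · rintro rfl
    refine ⟨le_of_lt hBm, ?_, ?_⟩
    · intro k hk
      have hcast : (k:ℝ) + 1 ≤ (B:ℝ) := by exact_mod_cast hk
      have : qCoeff m d k < qCoeff m d (k+1) := by
        apply L1' d hd m k (by omega)
        have : ((k:ℝ)+2)*(d+1) ≤ ((B:ℝ)+1)*(d+1) := by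
          apply mul_le_mul_of_nonneg_right (by linarith) (le_of_lt hd1)
        linarith
      linarith
    · intro k hBk hkm
      have hcast : (B:ℝ) ≤ (k:ℝ) := by exact_mod_cast hBk
      have : qCoeff m d (k+1) < qCoeff m d k := by
        apply L2' d hd m k (by omega)
        have : ((B:ℝ)+1)*(d+1) ≤ ((k:ℝ)+1)*(d+1) := by
          apply mul_le_mul_of_nonneg_right (by linarith) (le_of_lt hd1)
        nlinarith
      linarith
end

section
/- Let m be a positive integer, d ≥ 1 a real number, and Q_m(x) = Σ_{i=0}^m x^i. If (m+1)/(d+1) is a positive integer, then Q_m(x+d) has the unique mode m̄ = ⌈(m−d)/(d+1)⌉. -/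
open Finset

/-!
Write `d = 1 + c` with `c ≥ 0`. Expanding `Q_m(x + 1 + c) = ∑ⱼ C(m+1, j+1) (x + c)^j` shows
that the `j`-th coefficient of `Q_m(x + d)` is `a_j = (m+1) C(m,j) J_{m-j}(j)`, where
`J_n(p) = ∫₀¹ t^p (1 + c t)^n dt`. The recursion `J_{n+1}(p) = J_n(p) + c J_n(p+1)` gives
`a_j - a_{j+1} = (m+1) (C(m,j) J_n(j) - (C(m,j+1) - c C(m,j)) J_n(j+1))` with `n = m - 1 - j`.
Since `J_n(p)` is strictly decreasing in `p` and `J_n(p) / J_n(p+1) ≤ (p+2)/(p+1)`, the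
coefficients strictly increase at `j` when `(j+1)(d+1) < m` and strictly decrease when
`m + 1 ≤ (j+1)(d+1)`. If `m + 1 = k(d+1)`, every `j` falls into one of the two cases, with the
switch at `k - 1 = m̄`.
-/

/-- `momentSum c n p = ∫₀¹ t ^ p * (1 + c * t) ^ n dt`, with the integrand expanded
binomially. -/
noncomputable def momentSum (c : ℝ) (n p : ℕ) : ℝ :=
  ∑ r ∈ range (n + 1), (n.choose r : ℝ) * (c ^ r / ((p : ℝ) + r + 1))

lemma sum_range_succ_choose_mul (f : ℕ → ℝ) (n : ℕ) :
    ∑ r ∈ range (n + 2), ((n + 1).choose r : ℝ) * f r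
      = ∑ r ∈ range (n + 1), (n.choose r : ℝ) * f r
        + ∑ r ∈ range (n + 1), (n.choose r : ℝ) * f (r + 1) := by
  have hshift : ∑ r ∈ range (n + 1), (n.choose (r + 1) : ℝ) * f (r + 1)
      = ∑ r ∈ range (n + 1), (n.choose r : ℝ) * f r - f 0 := by
    rw [sum_range_succ, sum_range_succ' (fun r => (n.choose r : ℝ) * f r)]
    simp
  rw [sum_range_succ']
  simp only [Nat.choose_succ_succ', Nat.cast_add, add_mul, sum_add_distrib, hshift]
  simp only [Nat.choose_zero_right, Nat.cast_one, one_mul]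
  ring

section momentSum

variable {c : ℝ}

lemma momentSum_succ_left (n p : ℕ) :
    momentSum c (n + 1) p = momentSum c n p + c * momentSum c n (p + 1) := by
  rw [momentSum, sum_range_succ_choose_mul, momentSum, momentSum, mul_sum]
  congr 1
  refine sum_congr rfl fun r _ => ?_
  push_cast
  ring

lemma momentSum_nonneg (hc : 0 ≤ c) (n p : ℕ) : 0 ≤ momentSum c n p :=
  sum_nonneg fun r _ => by positivity

lemma momentSum_succ_lt (hc : 0 ≤ c) (n p : ℕ) : momentSum c n (p + 1) < momentSum c n p := by
  refine sum_lt_sum (fun r _ => ?_) ⟨0, by simp, ?_⟩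
  · push_cast
    gcongr
    linarith
  · simp only [Nat.choose_zero_right, Nat.cast_one, pow_zero, Nat.cast_add, Nat.cast_zero,
      add_zero, one_div, one_mul]
    gcongr
    linarith

lemma mul_momentSum_lt_mul_momentSum_succ (hc : 0 ≤ c) {A B : ℝ} (n p : ℕ) (hB : 0 ≤ B)
    (h : ((p : ℝ) + 2) * B < ((p : ℝ) + 1) * A) :
    B * momentSum c n p < A * momentSum c n (p + 1) := by
  rw [momentSum, momentSum, mul_sum, mul_sum]
  refine sum_lt_sum (fun r _ => ?_) ⟨0, by simp, ?_⟩
  · have hr : (0 : ℝ) ≤ r := r.cast_nonneg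
    have hBA : B / ((p : ℝ) + r + 1) ≤ A / (((p + 1 : ℕ) : ℝ) + r + 1) := by
      push_cast
      rw [div_le_div_iff₀ (by positivity) (by positivity)]
      nlinarith
    calc B * ((n.choose r : ℝ) * (c ^ r / ((p : ℝ) + r + 1)))
        = (n.choose r : ℝ) * c ^ r * (B / ((p : ℝ) + r + 1)) := by ring
      _ ≤ (n.choose r : ℝ) * c ^ r * (A / (((p + 1 : ℕ) : ℝ) + r + 1)) := by gcongr
      _ = A * ((n.choose r : ℝ) * (c ^ r / (((p + 1 : ℕ) : ℝ) + r + 1))) := by ring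
  · simp only [Nat.choose_zero_right, pow_zero, Nat.cast_zero, one_mul, add_zero, Nat.cast_add,
      Nat.cast_one]
    rw [mul_one_div, mul_one_div, div_lt_div_iff₀ (by positivity) (by positivity)]
    linarith

end momentSum

lemma qCoeff_add_succ (d : ℝ) (s n : ℕ) :
    qCoeff (s + n + 1) d s = qCoeff (s + n) d s + ((s + n + 1).choose s : ℝ) * d ^ (n + 1) := by
  rw [qCoeff, sum_Icc_succ_top (by omega), qCoeff, show s + n + 1 - s = n + 1 by omega, mul_comm]

lemma sum_choose_mul_choose_mul_pow (c : ℝ) (s n : ℕ) :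
    ∑ r ∈ range (n + 1), ((s + r).choose s : ℝ) * ((s + n).choose (s + r) : ℝ) * c ^ r
      = ((s + n).choose s : ℝ) * (1 + c) ^ n := by
  rw [add_comm 1 c, add_pow, mul_sum]
  refine sum_congr rfl fun r _ => ?_
  have hchoose : (s + n).choose (s + r) * (s + r).choose s = (s + n).choose s * n.choose r := by
    simpa using Nat.choose_mul (n := s + n) (show s ≤ s + r by omega)
  rw [one_pow, mul_one, mul_comm ((s + r).choose s : ℝ), ← Nat.cast_mul, hchoose]
  push_cast
  ring

lemma qCoeff_one_add_eq_sum (c : ℝ) (s n : ℕ) :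
    qCoeff (s + n) (1 + c) s
      = ∑ r ∈ range (n + 1),
          ((s + r).choose s : ℝ) * ((s + n + 1).choose (s + r + 1) : ℝ) * c ^ r := by
  induction n with
  | zero => simp [qCoeff]
  | succ n ih =>
    have hpascal := sum_choose_mul_choose_mul_pow c s (n + 1)
    rw [← add_assoc] at hpascal
    have hsplit : ∀ r,
        ((s + r).choose s : ℝ) * ((s + n + 1 + 1).choose (s + r + 1) : ℝ) * c ^ r
        = ((s + r).choose s : ℝ) * ((s + n + 1).choose (s + r) : ℝ) * c ^ r
          + ((s + r).choose s : ℝ) * ((s + n + 1).choose (s + r + 1) : ℝ) * c ^ r := by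
      intro r
      rw [Nat.choose_succ_succ' (s + n + 1) (s + r)]
      push_cast
      ring
    rw [← add_assoc, qCoeff_add_succ, ih, ← hpascal, sum_congr rfl fun r _ => hsplit r,
      sum_add_distrib, sum_range_succ (fun r =>
        ((s + r).choose s : ℝ) * ((s + n + 1).choose (s + r + 1) : ℝ) * c ^ r) (n + 1),
      Nat.choose_eq_zero_of_lt (show s + n + 1 < s + (n + 1) + 1 by omega)]
    simp only [Nat.cast_zero, mul_zero, zero_mul, add_zero]
    ring

lemma qCoeff_one_add_eq_momentSum (c : ℝ) {s n m : ℕ} (h : s + n = m) :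
    qCoeff m (1 + c) s = ((m : ℝ) + 1) * (m.choose s : ℝ) * momentSum c n s := by
  subst h
  rw [qCoeff_one_add_eq_sum, momentSum, mul_sum]
  refine sum_congr rfl fun r _ => ?_
  have hchoose : (s + r).choose s * (s + n).choose (s + r) = (s + n).choose s * n.choose r := by
    rw [mul_comm]
    simpa using Nat.choose_mul (n := s + n) (show s ≤ s + r by omega)
  have habsorb : (s + r).choose s * (s + n + 1).choose (s + r + 1) * (s + r + 1)
      = (s + n + 1) * ((s + n).choose s * n.choose r) := by
    rw [mul_assoc, ← Nat.add_one_mul_choose_eq, ← hchoose]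
    ring
  have habsorbR := congrArg (Nat.cast : ℕ → ℝ) habsorb
  push_cast at habsorbR
  push_cast
  field_simp
  linear_combination c ^ r * habsorbR

lemma qCoeff_sub_qCoeff_succ (c : ℝ) {j n m : ℕ} (h : j + n + 1 = m) :
    qCoeff m (1 + c) j - qCoeff m (1 + c) (j + 1)
      = ((m : ℝ) + 1) * ((m.choose j : ℝ) * momentSum c n j
          - ((m.choose (j + 1) : ℝ) - c * m.choose j) * momentSum c n (j + 1)) := by
  rw [qCoeff_one_add_eq_momentSum c (show j + (n + 1) = m by omega),
    qCoeff_one_add_eq_momentSum c (show j + 1 + n = m by omega), momentSum_succ_left]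
  ring

lemma cast_choose_succ_mul_eq (j n : ℕ) :
    ((j + n + 1).choose (j + 1) : ℝ) * ((j : ℝ) + 1)
      = ((j + n + 1).choose j : ℝ) * ((n : ℝ) + 1) := by
  have h := Nat.choose_succ_right_eq (j + n + 1) j
  rw [show j + n + 1 - j = n + 1 by omega] at h
  exact_mod_cast h

lemma qCoeff_succ_lt {m j : ℕ} {d : ℝ} (hd : 1 ≤ d) (hj : j < m)
    (h : (m : ℝ) + 1 ≤ ((j : ℝ) + 1) * (d + 1)) : qCoeff m d (j + 1) < qCoeff m d j := by
  obtain ⟨n, rfl⟩ := Nat.exists_eq_add_of_lt hj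
  obtain ⟨c, hc, rfl⟩ : ∃ c, 0 ≤ c ∧ d = 1 + c := ⟨d - 1, by linarith, by ring⟩
  have hB : (0 : ℝ) < (j + n + 1).choose j := Nat.cast_pos.2 (Nat.choose_pos (by omega))
  have hratio := cast_choose_succ_mul_eq j n
  push_cast at h
  have hAB :
      ((j + n + 1).choose (j + 1) : ℝ) - c * (j + n + 1).choose j ≤ (j + n + 1).choose j := by
    have hmul : ((j + n + 1).choose (j + 1) : ℝ) * ((j : ℝ) + 1)
        ≤ ((1 + c) * (j + n + 1).choose j) * ((j : ℝ) + 1) := by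
      rw [hratio]
      nlinarith
    linarith [le_of_mul_le_mul_right hmul (by positivity)]
  have hJ : (((j + n + 1).choose (j + 1) : ℝ) - c * (j + n + 1).choose j) * momentSum c n (j + 1)
      < (j + n + 1).choose j * momentSum c n j :=
    calc _ ≤ (j + n + 1).choose j * momentSum c n (j + 1) :=
          mul_le_mul_of_nonneg_right hAB (momentSum_nonneg hc n _)
      _ < _ := mul_lt_mul_of_pos_left (momentSum_succ_lt hc n j) hB
  rw [← sub_pos, qCoeff_sub_qCoeff_succ c rfl]
  exact mul_pos (by positivity) (sub_pos.2 hJ)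

lemma qCoeff_lt_succ {m j : ℕ} {d : ℝ} (hd : 1 ≤ d) (h : ((j : ℝ) + 1) * (d + 1) < m) :
    qCoeff m d j < qCoeff m d (j + 1) := by
  have hj : j < m := by
    have : (j : ℝ) < m := by nlinarith
    exact_mod_cast this
  obtain ⟨n, rfl⟩ := Nat.exists_eq_add_of_lt hj
  obtain ⟨c, hc, rfl⟩ : ∃ c, 0 ≤ c ∧ d = 1 + c := ⟨d - 1, by linarith, by ring⟩
  have hB : (0 : ℝ) < (j + n + 1).choose j := Nat.cast_pos.2 (Nat.choose_pos (by omega))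
  have hratio := cast_choose_succ_mul_eq j n
  push_cast at h
  have hA : ((j : ℝ) + 2) * (j + n + 1).choose j
      < ((j : ℝ) + 1) * (((j + n + 1).choose (j + 1) : ℝ) - c * (j + n + 1).choose j) := by
    nlinarith
  rw [← sub_neg, qCoeff_sub_qCoeff_succ c rfl]
  exact mul_neg_of_pos_of_neg (by positivity)
    (sub_neg.2 (mul_momentSum_lt_mul_momentSum_succ hc n j hB.le hA))

lemma isMode_iff_eq {b : ℕ → ℝ} {m t : ℕ} (htm : t ≤ m)
    (hinc : ∀ i < t, b i < b (i + 1)) (hdec : ∀ i, t ≤ i → i < m → b (i + 1) < b i)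
    (s : ℕ) :
    IsMode b m s ↔ s = t := by
  constructor
  · rintro ⟨hsm, hup, hdown⟩
    rcases lt_trichotomy s t with hst | rfl | hts
    · exact absurd (hdown s le_rfl (by omega)) (not_le.2 (hinc s hst))
    · rfl
    · exact absurd (hup t hts) (not_le.2 (hdec t le_rfl (by omega)))
  · rintro rfl
    exact ⟨htm, fun i hi => (hinc i hi).le, fun i hi him => (hdec i hi him).le⟩

lemma mbar_eq_of_natCast_mul_eq {m k : ℕ} {d : ℝ} (hd : d + 1 ≠ 0)
    (h : (k : ℝ) * (d + 1) = m + 1) : mbar m d = k - 1 := by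
  have hval : ((m : ℝ) - d) / (d + 1) = ((k - 1 : ℤ) : ℝ) := by
    rw [div_eq_iff hd]
    push_cast
    linarith
  rw [mbar, hval, Int.ceil_intCast]
  omega

theorem stmt_10_general (m : ℕ) (d : ℝ) (hd : 1 ≤ d)
    (hint : ∃ k : ℕ, 0 < k ∧ (k : ℝ) * (d + 1) = (m : ℝ) + 1) :
    ∀ t, IsMode (qCoeff m d) m t ↔ t = mbar m d := by
  obtain ⟨k, -, hk⟩ := hint
  rw [mbar_eq_of_natCast_mul_eq (by linarith) hk]
  refine isMode_iff_eq ?_ (fun i hi => qCoeff_lt_succ hd ?_)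
    (fun i hi him => qCoeff_succ_lt hd him ?_)
  · have : (k : ℝ) ≤ m + 1 := by nlinarith
    have : k ≤ m + 1 := by exact_mod_cast this
    omega
  · have : (i : ℝ) + 2 ≤ k := by exact_mod_cast (show i + 2 ≤ k by omega)
    nlinarith
  · have : (k : ℝ) ≤ i + 1 := by exact_mod_cast (show k ≤ i + 1 by omega)
    nlinarith

/-- Corollary 3.1.  Let `d ≥ 1`.  If `(m+1)/(d+1)` is a positive
integer, then `Q_m(x+d)` has the unique mode `m̄ = ⌈(m−d)/(d+1)⌉`. -/
theorem stmt_10 (m : ℕ) (hm : 0 < m) (d : ℝ) (hd : 1 ≤ d)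
    (hint : ∃ k : ℕ, 0 < k ∧ (k : ℝ) * (d + 1) = (m : ℝ) + 1) :
    ∀ t, IsMode (qCoeff m d) m t ↔ t = mbar m d :=
  stmt_10_general m d hd hint
end

section
/- Let m be a positive integer, d > 1 a real number, and Q_m(x) = Σ_{i=0}^m x^i. If d·m̄ is a positive integer, where m̄ = ⌈(m−d)/(d+1)⌉, then Q_m(x+d) has the unique mode m̄. -/
open Finset

namespace S11

open intervalIntegral

lemma tri (s t j : ℕ) (h : j ≤ t) :
    (s+t).choose s * t.choose j = (s+t).choose (s+j) * (s+j).choose s := by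
  have h1 : (s+t).choose s * s.factorial * t.factorial = (s+t).factorial := by
    simpa [Nat.add_sub_cancel_left] using
      Nat.choose_mul_factorial_mul_factorial (Nat.le_add_right s t)
  have h2 : t.choose j * j.factorial * (t-j).factorial = t.factorial :=
    Nat.choose_mul_factorial_mul_factorial h
  have h3 : (s+j).choose s * s.factorial * j.factorial = (s+j).factorial := by
    simpa [Nat.add_sub_cancel_left] using
      Nat.choose_mul_factorial_mul_factorial (Nat.le_add_right s j)
  have h4 : (s+t).choose (s+j) * (s+j).factorial * (t-j).factorial = (s+t).factorial := by
    simpa [Nat.add_sub_add_left] using Nat.choose_mul_factorial_mul_factorial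
      (show s+j ≤ s+t from Nat.add_le_add_left h s)
  have hpos : 0 < s.factorial * j.factorial * (t-j).factorial :=
    Nat.mul_pos (Nat.mul_pos s.factorial_pos j.factorial_pos) (t-j).factorial_pos
  apply Nat.eq_of_mul_eq_mul_right hpos
  calc (s+t).choose s * t.choose j * (s.factorial * j.factorial * (t-j).factorial)
      = ((s+t).choose s * s.factorial) * (t.choose j * j.factorial * (t-j).factorial) := by ring
    _ = (s+t).choose s * s.factorial * t.factorial := by rw [h2]
    _ = (s+t).factorial := h1
    _ = (s+t).choose (s+j) * (s+j).factorial * (t-j).factorial := h4.symm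
    _ = (s+t).choose (s+j) * ((s+j).choose s * s.factorial * j.factorial) * (t-j).factorial := by
        rw [h3]
    _ = (s+t).choose (s+j) * (s+j).choose s * (s.factorial * j.factorial * (t-j).factorial) := by
        ring

/-- (s+1) C(m+1,s+1) C(n,k) = (k+s+1) C(m+1,s+k+1) C(s+k,s)  with m = s+n, k ≤ n -/

lemma coeff_id (s n k : ℕ) (hk : k ≤ n) :
    (s+1) * ((s+n+1).choose (s+1) * n.choose k) =
    (k+s+1) * ((s+n+1).choose (s+k+1) * (s+k).choose s) := by
  have e1 : (s+n+1) * (s+n).choose s = (s+n+1).choose (s+1) * (s+1) :=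
    Nat.add_one_mul_choose_eq (s+n) s
  have e2 : (s+n+1) * (s+n).choose (s+k) = (s+n+1).choose (s+k+1) * (s+k+1) :=
    Nat.add_one_mul_choose_eq (s+n) (s+k)
  have e3 : (s+n).choose s * n.choose k = (s+n).choose (s+k) * (s+k).choose s :=
    tri s n k hk
  apply Nat.eq_of_mul_eq_mul_left (Nat.succ_pos (s+n))
  calc (s+n+1) * ((s+1) * ((s+n+1).choose (s+1) * n.choose k))
      = ((s+n+1).choose (s+1) * (s+1)) * ((s+n+1) * n.choose k) := by ring
    _ = ((s+n+1) * (s+n).choose s) * ((s+n+1) * n.choose k) := by rw [← e1]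
    _ = (s+n+1) * (s+n+1) * ((s+n).choose s * n.choose k) := by ring
    _ = (s+n+1) * (s+n+1) * ((s+n).choose (s+k) * (s+k).choose s) := by rw [e3]
    _ = ((s+n+1) * (s+n).choose (s+k)) * ((s+n+1) * (s+k).choose s) := by ring
    _ = ((s+n+1).choose (s+k+1) * (s+k+1)) * ((s+n+1) * (s+k).choose s) := by rw [e2]
    _ = (s+n+1) * ((k+s+1) * ((s+n+1).choose (s+k+1) * (s+k).choose s)) := by ring

lemma inner_sum (s n j : ℕ) (hj : j ≤ n) :
    ∑ t ∈ Icc j n, (s+t).choose s * t.choose j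
      = (s+n+1).choose (s+j+1) * (s+j).choose s := by
  have h1 : ∀ t ∈ Icc j n, (s+t).choose s * t.choose j
      = (s+t).choose (s+j) * (s+j).choose s := fun t ht => tri s t j (mem_Icc.1 ht).1
  rw [Finset.sum_congr rfl h1, ← Finset.sum_mul]
  congr 1
  have : ∑ t ∈ Icc j n, (s+t).choose (s+j) = ∑ r ∈ Icc (s+j) (s+n), r.choose (s+j) := by
    rw [show Icc (s+j) (s+n) = Finset.map (addLeftEmbedding s) (Icc j n) from
      (Finset.map_add_left_Icc j n s).symm, Finset.sum_map]
    simp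
  rw [this, Nat.sum_Icc_choose]

/-- triangle swap for range sums -/

lemma swap_tri {M : Type*} [AddCommMonoid M] (n : ℕ) (F : ℕ → ℕ → M) :
    ∑ t ∈ range (n+1), ∑ j ∈ range (t+1), F t j
      = ∑ j ∈ range (n+1), ∑ t ∈ Icc j n, F t j := by
  have h := Finset.sum_Ico_Ico_comm 0 (n+1) (fun j t => F t j)
  simp only [range_eq_Ico, ← Finset.Ico_add_one_right_eq_Icc]
  exact h.symm

/-- B1: expansion in powers of (d-1) -/

lemma e_expand (s n : ℕ) (d : ℝ) :
    ∑ t ∈ range (n+1), d^t * ((s+t).choose s : ℝ)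
      = ∑ k ∈ range (n+1), ((s+n+1).choose (s+k+1) * (s+k).choose s : ℕ) * (d-1)^k := by
  have hd : ∀ t : ℕ, d^t = ∑ j ∈ range (t+1), ((t.choose j : ℕ) : ℝ) * (d-1)^j := by
    intro t
    have := add_pow (d-1) 1 t
    simp only [one_pow, mul_one, sub_add_cancel] at this
    rw [this]
    refine Finset.sum_congr rfl fun j _ => by ring
  calc ∑ t ∈ range (n+1), d^t * ((s+t).choose s : ℝ)
      = ∑ t ∈ range (n+1), ∑ j ∈ range (t+1),
          (((s+t).choose s * t.choose j : ℕ) : ℝ) * (d-1)^j := by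
        refine Finset.sum_congr rfl fun t _ => ?_
        rw [hd t, Finset.sum_mul]
        refine Finset.sum_congr rfl fun j _ => ?_
        push_cast; ring
    _ = ∑ j ∈ range (n+1), ∑ t ∈ Icc j n,
          (((s+t).choose s * t.choose j : ℕ) : ℝ) * (d-1)^j := swap_tri n _
    _ = ∑ k ∈ range (n+1), ((s+n+1).choose (s+k+1) * (s+k).choose s : ℕ) * (d-1)^k := by
        refine Finset.sum_congr rfl fun j hj => ?_
        have hj' : j ≤ n := by have := mem_range.1 hj; omega
        rw [← Finset.sum_mul]
        congr 1
        rw [← Nat.cast_sum, inner_sum s n j hj']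

lemma int_eval (e : ℝ) (n s : ℕ) :
    ∫ x in (0:ℝ)..1, (1+e*x)^n * x^s
      = ∑ k ∈ range (n+1), (n.choose k : ℝ) * e^k / ((k:ℝ)+s+1) := by
  have hpt : ∀ x : ℝ, (1+e*x)^n * x^s
      = ∑ k ∈ range (n+1), (n.choose k : ℝ) * e^k * x^(k+s) := by
    intro x
    have := add_pow (e*x) 1 n
    simp only [one_pow, mul_one] at this
    rw [add_comm 1 (e*x), this, Finset.sum_mul]
    refine Finset.sum_congr rfl fun k _ => ?_
    rw [pow_add, mul_pow]; ring
  simp_rw [hpt]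
  rw [intervalIntegral.integral_finset_sum]
  · refine Finset.sum_congr rfl fun k _ => ?_
    rw [intervalIntegral.integral_const_mul, integral_pow]
    push_cast
    rw [div_eq_mul_inv]
    ring_nf
  · intro k _
    exact (Continuous.intervalIntegrable (by continuity) _ _)

lemma qCoeff_int (s n : ℕ) (d : ℝ) :
    ∑ t ∈ range (n+1), d^t * ((s+t).choose s : ℝ)
      = (((s+1) * (s+n+1).choose (s+1) : ℕ) : ℝ)
        * ∫ x in (0:ℝ)..1, (1+(d-1)*x)^n * x^s := by
  rw [int_eval (d-1) n s, e_expand s n d, Finset.mul_sum]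
  refine Finset.sum_congr rfl fun k hk => ?_
  have hk' : k ≤ n := by have := mem_range.1 hk; omega
  have h := coeff_id s n k hk'
  have hpos : ((k:ℝ)+s+1) ≠ 0 := by positivity
  have hR : ((s:ℝ)+1) * (((s+n+1).choose (s+1) : ℝ) * (n.choose k : ℝ))
      = ((k:ℝ)+(s:ℝ)+1) * (((s+n+1).choose (s+k+1) : ℝ) * ((s+k).choose s : ℝ)) := by
    exact_mod_cast h
  rw [mul_div_assoc', eq_div_iff hpos]
  push_cast
  linear_combination (-(d-1)^k) * hR

lemma scale_id (d x : ℝ) (hd : d ≠ 0) : d * (1/d + (1-1/d) * x) = 1 + (d-1)*x := by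
  field_simp

/-- increasing side: if d*s ≤ n then C(m+1,s) d^n < qCoeff s -/

lemma inc (s n : ℕ) (hs : 1 ≤ s) (d : ℝ) (hd : 1 < d) (hds : d * s ≤ n) :
    ((s+n+1).choose s : ℝ) * d^n < ∑ t ∈ range (n+1), d^t * ((s+t).choose s : ℝ) := by
  have hd0 : (0:ℝ) < d := lt_trans one_pos hd
  have hu0 : (0:ℝ) < 1/d := by positivity
  have hu1 : 1/d < 1 := by rw [div_lt_one hd0]; exact hd
  have hw0 : (0:ℝ) < 1 - 1/d := by linarith
  have huw : 1/d + (1 - 1/d) = 1 := by ring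
  have h1s : (1:ℝ) ≤ s := by exact_mod_cast hs
  have hsn : (s:ℝ) < n := by nlinarith
  have hsn' : s ≤ n := by exact_mod_cast Nat.cast_le.mp (le_of_lt hsn)
  have hn1 : 1 ≤ n := le_trans hs hsn'
  have hnd : (s:ℝ) ≤ n/d := by rw [le_div_iff₀ hd0]; linarith
  have hwn : (1 - 1/d) * n ≤ (n:ℝ) - s := by
    have h2 : (1 - 1/d) * n = n - n/d := by field_simp
    linarith
  -- pointwise bound on Ioc
  have hkey : ∀ x : ℝ, 0 < x → x ≤ 1 → x ^ ((n-s : ℕ)) ≤ (1/d + (1-1/d)*x)^n := by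
    intro x hx0 hx1
    have hgm : x ^ (1-1/d) ≤ 1/d + (1-1/d) * x := by
      have := Real.geom_mean_le_arith_mean2_weighted hu0.le hw0.le zero_le_one hx0.le huw
      simpa using this
    have h1 : x ^ ((1-1/d) * n) ≤ (1/d + (1-1/d) * x)^n := by
      calc x ^ ((1-1/d) * n) = (x ^ (1-1/d))^(n:ℕ) := by
            rw [← Real.rpow_natCast (x ^ (1-1/d)) n, ← Real.rpow_mul hx0.le]
        _ ≤ (1/d + (1-1/d)*x)^n := pow_le_pow_left₀ (Real.rpow_nonneg hx0.le _) hgm n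
    have h3 : x ^ ((n - s : ℕ):ℝ) ≤ x ^ ((1-1/d) * n) := by
      apply Real.rpow_le_rpow_of_exponent_ge hx0 hx1
      rw [Nat.cast_sub hsn']
      exact hwn
    rw [← Real.rpow_natCast x (n-s)]
    exact le_trans h3 h1
  have hpt : ∀ x ∈ Set.Ioc (0:ℝ) 1, d^n * x^n ≤ (1+(d-1)*x)^n * x^s := by
    intro x hx
    obtain ⟨hx0, hx1⟩ := hx
    have h4 := hkey x hx0 hx1
    have h5 : d^n * (x^(n-s) * x^s) ≤ d^n * ((1/d + (1-1/d)*x)^n * x^s) := by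
      apply mul_le_mul_of_nonneg_left _ (by positivity)
      exact mul_le_mul_of_nonneg_right h4 (by positivity)
    have h6 : x^(n-s) * x^s = x^n := by
      rw [← pow_add, Nat.sub_add_cancel hsn']
    have h7 : d^n * ((1/d + (1-1/d)*x)^n * x^s) = (1+(d-1)*x)^n * x^s := by
      rw [← mul_assoc, ← mul_pow, scale_id d x hd0.ne']
    rw [h6] at h5
    rw [← h7]
    exact h5
  -- strict at 1/2
  have hhalf : ((1:ℝ)/2) ^ (1-1/d) < 1/d + (1-1/d) * (1/2) := by
    have hlog : Real.log 2 ≠ 0 := by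
      have := Real.log_pos (by norm_num : (1:ℝ) < 2); linarith
    have hcvx := strictConvexOn_exp.2 (Set.mem_univ (0:ℝ))
      (Set.mem_univ (-Real.log 2)) (by intro h; apply hlog; linarith [h]) hu0 hw0 huw
    simp only [smul_eq_mul, mul_zero, zero_add, Real.exp_zero, mul_one] at hcvx
    have e1 : Real.exp ((1-1/d) * -Real.log 2) = (1/2:ℝ) ^ (1-1/d) := by
      rw [Real.rpow_def_of_pos (by norm_num : (0:ℝ) < 1/2)]
      congr 1
      rw [show (1:ℝ)/2 = 2⁻¹ by norm_num, Real.log_inv]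
      ring
    have e2 : Real.exp (-Real.log 2) = 1/2 := by
      rw [Real.exp_neg, Real.exp_log (by norm_num : (0:ℝ) < 2)]
      norm_num
    rw [e1, e2] at hcvx
    linarith [hcvx]
  have hstrict : d^n * (1/2:ℝ)^n < (1+(d-1)*(1/2))^n * (1/2:ℝ)^s := by
    have h1 : ((1/2:ℝ)) ^ ((n-s:ℕ)) < (1/d + (1-1/d) * (1/2))^n := by
      have ha : ((1/2:ℝ)) ^ ((n-s:ℕ):ℝ) ≤ (1/2:ℝ) ^ ((1-1/d) * n) := by
        apply Real.rpow_le_rpow_of_exponent_ge (by norm_num) (by norm_num)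
        rw [Nat.cast_sub hsn']; exact hwn
      have hb : ((1/2:ℝ)) ^ ((1-1/d)*n) = ((1/2:ℝ)^(1-1/d))^(n:ℕ) := by
        rw [← Real.rpow_natCast ((1/2:ℝ) ^ (1-1/d)) n, ← Real.rpow_mul (by norm_num)]
      have hc : ((1/2:ℝ)^(1-1/d))^(n:ℕ) < (1/d + (1-1/d) * (1/2))^n :=
        pow_lt_pow_left₀ hhalf (Real.rpow_nonneg (by norm_num) _) (by omega)
      rw [← Real.rpow_natCast ((1:ℝ)/2) (n-s)]
      calc ((1/2:ℝ)) ^ ((n-s:ℕ):ℝ) ≤ (1/2:ℝ) ^ ((1-1/d)*n) := ha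
        _ = ((1/2:ℝ)^(1-1/d))^(n:ℕ) := hb
        _ < (1/d + (1-1/d) * (1/2))^n := hc
    have h8 : d^n * ((1/2:ℝ)^(n-s) * (1/2:ℝ)^s) < d^n * ((1/d+(1-1/d)*(1/2:ℝ))^n * (1/2:ℝ)^s) := by
      apply mul_lt_mul_of_pos_left _ (by positivity)
      apply mul_lt_mul_of_pos_right h1 (by positivity)
    have h9 : (1/2:ℝ)^(n-s) * (1/2:ℝ)^s = (1/2:ℝ)^n := by
      rw [← pow_add, Nat.sub_add_cancel hsn']
    have h7 : d^n * ((1/d + (1-1/d)*(1/2:ℝ))^n * (1/2:ℝ)^s) = (1+(d-1)*(1/2))^n * (1/2:ℝ)^s := by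
      rw [← mul_assoc, ← mul_pow, scale_id d (1/2) hd0.ne']
    rw [h9] at h8
    rw [← h7]
    exact h8
  -- integral comparison
  have hint : (∫ x in (0:ℝ)..1, d^n * x^n) < ∫ x in (0:ℝ)..1, (1+(d-1)*x)^n * x^s := by
    apply intervalIntegral.integral_lt_integral_of_continuousOn_of_le_of_exists_lt
      one_pos (Continuous.continuousOn (by continuity)) (Continuous.continuousOn (by continuity))
      hpt
    exact ⟨1/2, by norm_num, hstrict⟩
  have hval : (∫ x in (0:ℝ)..1, d^n * x^n) = d^n / ((n:ℝ)+1) := by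
    rw [intervalIntegral.integral_const_mul, integral_pow]
    push_cast; ring_nf
  rw [hval] at hint
  -- combine with representation
  rw [qCoeff_int s n d]
  have hcc : (((s+1) * (s+n+1).choose (s+1) : ℕ) : ℝ) = ((n:ℝ)+1) * ((s+n+1).choose s : ℝ) := by
    have h := Nat.choose_succ_right_eq (s+n+1) s
    have h2 : s+n+1-s = n+1 := by omega
    rw [h2] at h
    push_cast [show (s+1) * (s+n+1).choose (s+1) = (s+n+1).choose (s+1) * (s+1) by ring, h]
    ring
  rw [hcc]
  have hpos : (0:ℝ) < ((n:ℝ)+1) * ((s+n+1).choose s : ℝ) := by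
    have : 0 < (s+n+1).choose s := Nat.choose_pos (by omega)
    have : (0:ℝ) < ((s+n+1).choose s : ℝ) := by exact_mod_cast this
    positivity
  calc ((s+n+1).choose s : ℝ) * d^n
      = (((n:ℝ)+1) * ((s+n+1).choose s : ℝ)) * (d^n / ((n:ℝ)+1)) := by
        field_simp
    _ < (((n:ℝ)+1) * ((s+n+1).choose s : ℝ)) * ∫ x in (0:ℝ)..1, (1+(d-1)*x)^n * x^s :=
        (mul_lt_mul_iff_right₀ hpos).mpr hint

lemma nat_bound (s n : ℕ) : ∀ k, k ≤ n →
    ((s+(n-k)).choose s) * (s+n)^k ≤ ((s+n).choose s) * n^k := by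
  intro k
  induction k with
  | zero => intro _; simp
  | succ k ih =>
    intro hk1
    have hk : k ≤ n := by omega
    have IH := ih hk
    set t := n - (k+1) with ht
    have htn : n - k = t + 1 := by omega
    have htn' : t + 1 ≤ n := by omega
    rw [htn] at IH
    have h1 : (s+t).choose s * (s+t+1) = (s+t+1).choose s * (t+1) := by
      have := Nat.choose_mul_succ_eq (s+t) s
      simpa [Nat.add_sub_cancel_left, show s+t+1-s = t+1 by omega] using this
    have key : ((s+t).choose s * (s+n)^(k+1)) * (s+t+1) ≤ ((s+n).choose s * n^(k+1)) * (s+t+1) := by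
      calc ((s+t).choose s * (s+n)^(k+1)) * (s+t+1)
          = ((s+t).choose s * (s+t+1)) * (s+n)^(k+1) := by ring
        _ = ((s+t+1).choose s * (t+1)) * (s+n)^(k+1) := by rw [h1]
        _ = ((s+t+1).choose s * (s+n)^k) * ((t+1) * (s+n)) := by ring
        _ ≤ ((s+n).choose s * n^k) * ((t+1) * (s+n)) :=
            Nat.mul_le_mul_right _ IH
        _ ≤ ((s+n).choose s * n^k) * (n * (s+t+1)) := by
            apply Nat.mul_le_mul_left
            nlinarith [htn']
        _ = ((s+n).choose s * n^(k+1)) * (s+t+1) := by ring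
    exact Nat.le_of_mul_le_mul_right key (by omega)

/-- decreasing side: if d*s ≥ n+1 then qCoeff s < C(m+1,s) d^n -/

lemma dec (s n : ℕ) (hs : 1 ≤ s) (d : ℝ) (hd : 1 < d)
    (hds : (n:ℝ)+1 ≤ d * s) :
    ∑ t ∈ range (n+1), d^t * ((s+t).choose s : ℝ) < ((s+n+1).choose s : ℝ) * d^n := by
  rcases Nat.eq_zero_or_pos n with rfl | hn
  · simp only [Nat.zero_add, Finset.range_one, Finset.sum_singleton, pow_zero, one_mul,
      Nat.add_zero, Nat.choose_self, Nat.cast_one, mul_one]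
    have h1 : (s+1).choose s = s+1 := Nat.choose_succ_self_right s
    rw [h1]
    have : (1:ℝ) < ((s+1:ℕ):ℝ) := by exact_mod_cast (by omega : 1 < s+1)
    simpa using this
  have hd0 : (0:ℝ) < d := lt_trans one_pos hd
  have hm0 : (0:ℝ) < ((s+n:ℕ):ℝ) := by exact_mod_cast (by omega : 0 < s+n)
  have hn0 : (0:ℝ) < (n:ℝ) := by exact_mod_cast hn
  have hs0 : (0:ℝ) < (s:ℝ) := by exact_mod_cast hs
  set ρ : ℝ := (n:ℝ) / (((s+n:ℕ):ℝ) * d) with hρ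
  have hρ0 : 0 < ρ := by rw [hρ]; positivity
  have hρ1 : ρ < 1 := by
    rw [hρ, div_lt_one (by positivity)]
    push_cast
    nlinarith
  -- termwise bound
  have hterm : ∀ t ∈ range (n+1), d^t * ((s+t).choose s : ℝ)
      ≤ ((s+n).choose s : ℝ) * d^n * ρ^(n-t) := by
    intro t ht
    have htn : t ≤ n := by have := mem_range.1 ht; omega
    have hb := nat_bound s n (n-t) (by omega)
    rw [show n - (n-t) = t by omega] at hb
    have hbR : ((s+t).choose s : ℝ) * ((s+n:ℕ):ℝ)^(n-t) ≤ ((s+n).choose s : ℝ) * (n:ℝ)^(n-t) := by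
      exact_mod_cast hb
    have hdn : d^t * d^(n-t) = d^n := by rw [← pow_add]; congr 1; omega
    have hB : (0:ℝ) < ((s+n:ℕ):ℝ)^(n-t) * d^(n-t) := by positivity
    have e : ρ^(n-t) = (n:ℝ)^(n-t) / (((s+n:ℕ):ℝ)^(n-t) * d^(n-t)) := by
      rw [hρ, div_pow, mul_pow]
    rw [e, mul_div_assoc', le_div_iff₀ hB]
    calc (d^t * ((s+t).choose s : ℝ)) * (((s+n:ℕ):ℝ)^(n-t) * d^(n-t))
        = (((s+t).choose s : ℝ) * ((s+n:ℕ):ℝ)^(n-t)) * (d^t * d^(n-t)) := by ring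
      _ = (((s+t).choose s : ℝ) * ((s+n:ℕ):ℝ)^(n-t)) * d^n := by rw [hdn]
      _ ≤ (((s+n).choose s : ℝ) * (n:ℝ)^(n-t)) * d^n :=
          mul_le_mul_of_nonneg_right hbR (by positivity)
      _ = ((s+n).choose s : ℝ) * d^n * (n:ℝ)^(n-t) := by ring
  -- sum up
  have hsum : ∑ t ∈ range (n+1), d^t * ((s+t).choose s : ℝ)
      ≤ ((s+n).choose s : ℝ) * d^n * ∑ k ∈ range (n+1), ρ^k := by
    calc ∑ t ∈ range (n+1), d^t * ((s+t).choose s : ℝ)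
        ≤ ∑ t ∈ range (n+1), ((s+n).choose s : ℝ) * d^n * ρ^(n-t) :=
          Finset.sum_le_sum hterm
      _ = ((s+n).choose s : ℝ) * d^n * ∑ t ∈ range (n+1), ρ^(n-t) := by
          rw [Finset.mul_sum]
      _ = ((s+n).choose s : ℝ) * d^n * ∑ k ∈ range (n+1), ρ^k := by
          congr 1
          exact Finset.sum_range_reflect (fun k => ρ^k) (n+1)
  have hgeom : ∑ k ∈ range (n+1), ρ^k ≤ 1 / (1-ρ) := by
    have h1 : (ρ - 1) * ∑ k ∈ range (n+1), ρ^k = ρ^(n+1) - 1 := by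
      rw [← geom_sum_mul]; ring
    rw [le_div_iff₀ (by linarith)]
    have : (0:ℝ) ≤ ρ^(n+1) := by positivity
    nlinarith
  -- final strict comparison
  have hfin : ((s+n).choose s : ℝ) * (1/(1-ρ)) < ((s+n+1).choose s : ℝ) := by
    have hid : ((s+n).choose s : ℝ) * (((s+n:ℕ):ℝ)+1) = ((s+n+1).choose s : ℝ) * ((n:ℝ)+1) := by
      have := Nat.choose_mul_succ_eq (s+n) s
      have h2 : s+n+1-s = n+1 := by omega
      rw [h2] at this
      exact_mod_cast this
    have hCpos : (0:ℝ) < ((s+n+1).choose s : ℝ) := by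
      exact_mod_cast Nat.choose_pos (by omega : s ≤ s+n+1)
    have hC'pos : (0:ℝ) < ((s+n).choose s : ℝ) := by
      exact_mod_cast Nat.choose_pos (by omega : s ≤ s+n)
    -- need: ρ < s/(m+1), i.e. n(m+1) < s d m
    have hρs : ρ * (((s+n:ℕ):ℝ)+1) < (s:ℝ) := by
      rw [hρ, div_mul_eq_mul_div, div_lt_iff₀ (by positivity)]
      push_cast
      nlinarith
    rw [mul_one_div, div_lt_iff₀ (by linarith)]
    -- C(m,s) < C(m+1,s)(1-ρ);  use hid : C(m,s)(m+1) = C(m+1,s)(n+1)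
    have hmain : ((s+n).choose s : ℝ) * (((s+n:ℕ):ℝ)+1) < ((s+n+1).choose s : ℝ) * (1-ρ) * (((s+n:ℕ):ℝ)+1) := by
      rw [hid]
      have expand : ((s+n+1).choose s : ℝ) * (1-ρ) * (((s+n:ℕ):ℝ)+1)
          = ((s+n+1).choose s : ℝ) * ((((s+n:ℕ):ℝ)+1) - ρ*(((s+n:ℕ):ℝ)+1)) := by ring
      rw [expand]
      apply mul_lt_mul_of_pos_left _ hCpos
      push_cast
      push_cast at hρs
      nlinarith
    exact lt_of_mul_lt_mul_right hmain (by positivity)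
  calc ∑ t ∈ range (n+1), d^t * ((s+t).choose s : ℝ)
      ≤ ((s+n).choose s : ℝ) * d^n * ∑ k ∈ range (n+1), ρ^k := hsum
    _ ≤ ((s+n).choose s : ℝ) * d^n * (1/(1-ρ)) := by
        apply mul_le_mul_of_nonneg_left hgeom
        positivity
    _ = (((s+n).choose s : ℝ) * (1/(1-ρ))) * d^n := by ring
    _ < ((s+n+1).choose s : ℝ) * d^n := by
        apply mul_lt_mul_of_pos_right hfin (by positivity)

lemma qCoeff_eq (m s : ℕ) (h : s ≤ m) (d : ℝ) :
    qCoeff m d s = ∑ t ∈ range (m-s+1), d^t * ((s+t).choose s : ℝ) := by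
  unfold qCoeff
  rw [← Finset.Ico_add_one_right_eq_Icc, Finset.sum_Ico_eq_sum_range]
  rw [show m+1-s = m-s+1 by omega]
  refine Finset.sum_congr rfl fun t _ => ?_
  rw [show s+t-s = t by omega]

lemma rec_id (j : ℕ) (d : ℝ) : ∀ n : ℕ,
    (∑ t ∈ range (n+2), d^t * ((j+t).choose j : ℝ))
      + (d-1) * (∑ t ∈ range (n+1), d^t * ((j+1+t).choose (j+1) : ℝ))
    = ((j+n+2).choose (j+1) : ℝ) * d^(n+1) := by
  intro n
  induction n with
  | zero =>
    simp [Finset.sum_range_succ, Nat.choose_succ_self_right]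
    push_cast
    ring
  | succ n IH =>
    rw [show n+1+2 = (n+2)+1 by omega,
        Finset.sum_range_succ (fun t => d^t * (((j+t).choose j : ℕ) : ℝ)) (n+2),
        Finset.sum_range_succ (fun t => d^t * (((j+1+t).choose (j+1) : ℕ) : ℝ)) (n+1)]
    have hp : (((j+n+3).choose (j+1)) : ℝ)
        = ((j+n+2).choose j : ℝ) + ((j+n+2).choose (j+1) : ℝ) := by
      exact_mod_cast Nat.choose_succ_succ' (j+n+2) j
    have e1 : j+(n+2) = j+n+2 := by omega
    have e2 : j+1+(n+1) = j+n+2 := by omega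
    have e3 : j+(n+1)+2 = j+n+3 := by omega
    rw [e1, e2, e3]
    linear_combination IH - d^(n+2) * hp

lemma recur (m j : ℕ) (h : j < m) (d : ℝ) :
    qCoeff m d j + (d-1) * qCoeff m d (j+1) = (((m+1).choose (j+1)) : ℝ) * d^(m-j) := by
  obtain ⟨n, rfl⟩ : ∃ n, m = j+n+1 := ⟨m-j-1, by omega⟩
  rw [qCoeff_eq _ j (by omega), qCoeff_eq _ (j+1) (by omega)]
  rw [show j+n+1-j+1 = n+2 by omega, show j+n+1-(j+1)+1 = n+1 by omega,
      show j+n+1-j = n+1 by omega, show j+n+1+1 = j+n+2 by omega]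
  exact rec_id j d n

lemma step_lt (m j : ℕ) (d : ℝ) (hd : 1 < d) (hj : j < m)
    (hcond : d*((j:ℝ)+1) ≤ (m:ℝ)-((j:ℝ)+1)) : qCoeff m d j < qCoeff m d (j+1) := by
  have hd0 : (0:ℝ) < d := lt_trans one_pos hd
  obtain ⟨n, rfl⟩ : ∃ n, m = j+n+1 := ⟨m-j-1, by omega⟩
  have hds : d * ((j+1:ℕ):ℝ) ≤ (n:ℝ) := by push_cast at hcond ⊢; linarith
  have hQ := inc (j+1) n (by omega) d hd hds
  have hQ' : ((j+n+2).choose (j+1) : ℝ) * d^n < qCoeff (j+n+1) d (j+1) := by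
    rw [qCoeff_eq _ (j+1) (by omega), show j+n+1-(j+1)+1 = n+1 by omega]
    rw [show j+1+n+1 = j+n+2 from by omega] at hQ
    exact hQ
  have hR := recur (j+n+1) j (by omega) d
  rw [show j+n+1-j = n+1 by omega, show j+n+1+1 = j+n+2 by omega] at hR
  have h2 : ((j+n+2).choose (j+1) : ℝ) * d^(n+1) < d * qCoeff (j+n+1) d (j+1) := by
    rw [pow_succ]
    nlinarith
  nlinarith [hR, h2, hd]

lemma step_gt (m j : ℕ) (d : ℝ) (hd : 1 < d) (hj : j < m)
    (hcond : (m:ℝ)-(j:ℝ) ≤ d*((j:ℝ)+1)) : qCoeff m d (j+1) < qCoeff m d j := by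
  have hd0 : (0:ℝ) < d := lt_trans one_pos hd
  obtain ⟨n, rfl⟩ : ∃ n, m = j+n+1 := ⟨m-j-1, by omega⟩
  have hds : (n:ℝ)+1 ≤ d * ((j+1:ℕ):ℝ) := by push_cast at hcond ⊢; linarith
  have hQ := dec (j+1) n (by omega) d hd hds
  have hQ' : qCoeff (j+n+1) d (j+1) < ((j+n+2).choose (j+1) : ℝ) * d^n := by
    rw [qCoeff_eq _ (j+1) (by omega), show j+n+1-(j+1)+1 = n+1 by omega]
    rw [show j+1+n+1 = j+n+2 from by omega] at hQ
    exact hQ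
  have hR := recur (j+n+1) j (by omega) d
  rw [show j+n+1-j = n+1 by omega, show j+n+1+1 = j+n+2 by omega] at hR
  have h2 : d * qCoeff (j+n+1) d (j+1) < ((j+n+2).choose (j+1) : ℝ) * d^(n+1) := by
    rw [pow_succ]
    nlinarith
  nlinarith [hR, h2, hd]

lemma hd1 {d : ℝ} (hd : 1 < d) : (0:ℝ) < d + 1 := by linarith

lemma mbar_le_m (m : ℕ) (d : ℝ) (hd : 1 < d) : mbar m d ≤ m := by
  unfold mbar
  have h1 : ((m:ℝ) - d) / (d+1) ≤ (m:ℝ) := by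
    rw [div_le_iff₀ (hd1 hd)]
    have : (0:ℝ) ≤ m := Nat.cast_nonneg m
    nlinarith
  have h2 : ⌈((m:ℝ) - d) / (d+1)⌉ ≤ (m:ℤ) := by
    apply Int.ceil_le.mpr
    exact_mod_cast h1
  omega

lemma ge_mbar (m j : ℕ) (d : ℝ) (hd : 1 < d) (hj : mbar m d ≤ j) :
    (m:ℝ) - d ≤ (d+1) * j := by
  unfold mbar at hj
  rcases le_or_gt (⌈((m:ℝ) - d) / (d+1)⌉) 0 with h | h
  · have hx : ((m:ℝ) - d) / (d+1) ≤ 0 := by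
      have := Int.ceil_le.mp (le_trans h (by norm_num : (0:ℤ) ≤ 0))
      simpa using this
    have : (m:ℝ) - d ≤ 0 := by
      by_contra hc
      push_neg at hc
      have : 0 < ((m:ℝ) - d) / (d+1) := div_pos hc (hd1 hd)
      linarith
    have : (0:ℝ) ≤ (d+1) * j := by positivity
    linarith
  · have hmb : (⌈((m:ℝ) - d) / (d+1)⌉).toNat = ⌈((m:ℝ) - d) / (d+1)⌉ := Int.toNat_of_nonneg h.le
    have hji : (⌈((m:ℝ) - d) / (d+1)⌉ : ℤ) ≤ (j:ℤ) := by omega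
    have : ((m:ℝ) - d) / (d+1) ≤ (j:ℝ) := by
      have := Int.ceil_le.mp hji
      exact_mod_cast this
    rw [div_le_iff₀ (hd1 hd)] at this
    linarith [this]

lemma lt_mbar (m j : ℕ) (d : ℝ) (hd : 1 < d) (hj : j < mbar m d) :
    (d+1) * j < (m:ℝ) - d := by
  unfold mbar at hj
  have h0 : 0 < ⌈((m:ℝ) - d) / (d+1)⌉ := by omega
  have hji : (j:ℤ) < ⌈((m:ℝ) - d) / (d+1)⌉ := by omega
  have : (j:ℝ) < ((m:ℝ) - d) / (d+1) := by
    have := Int.lt_ceil.mp hji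
    exact_mod_cast this
  rw [lt_div_iff₀ (hd1 hd)] at this
  linarith [this]

end S11

/-- Proposition 3.5.  Let `d > 1`.  If `d·m̄` is a positive integer,
where `m̄ = ⌈(m−d)/(d+1)⌉`, then `Q_m(x+d)` has the unique mode `m̄`. -/
theorem stmt_11 (m : ℕ) (hm : 0 < m) (d : ℝ) (hd : 1 < d)
    (hint : ∃ k : ℕ, 0 < k ∧ d * (mbar m d : ℝ) = (k : ℝ)) :
    ∀ t, IsMode (qCoeff m d) m t ↔ t = mbar m d := by
  set M := mbar m d with hM
  have hMm : M ≤ m := S11.mbar_le_m m d hd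
  have hinc : ∀ j, j < M → qCoeff m d j < qCoeff m d (j+1) := by
    intro j hj
    have hjm : j < m := lt_of_lt_of_le hj hMm
    apply S11.step_lt m j d hd hjm
    rcases Nat.lt_or_ge (j+1) M with h | h
    · have := S11.lt_mbar m (j+1) d hd h
      push_cast at this
      nlinarith
    · have hjM : j + 1 = M := by omega
      obtain ⟨k, hk0, hkd⟩ := hint
      have hlt := S11.lt_mbar m j d hd hj
      have hdM : d * ((M:ℕ):ℝ) < (m:ℝ) - M + 1 := by
        rw [← hjM]
        push_cast
        nlinarith
      rw [hkd] at hdM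
      have hkm : (k:ℝ) ≤ (m:ℝ) - M := by
        have h1 : (k:ℤ) < (m:ℤ) - (M:ℤ) + 1 := by exact_mod_cast hdM
        have h2 : (k:ℤ) ≤ (m:ℤ) - (M:ℤ) := by omega
        exact_mod_cast h2
      rw [← hjM] at hkd hkm
      push_cast at hkd hkm ⊢
      rw [hkd]
      linarith
  have hdec : ∀ j, M ≤ j → j < m → qCoeff m d (j+1) < qCoeff m d j := by
    intro j h1 h2
    apply S11.step_gt m j d hd h2
    have := S11.ge_mbar m j d hd h1
    nlinarith
  intro t
  constructor
  · rintro ⟨htm, hup, hdown⟩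
    by_contra hne
    rcases Nat.lt_or_ge t M with h | h
    · have h1 := hdown t (le_refl t) (lt_of_lt_of_le h hMm)
      have h2 := hinc t h
      linarith
    · have hMt : M < t := by omega
      have ht1 : t - 1 < t := by omega
      have h1 := hup (t-1) ht1
      have h2 := hdec (t-1) (by omega) (by omega)
      rw [show t-1+1 = t by omega] at h1 h2
      linarith
  · rintro rfl
    exact ⟨hMm, fun i hi => (hinc i hi).le, fun i h1 h2 => (hdec i h1 h2).le⟩
end

section
/- Let m be a positive integer, let d be an integer with d > 1, and let Q_m(x) = Σ_{i=0}^m x^i. Then Q_m(x+d) has the unique mode m̄ = ⌈(m−d)/(d+1)⌉. -/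
open Finset

/-- nat version of `qCoeff`. -/
def ddN (d m j : ℕ) : ℕ := ∑ i ∈ Finset.Icc j m, d ^ (i - j) * i.choose j

lemma qCoeff_eq_ddN (m d j : ℕ) : qCoeff m (d : ℝ) j = (ddN d m j : ℝ) := by
  unfold qCoeff ddN
  push_cast
  rfl

lemma ddN_self (d n : ℕ) : ddN d n n = 1 := by
  simp [ddN]

lemma ddN_eq_zero (d m j : ℕ) (h : m < j) : ddN d m j = 0 := by
  rw [ddN, Finset.Icc_eq_empty (by omega), Finset.sum_empty]

lemma ddN_succ_top (d m j : ℕ) :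
    ddN d (m+1) j = ddN d m j + d ^ (m+1-j) * (m+1).choose j := by
  rcases le_or_gt j (m+1) with h | h
  · rw [ddN, ddN, Finset.sum_Icc_succ_top h]
  · rw [Nat.choose_eq_zero_of_lt h, mul_zero, add_zero, ddN, ddN,
      Finset.Icc_eq_empty (by omega), Finset.Icc_eq_empty (by omega)]

lemma ddN_rec (d m j : ℕ) : ddN d (m+1) (j+1) = ddN d m j + d * ddN d m (j+1) := by
  induction m with
  | zero =>
    rcases Nat.eq_zero_or_pos j with rfl | hj
    · show ddN d 1 1 = ddN d 0 0 + d * ddN d 0 1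
      rw [ddN_self, ddN_self, ddN_eq_zero d 0 1 (by omega)]
      simp
    · rw [ddN_eq_zero d 1 (j+1) (by omega), ddN_eq_zero d 0 j (by omega),
        ddN_eq_zero d 0 (j+1) (by omega)]
      simp
  | succ n ih =>
    rw [ddN_succ_top d n (j+1), ddN_succ_top d (n+1) (j+1), ih, ddN_succ_top d n j,
      Nat.choose_succ_succ (n+1) j]
    rcases le_or_gt j n with h | h
    · have e1 : n + 1 + 1 - (j + 1) = (n - j) + 1 := by omega
      have e2 : n + 1 - j = (n - j) + 1 := by omega
      have e3 : n + 1 - (j + 1) = n - j := by omega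
      rw [e1, e2, e3]
      ring
    · rw [Nat.choose_eq_zero_of_lt (show n+1 < j+1 by omega),
        ddN_eq_zero d n (j+1) (by omega), show n+1+1-(j+1) = n+1-j by omega]
      ring

section Part2
variable {d : ℕ}

/-- Strict decrease below the threshold. -/
lemma ddN_neg (hd : 2 ≤ d) (j : ℕ) :
    ∀ M, j ≤ M → M + 2 ≤ (j+1)*(d+1) → ddN d M (j+1) < (M+1).choose j * d ^ (M - j) := by
  intro M hM
  induction M, hM using Nat.le_induction with
  | base =>
    intro _
    rw [ddN_eq_zero d j (j+1) (by omega), Nat.choose_succ_self_right, Nat.sub_self, pow_zero,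
      mul_one]
    omega
  | succ M hM ih =>
    intro h2
    have hlt : ddN d M (j+1) < (M+1).choose j * d ^ (M - j) := ih (by omega)
    have hkey : (M+2).choose (j+1) ≤ d * (M+2).choose j := by
      have h := Nat.choose_succ_right_eq (M+2) j
      apply Nat.le_of_mul_le_mul_right _ (show 0 < j+1 by omega)
      rw [h]
      have hle : M + 2 - j ≤ d * (j+1) := by
        have : (j+1)*(d+1) = d*(j+1) + (j+1) := by ring
        omega
      calc (M+2).choose j * (M + 2 - j) ≤ (M+2).choose j * (d * (j+1)) :=
            Nat.mul_le_mul_left _ hle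
        _ = d * (M+2).choose j * (j+1) := by ring
    calc ddN d (M+1) (j+1) = ddN d M (j+1) + d ^ (M+1-(j+1)) * (M+1).choose (j+1) :=
          ddN_succ_top d M (j+1)
      _ = ddN d M (j+1) + d ^ (M-j) * (M+1).choose (j+1) := by
          rw [show M+1-(j+1) = M - j by omega]
      _ < (M+1).choose j * d ^ (M-j) + d ^ (M-j) * (M+1).choose (j+1) := by
          exact Nat.add_lt_add_right hlt _
      _ = d ^ (M-j) * ((M+1).choose j + (M+1).choose (j+1)) := by ring
      _ = d ^ (M-j) * (M+2).choose (j+1) := by rw [← Nat.choose_succ_succ (M+1) j]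
      _ ≤ d ^ (M-j) * (d * (M+2).choose j) := Nat.mul_le_mul_left _ hkey
      _ = (M+2).choose j * d ^ (M-j+1) := by ring
      _ = (M+2).choose j * d ^ (M+1-j) := by rw [show M+1-j = M-j+1 by omega]

/-- Key summation identity. -/
lemma ddN_I3 (hd : 1 ≤ d) (q : ℕ) :
    ∀ k, (d-1) * ddN d (q+k+1) (q+1) + ddN d (q+k) q
      = d^(k+1) * (q+k+1).choose (q+1) := by
  intro k
  induction k with
  | zero =>
    rw [show q+0+1 = q+1 by omega, show q+0 = q by omega, ddN_self, ddN_self,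
      Nat.choose_self]
    simp
    omega
  | succ k ih =>
    have e1 : q+(k+1)+1 = (q+k+1)+1 := by omega
    have e2 : q+(k+1) = (q+k)+1 := by omega
    rw [e1, e2, ddN_succ_top d (q+k+1) (q+1), ddN_succ_top d (q+k) q,
      show q+k+1+1-(q+1) = k+1 by omega, show q+k+1-q = k+1 by omega]
    have hz : ((d-1) * (ddN d (q+k+1) (q+1) + d ^ (k+1) * (q+k+1+1).choose (q+1))
        + (ddN d (q+k) q + d ^ (k+1) * (q+k+1).choose q) : ℤ)
        = (d:ℤ)^(k+1+1) * ((q+k+1+1).choose (q+1)) := by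
      have ihz : ((d:ℤ)-1) * ddN d (q+k+1) (q+1) + ddN d (q+k) q
          = (d:ℤ)^(k+1) * (q+k+1).choose (q+1) := by
        have := ih
        zify [hd] at this
        exact this
      have hp : ((q+k+1+1).choose (q+1) : ℤ)
          = ((q+k+1).choose q : ℤ) + ((q+k+1).choose (q+1) : ℤ) := by
        exact_mod_cast congrArg (Nat.cast (R := ℤ)) (Nat.choose_succ_succ (q+k+1) q)
      push_cast [hd]
      linear_combination ihz - ((d:ℤ)^(k+1)) * hp
    zify [hd]
    push_cast [hd] at hz ⊢
    linarith [hz]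

end Part2

section Part3
variable {d : ℕ}

lemma ddN_split (d M j : ℕ) :
    ∀ k, ddN d (M+k) j = ddN d M j + ∑ s ∈ range k, d ^ (M+1+s-j) * (M+1+s).choose j := by
  intro k
  induction k with
  | zero => simp
  | succ k ih =>
    rw [show M+(k+1) = (M+k)+1 by omega, ddN_succ_top, ih, Finset.sum_range_succ,
      show M+k+1 = M+1+k by omega]
    ring

/-- one-step ratio bound:  `b * C(N+s, q) ≤ a * C(N+s+1, q)` for `s ≤ d-1`. -/
lemma one_step (q s : ℕ) (hs : s + 1 ≤ d) :
    (q*d+q+d) * (q*(d+1)+s).choose q ≤ (q*d+d) * (q*(d+1)+s+1).choose q := by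
  set n := q*(d+1)+s with hn
  have key : (n+1) * n.choose q = (n+1).choose q * (q*d+s+1) := by
    rw [Nat.add_one_mul_choose_eq n q, Nat.choose_succ_right_eq (n+1) q,
      show n+1-q = q*d+s+1 by simp [hn]; ring_nf; omega]
  have harith : (q*d+q+d) * (q*d+s+1) ≤ (q*d+d) * (n+1) := by
    have hb : (q*d+d) * (n+1) = (q*d+q+d) * (q*d+s+1) + q*(d-(s+1)) := by
      zify [hs]
      simp only [hn]
      push_cast
      ring
    omega
  apply Nat.le_of_mul_le_mul_right _ (show 0 < n+1 by omega)
  calc (q*d+q+d) * (n).choose q * (n+1) = (q*d+q+d) * ((n+1) * n.choose q) := by ring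
    _ = (q*d+q+d) * ((n+1).choose q * (q*d+s+1)) := by rw [key]
    _ = ((q*d+q+d) * (q*d+s+1)) * (n+1).choose q := by ring
    _ ≤ ((q*d+d) * (n+1)) * (n+1).choose q := Nat.mul_le_mul_right _ harith
    _ = (q*d+d) * (n+1).choose q * (n+1) := by ring

/-- geometric ratio bound downward from the top. -/
lemma geo_bound (q : ℕ) :
    ∀ t ≤ d, (q*(d+1)+d-t).choose q * (q*d+q+d)^t
      ≤ (q*(d+1)+d).choose q * (q*d+d)^t := by
  intro t
  induction t with
  | zero => simp
  | succ t ih =>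
    intro ht
    have iht := ih (by omega)
    have hstep := one_step (d := d) q (d - (t+1)) (by omega)
    have e1 : q*(d+1)+(d-(t+1)) = q*(d+1)+d-(t+1) := by omega
    rw [e1] at hstep
    rw [show q*(d+1)+d-(t+1)+1 = q*(d+1)+d-t by omega] at hstep
    calc (q*(d+1)+d-(t+1)).choose q * (q*d+q+d)^(t+1)
        = ((q*d+q+d) * (q*(d+1)+d-(t+1)).choose q) * (q*d+q+d)^t := by ring
      _ ≤ ((q*d+d) * (q*(d+1)+d-t).choose q) * (q*d+q+d)^t :=
          Nat.mul_le_mul_right _ hstep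
      _ = (q*d+d) * ((q*(d+1)+d-t).choose q * (q*d+q+d)^t) := by ring
      _ ≤ (q*d+d) * ((q*(d+1)+d).choose q * (q*d+d)^t) := Nat.mul_le_mul_left _ iht
      _ = (q*(d+1)+d).choose q * (q*d+d)^(t+1) := by ring

end Part3

section Part4
set_option maxHeartbeats 1000000

/-- The central polynomial inequality. -/
lemma keyP (d q : ℕ) (hd : 2 ≤ d) (hq : 1 ≤ q) :
    (d-1)*(q*d+q+d+1)*d^(d+1)*(q*d+q+d)^d + (q*d+d)^d*(q*d+d+1)
      + (q*d+d+1) * (∑ s ∈ Finset.range d, (q*d+d)^(d-s)*(q*d+q+d)^s*d^(s+1))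
      ≤ d^(d+2)*(q*d+q+d)^d*(q*d+d+1) := by
  have hd1 : 1 ≤ d := by omega
  zify [hd1]
  set A : ℤ := ((q:ℤ)*d+d) with hA
  set B : ℤ := ((q:ℤ)*d+q+d) with hB
  set SS : ℤ := ∑ i ∈ Finset.range d, (B*d)^i * A^(d-1-i) with hSS
  have hG : (∑ s ∈ Finset.range d, A^(d-s)*B^s*(d:ℤ)^(s+1)) = (d:ℤ) * A * SS := by
    rw [hSS, Finset.mul_sum]
    refine Finset.sum_congr rfl fun s hs => ?_
    have hsd : s < d := Finset.mem_range.mp hs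
    rw [mul_pow, show d - s = (d-1-s)+1 by omega, pow_succ]
    ring
  rw [hG]
  have hgeom := geom_sum₂_mul (B*(d:ℤ)) A d
  rw [← hSS, mul_pow] at hgeom
  set W : ℤ := (q:ℤ)*((d:ℤ)^2-2)+((d:ℤ)-2)*((d:ℤ)+1) with hW
  have key : ((B*d - A)*(A-1)) * ((d:ℤ)^(d+2)*B^d*(A+1)
        - (((d:ℤ)-1)*(B+1)*(d:ℤ)^(d+1)*B^d + A^d*(A+1) + (A+1)*((d:ℤ)*A*SS)))
      = (B*d - A) * ((d:ℤ)^(d+1)*W*B^d + A^d*(A+1)) := by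
    rw [hW, hA, hB]
    linear_combination (-((((q:ℤ)*d+d)-1)*(((q:ℤ)*d+d)+1)*(d:ℤ)*((q:ℤ)*d+d))) * hgeom
  have hq' : (1:ℤ) ≤ (q:ℤ) := by exact_mod_cast hq
  have hd' : (2:ℤ) ≤ (d:ℤ) := by exact_mod_cast hd
  have hBdA : (0:ℤ) < B*d - A := by rw [hA, hB]; nlinarith
  have hA1 : (0:ℤ) < A - 1 := by rw [hA]; nlinarith
  have hWpos : (0:ℤ) ≤ W := by rw [hW]; nlinarith
  have hrhs : (0:ℤ) ≤ (B*d - A) * ((d:ℤ)^(d+1)*W*B^d + A^d*(A+1)) := by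
    apply mul_nonneg (le_of_lt hBdA)
    have hBnn : (0:ℤ) ≤ B := by rw [hB]; positivity
    have hAnn : (0:ℤ) ≤ A := by rw [hA]; positivity
    have h1 : (0:ℤ) ≤ (d:ℤ)^(d+1)*W*B^d :=
      mul_nonneg (mul_nonneg (by positivity) hWpos) (pow_nonneg hBnn d)
    have h2 : (0:ℤ) ≤ A^d*(A+1) := mul_nonneg (pow_nonneg hAnn d) (by linarith)
    linarith
  have hfac : (0:ℤ) < (B*d - A)*(A-1) := mul_pos hBdA hA1
  have hdiff : (0:ℤ) ≤ (d:ℤ)^(d+2)*B^d*(A+1)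
      - (((d:ℤ)-1)*(B+1)*(d:ℤ)^(d+1)*B^d + A^d*(A+1) + (A+1)*((d:ℤ)*A*SS)) := by
    by_contra hneg
    push_neg at hneg
    have := mul_neg_of_pos_of_neg hfac hneg
    rw [key] at this
    linarith
  linarith [hdiff]

end Part4

section Part5

set_option maxHeartbeats 1600000

/-- The crucial base case: strict increase at the threshold `m = (j+1)(d+1)`. -/
lemma crux (d : ℕ) (hd : 2 ≤ d) (j : ℕ) :
    ((j+1)*(d+1)).choose j * d ^ (j*d+d) < ddN d ((j+1)*(d+1)-1) (j+1) := by
  rcases Nat.eq_zero_or_pos j with rfl | hj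
  · -- j = 0
    rw [show (0+1)*(d+1)-1 = d by omega, show (0+1)*(d+1) = d+1 by ring,
      Nat.choose_zero_right, one_mul, show 0*d+d = d by omega]
    have h1 : ddN d d 1 = ddN d (d-1) 1 + d^(d-1) * d := by
      have h := ddN_succ_top d (d-1) 1
      rw [show d-1+1 = d by omega, Nat.choose_one_right] at h
      exact h
    have h2 : d ^ (d-1) * d = d ^ d := by
      rw [← pow_succ]
      congr 1
      omega
    have h3 : 1 ≤ ddN d (d-1) 1 := by
      have h := ddN_split d 1 1 (d-2)
      rw [show 1+(d-2) = d-1 by omega, ddN_self] at h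
      omega
    show d ^ d < ddN d d 1
    omega
  · -- j ≥ 1
    set u := j*d with hu
    have hu2 : 2 ≤ u := by
      have : 1*2 ≤ j*d := Nat.mul_le_mul hj hd
      omega
    have hN : j*(d+1) = u+j := by rw [hu]; ring
    rw [show (j+1)*(d+1) = u+j+d+1 by rw [hu]; ring, show u+j+d+1-1 = u+j+d by omega]
    -- goal : (u+j+d+1).choose j * d ^ (u+d) < ddN d (u+j+d) (j+1)
    -- Identity I3
    have hI3 := ddN_I3 (show 1 ≤ d by omega) j (u+d-1)
    rw [show j+(u+d-1)+1 = u+j+d by omega, show j+(u+d-1) = u+j+d-1 by omega,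
      show u+d-1+1 = u+d by omega] at hI3
    -- hI3 : (d-1) * ddN d (u+j+d) (j+1) + ddN d (u+j+d-1) j = d^(u+d) * (u+j+d).choose (j+1)
    have hC2 : (u+j+d).choose (j+1) = d * (u+j+d).choose j := by
      have h := Nat.choose_succ_right_eq (u+j+d) j
      rw [show u+j+d-j = u+d by omega] at h
      have hud : u+d = d*(j+1) := by rw [hu]; ring
      rw [hud] at h
      apply Nat.eq_of_mul_eq_mul_right (show 0 < j+1 by omega)
      rw [h]; ring
    rw [hC2] at hI3
    have hmul1 : (u+j+d+1).choose j * (u+d+1) = (u+j+d).choose j * (u+j+d+1) := by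
      have h1 := Nat.add_one_mul_choose_eq (u+j+d) j
      have h2 := Nat.choose_succ_right_eq (u+j+d+1) j
      rw [show u+j+d+1-j = u+d+1 by omega] at h2
      calc (u+j+d+1).choose j * (u+d+1) = (u+j+d+1).choose (j+1) * (j+1) := h2.symm
        _ = (u+j+d+1) * (u+j+d).choose j := h1.symm
        _ = (u+j+d).choose j * (u+j+d+1) := Nat.mul_comm _ _
    -- upper bound for ddN d (u+j+d-1) j
    have hneg := ddN_neg hd (j-1) (u+j-2) (by omega)
      (by rw [show (j-1)+1 = j by omega, hN]; omega)
    rw [show (j-1)+1 = j by omega, show u+j-2+1 = u+j-1 by omega,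
      show u+j-2-(j-1) = u-1 by omega] at hneg
    -- hneg : ddN d (u+j-2) j < (u+j-1).choose (j-1) * d^(u-1)
    have hsplit := ddN_split d (u+j-2) j (d+1)
    rw [show u+j-2+(d+1) = u+j+d-1 by omega] at hsplit
    have hcongr : ∀ s ∈ Finset.range (d+1),
        d ^ (u+j-2+1+s-j) * (u+j-2+1+s).choose j = d^(u-1+s) * (u+j-1+s).choose j := by
      intro s _
      rw [show u+j-2+1+s-j = u-1+s by omega, show u+j-2+1+s = u+j-1+s by omega]
    rw [Finset.sum_congr rfl hcongr] at hsplit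
    rw [Finset.sum_range_succ'] at hsplit
    have hcongr2 : ∀ s ∈ Finset.range d,
        d ^ (u-1+(s+1)) * (u+j-1+(s+1)).choose j = d^(u+s) * (u+j+s).choose j := by
      intro s _
      rw [show u-1+(s+1) = u+s by omega, show u+j-1+(s+1) = u+j+s by omega]
    rw [Finset.sum_congr rfl hcongr2, show u-1+0 = u-1 by omega,
      show u+j-1+0 = u+j-1 by omega] at hsplit
    -- hsplit : ddN d (u+j+d-1) j
    --   = ddN d (u+j-2) j + (∑ s ∈ range d, d^(u+s) * (u+j+s).choose j + d^(u-1) * (u+j-1).choose j)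
    have hpas := Nat.choose_succ_succ (u+j-1) (j-1)
    simp only [Nat.succ_eq_add_one] at hpas
    rw [show (j-1)+1 = j by omega, show u+j-1+1 = u+j by omega] at hpas
    -- hpas : (u+j).choose j = (u+j-1).choose (j-1) + (u+j-1).choose j
    have hU : ddN d (u+j+d-1) j
        < (u+j).choose j * d^(u-1) + ∑ s ∈ Finset.range d, d^(u+s) * (u+j+s).choose j := by
      calc ddN d (u+j+d-1) j
          = ddN d (u+j-2) j
            + (∑ s ∈ Finset.range d, d^(u+s) * (u+j+s).choose j
                + d^(u-1) * (u+j-1).choose j) := hsplit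
        _ < (u+j-1).choose (j-1) * d^(u-1)
            + (∑ s ∈ Finset.range d, d^(u+s) * (u+j+s).choose j
                + d^(u-1) * (u+j-1).choose j) := Nat.add_lt_add_right hneg _
        _ = (u+j).choose j * d^(u-1)
            + ∑ s ∈ Finset.range d, d^(u+s) * (u+j+s).choose j := by rw [hpas]; ring
    -- geometric bound in usable form
    have hgeo : ∀ s, s ≤ d →
        (u+j+s).choose j * (u+j+d)^(d-s) ≤ (u+j+d).choose j * (u+d)^(d-s) := by
      intro s hs
      have h := geo_bound (d := d) j (d-s) (by omega)
      rw [show j*(d+1)+d-(d-s) = u+j+s by omega, show j*(d+1)+d = u+j+d by omega,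
        show j*d+j+d = u+j+d by omega, show j*d+d = u+d by omega] at h
      exact h
    have hKP := keyP d j hd hj
    rw [show j*d+j+d+1 = u+j+d+1 by omega, show j*d+j+d = u+j+d by omega,
      show j*d+d+1 = u+d+1 by omega, show j*d+d = u+d by omega] at hKP
    -- the main multiplied inequality
    have hMNI : (d-1)*((u+j+d+1).choose j)*d^(u+d)
        + ((u+j).choose j * d^(u-1) + ∑ s ∈ Finset.range d, d^(u+s) * (u+j+s).choose j)
        ≤ d * ((u+j+d).choose j) * d^(u+d) := by
      have hbc : 0 < (u+j+d)^d * (u+d+1) := by positivity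
      refine Nat.le_of_mul_le_mul_right ?_ hbc
      have hpu : ∀ s : ℕ, d^(u+s) = d^(u-1)*d^(s+1) := by
        intro s
        rw [← pow_add]
        congr 1
        omega
      have hpud : d^(u+d) = d^(u-1)*d^(d+1) := by
        rw [← pow_add]; congr 1; omega
      calc ((d-1)*((u+j+d+1).choose j)*d^(u+d)
            + ((u+j).choose j * d^(u-1) + ∑ s ∈ Finset.range d, d^(u+s) * (u+j+s).choose j))
            * ((u+j+d)^d * (u+d+1))
          = (d-1)*d^(u+d)*(u+j+d)^d*(((u+j+d+1).choose j)*(u+d+1))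
            + ((u+j).choose j * (u+j+d)^d) * (d^(u-1)*(u+d+1))
            + ∑ s ∈ Finset.range d,
                (d^(u+s) * (u+j+s).choose j) * ((u+j+d)^d * (u+d+1)) := by
            simp only [add_mul, Finset.sum_mul]
            ring
        _ ≤ (d-1)*d^(u+d)*(u+j+d)^d*(((u+j+d).choose j)*(u+j+d+1))
            + (((u+j+d).choose j) * (u+d)^d) * (d^(u-1)*(u+d+1))
            + ∑ s ∈ Finset.range d,
                d^(u+s) * (u+j+d)^s * (u+d+1) * (((u+j+d).choose j) * (u+d)^(d-s)) := by
            refine Nat.add_le_add (Nat.add_le_add ?_ ?_) ?_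
            · rw [hmul1]
            · refine Nat.mul_le_mul_right _ ?_
              have h := hgeo 0 (by omega)
              rw [Nat.add_zero, Nat.sub_zero] at h
              exact h
            · refine Finset.sum_le_sum ?_
              intro s hs
              have hsd : s < d := Finset.mem_range.mp hs
              have hbd : (u+j+d)^d = (u+j+d)^s * (u+j+d)^(d-s) := by
                rw [← pow_add]; congr 1; omega
              calc (d^(u+s) * (u+j+s).choose j) * ((u+j+d)^d * (u+d+1))
                  = d^(u+s) * (u+j+d)^s * (u+d+1) * ((u+j+s).choose j * (u+j+d)^(d-s)) := by
                    rw [hbd]; ring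
                _ ≤ d^(u+s) * (u+j+d)^s * (u+d+1) * (((u+j+d).choose j) * (u+d)^(d-s)) :=
                    Nat.mul_le_mul_left _ (hgeo s (by omega))
        _ = ((u+j+d).choose j) * d^(u-1) *
              ((d-1)*(u+j+d+1)*d^(d+1)*(u+j+d)^d + (u+d)^d*(u+d+1)
                + (u+d+1) * (∑ s ∈ Finset.range d, (u+d)^(d-s)*(u+j+d)^s*d^(s+1))) := by
            have hterm : ∀ s ∈ Finset.range d,
                d^(u+s) * (u+j+d)^s * (u+d+1) * (((u+j+d).choose j) * (u+d)^(d-s))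
                = (((u+j+d).choose j) * d^(u-1) * (u+d+1))
                    * ((u+d)^(d-s)*(u+j+d)^s*d^(s+1)) := by
              intro s _
              rw [hpu s]
              ring
            rw [Finset.sum_congr rfl hterm, ← Finset.mul_sum, hpud, Finset.mul_sum,
              ← Finset.mul_sum]
            ring
        _ ≤ ((u+j+d).choose j) * d^(u-1) * (d^(d+2)*(u+j+d)^d*(u+d+1)) :=
            Nat.mul_le_mul_left _ hKP
        _ = (d * ((u+j+d).choose j) * d^(u+d)) * ((u+j+d)^d * (u+d+1)) := by
            have h1 : d^(u-1)*d^(d+2) = d * d^(u+d) := by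
              rw [← pow_add, show u-1+(d+2) = (u+d)+1 by omega, pow_succ]
              ring
            calc ((u+j+d).choose j) * d^(u-1) * (d^(d+2)*(u+j+d)^d*(u+d+1))
                = ((u+j+d).choose j) * (d^(u-1)*d^(d+2)) * ((u+j+d)^d*(u+d+1)) := by ring
              _ = (d * ((u+j+d).choose j) * d^(u+d)) * ((u+j+d)^d * (u+d+1)) := by
                  rw [h1]; ring
    -- final assembly
    set S := ddN d (u+j+d) (j+1) with hS
    set U := ddN d (u+j+d-1) j with hUdef
    set P1 := (u+j+d+1).choose j * d^(u+d) with hP1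
    set UB := (u+j).choose j * d^(u-1) + ∑ s ∈ Finset.range d, d^(u+s) * (u+j+s).choose j
      with hUB
    set Z := d * ((u+j+d).choose j) * d^(u+d) with hZ
    -- hI3 : (d-1) * S + U = d^(u+d) * (d * (u+j+d).choose j)
    -- hMNI : (d-1)*((u+j+d+1).choose j)*d^(u+d) + UB ≤ Z
    have hI3' : (d-1) * S + U = Z := by rw [hI3, hZ]; ring
    have hP1' : (d-1)*((u+j+d+1).choose j)*d^(u+d) = (d-1)*P1 := by rw [hP1]; ring
    rw [hP1'] at hMNI
    have hfin : (d-1)*P1 < (d-1)*S := by omega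
    exact Nat.lt_of_mul_lt_mul_left hfin

end Part5

section Part6

/-- Strict increase at and above the threshold. -/
lemma ddN_pos (d : ℕ) (hd : 2 ≤ d) (j n : ℕ) (h : (j+1)*(d+1) ≤ n+1) :
    (n+1).choose j * d ^ (n+1-j) < d * ddN d n (j+1) := by
  have hN0 : 0 < (j+1)*(d+1) := Nat.mul_pos (by omega) (by omega)
  have hNexp : (j+1)*(d+1) = j*d+j+d+1 := by ring
  obtain ⟨k, hk⟩ : ∃ k, n = ((j+1)*(d+1)-1) + k := ⟨n - ((j+1)*(d+1)-1), by omega⟩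
  subst hk
  set N1 := (j+1)*(d+1) with hN1def
  clear h
  induction k with
  | zero =>
    have hc := crux d hd j
    rw [← hN1def] at hc
    have hc2 : N1.choose j * d ^ (j*d+d) * d < ddN d (N1-1) (j+1) * d :=
      (Nat.mul_lt_mul_right (show 0 < d by omega)).mpr hc
    rw [show N1-1+0 = N1-1 by omega, show N1-1+1 = N1 by omega,
      show N1 - j = (j*d+d)+1 by omega, pow_succ]
    calc N1.choose j * (d ^ (j*d+d) * d) = N1.choose j * d ^ (j*d+d) * d := by ring
      _ < ddN d (N1-1) (j+1) * d := hc2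
      _ = d * ddN d (N1-1) (j+1) := Nat.mul_comm _ _
  | succ k ih =>
    rw [show N1-1+(k+1)+1 = N1+k+1 by omega, show N1-1+(k+1) = (N1+k-1)+1 by omega,
      ddN_succ_top d (N1+k-1) (j+1), show N1+k-1+1 = N1+k by omega]
    rw [show N1-1+k+1 = N1+k by omega, show N1-1+k = N1+k-1 by omega] at ih
    -- ih : (N1+k).choose j * d ^ (N1+k-j) < d * ddN d (N1+k-1) (j+1)
    have hkey : d * (N1+k+1).choose j ≤ (N1+k+1).choose (j+1) := by
      have h := Nat.choose_succ_right_eq (N1+k+1) j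
      apply Nat.le_of_mul_le_mul_right _ (show 0 < j+1 by omega)
      rw [h]
      have hle : d * (j+1) ≤ N1+k+1-j := by
        have hN1e : N1 = j*d+j+d+1 := by rw [hN1def]; ring
        have hdj : d*(j+1) = j*d+d := by ring
        omega
      calc d * (N1+k+1).choose j * (j+1) = (N1+k+1).choose j * (d * (j+1)) := by ring
        _ ≤ (N1+k+1).choose j * (N1+k+1-j) := Nat.mul_le_mul_left _ hle
    have hpow : d * d ^ (N1+k-(j+1)) = d ^ (N1+k-j) := by
      rw [← pow_succ']
      congr 1
      omega
    calc d * (ddN d (N1+k-1) (j+1) + d ^ (N1+k-(j+1)) * (N1+k).choose (j+1))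
        = d * ddN d (N1+k-1) (j+1) + (d * d ^ (N1+k-(j+1))) * (N1+k).choose (j+1) := by ring
      _ = d * ddN d (N1+k-1) (j+1) + d ^ (N1+k-j) * (N1+k).choose (j+1) := by rw [hpow]
      _ > (N1+k).choose j * d ^ (N1+k-j) + d ^ (N1+k-j) * (N1+k).choose (j+1) := by
          omega
      _ = d ^ (N1+k-j) * ((N1+k).choose j + (N1+k).choose (j+1)) := by ring
      _ = d ^ (N1+k-j) * (N1+k+1).choose (j+1) := by
          rw [← Nat.choose_succ_succ (N1+k) j]
      _ ≥ d ^ (N1+k-j) * (d * (N1+k+1).choose j) := Nat.mul_le_mul_left _ hkey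
      _ = (N1+k+1).choose j * (d ^ (N1+k-j) * d) := by ring
      _ = (N1+k+1).choose j * d ^ (N1+k+1-j) := by
          rw [← pow_succ, show N1+k-j+1 = N1+k+1-j by omega]

lemma ddN_lt_succ (d : ℕ) (hd : 2 ≤ d) (m i : ℕ) (hm : 1 ≤ m) (h : (i+1)*(d+1) ≤ m) :
    ddN d m i < ddN d m (i+1) := by
  obtain ⟨n, rfl⟩ : ∃ n, m = n+1 := ⟨m-1, by omega⟩
  rw [ddN_rec d n i, ddN_succ_top d n i]
  have hp := ddN_pos d hd i n h
  rw [Nat.mul_comm] at hp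
  omega

lemma ddN_gt_succ (d : ℕ) (hd : 2 ≤ d) (m i : ℕ) (him : i < m) (h : m + 1 ≤ (i+1)*(d+1)) :
    ddN d m (i+1) < ddN d m i := by
  obtain ⟨n, rfl⟩ : ∃ n, m = n+1 := ⟨m-1, by omega⟩
  rw [ddN_rec d n i, ddN_succ_top d n i]
  have hneg := ddN_neg hd i n (by omega) (by omega)
  have h2 : d * ddN d n (i+1) < d * ((n+1).choose i * d^(n-i)) :=
    (mul_lt_mul_iff_right₀ (show 0 < d by omega)).mpr hneg
  have h3 : d * ((n+1).choose i * d^(n-i)) = d^(n+1-i) * (n+1).choose i := by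
    rw [show n+1-i = (n-i)+1 by omega, pow_succ]
    ring
  omega

lemma mbar_eq (m d : ℕ) (hd : 2 ≤ d) : mbar m (d:ℝ) = m/(d+1) := by
  unfold mbar
  have hpos : (0:ℝ) < (d:ℝ) + 1 := by positivity
  rcases le_or_gt m d with h | h
  · have hceil : ⌈((m:ℝ) - d)/((d:ℝ)+1)⌉ ≤ (0:ℤ) := by
      apply Int.ceil_le.mpr
      have : (m:ℝ) ≤ (d:ℝ) := by exact_mod_cast h
      have hx : ((m:ℝ) - d)/((d:ℝ)+1) ≤ 0 :=
        div_nonpos_of_nonpos_of_nonneg (by linarith) (le_of_lt hpos)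
      simpa using hx
    rw [Int.toNat_eq_zero.mpr hceil]
    symm
    apply Nat.div_eq_of_lt
    omega
  · set k := m/(d+1) with hk
    have h1 : k*(d+1) ≤ m := Nat.div_mul_le_self m (d+1)
    have h2 : m < (k+1)*(d+1) :=
      (Nat.div_lt_iff_lt_mul (show 0 < d+1 by omega)).mp (Nat.lt_succ_self k)
    have h2n : m ≤ k*(d+1)+d := by
      have hexp : (k+1)*(d+1) = k*(d+1)+d+1 := by ring
      omega
    have h1' : ((k:ℝ))*((d:ℝ)+1) ≤ (m:ℝ) := by exact_mod_cast h1
    have h2' : (m:ℝ) ≤ (k:ℝ)*((d:ℝ)+1)+(d:ℝ) := by exact_mod_cast h2n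
    have hceil : ⌈((m:ℝ) - d)/((d:ℝ)+1)⌉ = (k:ℤ) := by
      rw [Int.ceil_eq_iff]
      constructor
      · rw [lt_div_iff₀ hpos]
        push_cast
        nlinarith
      · rw [div_le_iff₀ hpos]
        push_cast
        nlinarith
    rw [hceil]
    simp

end Part6

/-- Corollary 3.2.  If `d` is an integer with `d > 1`, then
`Q_m(x+d)` has the unique mode `m̄ = ⌈(m−d)/(d+1)⌉`. -/
theorem stmt_12 (m : ℕ) (hm : 0 < m) (d : ℕ) (hd : 1 < d) :
    ∀ t, IsMode (qCoeff m (d : ℝ)) m t ↔ t = mbar m (d : ℝ) := by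
  have hd2 : 2 ≤ d := hd
  intro t
  rw [mbar_eq m d hd2]
  set T := m/(d+1) with hT
  have hTm : T ≤ m := Nat.div_le_self _ _
  have hinc : ∀ i, i < T → ddN d m i < ddN d m (i+1) := by
    intro i hi
    apply ddN_lt_succ d hd2 m i hm
    exact (Nat.le_div_iff_mul_le (show 0 < d+1 by omega)).mp (by omega)
  have hdec : ∀ i, T ≤ i → i < m → ddN d m (i+1) < ddN d m i := by
    intro i h1 h2
    apply ddN_gt_succ d hd2 m i h2
    have h3 : m < (i+1)*(d+1) :=
      (Nat.div_lt_iff_lt_mul (show 0 < d+1 by omega)).mp (by omega)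
    omega
  have hcast : ∀ a b : ℕ, ddN d m a < ddN d m b →
      qCoeff m (d:ℝ) a < qCoeff m (d:ℝ) b := by
    intro a b h
    rw [qCoeff_eq_ddN, qCoeff_eq_ddN]
    exact_mod_cast h
  constructor
  · rintro ⟨htm, hup, hdown⟩
    by_contra hne
    rcases Nat.lt_or_ge t T with hlt | hge
    · have h1 := hdown t le_rfl (lt_of_lt_of_le hlt hTm)
      have h2 := hcast t (t+1) (hinc t hlt)
      linarith
    · have hlt : T < t := by omega
      have h1 := hup T hlt
      have h2 := hcast (T+1) T (hdec T le_rfl (by omega))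
      linarith
  · rintro rfl
    refine ⟨hTm, ?_, ?_⟩
    · intro i hi
      exact le_of_lt (hcast i (i+1) (hinc i hi))
    · intro i h1 h2
      exact le_of_lt (hcast (i+1) i (hdec i h1 h2))
end

section
/- Let m be a positive integer, d > 1 a real number, and Q_m(x) = Σ_{i=0}^m x^i. If m/(d+1) is a positive integer, then Q_m(x+d) has the unique mode m̄ = ⌈(m−d)/(d+1)⌉ (which in this case equals m/(d+1)). -/
open Finset

lemma chooseId (n j : ℕ) : (n+1).choose j * (n+1-j) = (n+1) * n.choose j := by
  rw [← Nat.choose_succ_right_eq]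
  exact (Nat.add_one_mul_choose_eq n j).symm

lemma termBound (m j : ℕ) (hj : j ≤ m) : ∀ t, t ≤ m - j →
    (m - t).choose j * m ^ t ≤ m.choose j * (m - j) ^ t := by
  intro t
  induction t with
  | zero => simp
  | succ t ih =>
    intro ht
    have h1 := ih (by omega)
    have hn : j + 1 ≤ m - t := by omega
    have hstep : m * ((m - (t+1)).choose j) ≤ (m - j) * ((m - t).choose j) := by
      have e1 : (m - t).choose j * ((m - t) - j) = (m - t) * ((m - t - 1).choose j) := by
        have h := chooseId (m - t - 1) j
        rw [show m - t - 1 + 1 = m - t by omega] at h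
        exact h
      have e2 : m * ((m - t) - j) ≤ (m - j) * (m - t) := by
        zify [show j ≤ m - t by omega, hj]
        nlinarith [Nat.cast_nonneg (α := ℤ) j, Nat.cast_nonneg (α := ℤ) t,
          (by exact_mod_cast Nat.sub_le m t : ((m - t : ℕ) : ℤ) ≤ (m : ℤ)),
          mul_nonneg (Nat.cast_nonneg (α := ℤ) j)
            (by omega : (0:ℤ) ≤ (m:ℤ) - ((m - t : ℕ) : ℤ))]
      have e3 : (m - t) * (m * ((m - (t+1)).choose j)) ≤ (m - t) * ((m - j) * ((m - t).choose j)) := by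
        calc (m - t) * (m * ((m - (t+1)).choose j))
            = m * ((m - t) * ((m - t - 1).choose j)) := by
              rw [show m - (t+1) = m - t - 1 by omega]; ring
          _ = m * ((m - t).choose j * ((m - t) - j)) := by rw [e1]
          _ = (m * ((m - t) - j)) * ((m - t).choose j) := by ring
          _ ≤ ((m - j) * (m - t)) * ((m - t).choose j) := Nat.mul_le_mul_right _ e2
          _ = (m - t) * ((m - j) * ((m - t).choose j)) := by ring
      exact Nat.le_of_mul_le_mul_left e3 (by omega)
    calc (m - (t+1)).choose j * m ^ (t+1)
        = (m * ((m - (t+1)).choose j)) * m ^ t := by ring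
      _ ≤ ((m - j) * ((m - t).choose j)) * m ^ t := Nat.mul_le_mul_right _ hstep
      _ = (m - j) * ((m - t).choose j * m ^ t) := by ring
      _ ≤ (m - j) * (m.choose j * (m - j) ^ t) := Nat.mul_le_mul_left _ h1
      _ = m.choose j * (m - j) ^ (t+1) := by ring

lemma qPos (m : ℕ) (d : ℝ) (hd : 0 < d) (j : ℕ) (hj : j ≤ m) : 0 < qCoeff m d j := by
  unfold qCoeff
  apply Finset.sum_pos
  · intro i hi
    simp only [mem_Icc] at hi
    exact mul_pos (pow_pos hd _) (by exact_mod_cast Nat.choose_pos hi.1)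
  · exact ⟨m, by simp [mem_Icc, hj]⟩

lemma qTop (m : ℕ) (d : ℝ) : qCoeff m d m = 1 := by
  unfold qCoeff
  simp

lemma qId (m : ℕ) (d : ℝ) (i : ℕ) (him : i < m) :
    qCoeff m d i = ((m+1).choose (i+1) : ℝ) * d ^ (m - i) - (d - 1) * qCoeff m d (i+1) := by
  unfold qCoeff
  have h1 : ∀ l ∈ Icc i m, d ^ (l - i) * (l.choose i : ℝ)
      = d ^ (l - i) * (((l+1).choose (i+1) : ℕ) : ℝ) - d ^ (l - i) * ((l.choose (i+1) : ℕ) : ℝ) := by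
    intro l hl
    have h : ((l+1).choose (i+1) : ℕ) = l.choose i + l.choose (i+1) := Nat.choose_succ_succ _ _
    have h' : (((l+1).choose (i+1) : ℕ) : ℝ) = (l.choose i : ℝ) + (l.choose (i+1) : ℝ) := by
      exact_mod_cast congrArg (Nat.cast (R := ℝ)) h
    rw [h']; ring
  rw [Finset.sum_congr rfl h1, Finset.sum_sub_distrib]
  have hA : (∑ l ∈ Icc i m, d ^ (l - i) * (((l+1).choose (i+1) : ℕ) : ℝ))
      = (∑ l ∈ Icc (i+1) m, d ^ (l - (i+1)) * ((l.choose (i+1) : ℕ) : ℝ))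
        + d ^ (m - i) * (((m+1).choose (i+1) : ℕ) : ℝ) := by
    have hmap : (∑ l ∈ Icc i m, d ^ (l - i) * (((l+1).choose (i+1) : ℕ) : ℝ))
        = ∑ l ∈ Icc (i+1) (m+1), d ^ (l - (i+1)) * ((l.choose (i+1) : ℕ) : ℝ) := by
      rw [show Icc (i+1) (m+1) = (Icc i m).map (addRightEmbedding 1) from
        (Finset.map_add_right_Icc i m 1).symm, Finset.sum_map]
      apply Finset.sum_congr rfl
      intro l hl
      simp only [addRightEmbedding_apply]
      congr 2
      omega
    rw [hmap, ← Finset.insert_Icc_right_eq_Icc_add_one (by omega : i + 1 ≤ m + 1), Finset.sum_insert (by simp)]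
    rw [show m + 1 - (i+1) = m - i by omega]
    ring
  have hB : (∑ l ∈ Icc i m, d ^ (l - i) * ((l.choose (i+1) : ℕ) : ℝ))
      = d * ∑ l ∈ Icc (i+1) m, d ^ (l - (i+1)) * ((l.choose (i+1) : ℕ) : ℝ) := by
    rw [← Finset.sum_subset (Finset.Icc_subset_Icc_left (Nat.le_succ i))
      (by
        intro x hx hnx
        simp only [mem_Icc] at hx hnx
        have hx0 : x.choose (i+1) = 0 := Nat.choose_eq_zero_of_lt (by omega)
        simp [hx0])]
    rw [Finset.mul_sum]
    apply Finset.sum_congr rfl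
    intro l hl
    simp only [mem_Icc] at hl
    rw [show l - i = (l - (i+1)) + 1 by omega, pow_succ]
    ring
  rw [hA, hB]
  ring

lemma hPoly (k d j : ℝ) (hk : 1 ≤ k) (hd : 1 < d) (hj1 : 1 ≤ j) (hjk : j ≤ k)
    (hm3 : 3 ≤ k*(d+1)) :
    (d-1)*(k*(d+1))*(k*(d+1)-j)*(k*(d+1)+1-j)
      ≤ (k*(d+1)+1)*(k*(d+1)-2*j)*((k*(d+1))*d-(k*(d+1))+j+1) := by
  have h1 : 0 ≤ 2*((k*(d+1))^2 - (k*(d+1))*d - 2) := by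
    have hmd : 1 ≤ k*(d+1) - d := by nlinarith [mul_nonneg (by linarith : (0:ℝ) ≤ k - 1) (by linarith : (0:ℝ) ≤ d)]
    nlinarith
  have h2 : 0 ≤ k*(k+1)*(d-1) := mul_nonneg (mul_nonneg (by linarith) (by linarith)) (by linarith)
  have hγ : 0 ≤ (k*(d+1))*(d+1)+2 := by nlinarith
  rcases eq_or_lt_of_le hk with hk1 | hk1
  · have hj : j = 1 := le_antisymm (by linarith [hjk, hk1]) hj1
    rw [hj]
    nlinarith [h1]
  · have hid : (k-1)*(((k*(d+1)+1)*(k*(d+1)-2*j)*((k*(d+1))*d-(k*(d+1))+j+1))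
        - ((d-1)*(k*(d+1))*(k*(d+1)-j)*(k*(d+1)+1-j)))
      = (k-j)*(2*((k*(d+1))^2 - (k*(d+1))*d - 2)) + (j-1)*(k*(k+1)*(d-1))
        + (k-1)*((k*(d+1))*(d+1)+2)*(j-1)*(k-j) := by ring
    have hrhs : 0 ≤ (k-j)*(2*((k*(d+1))^2 - (k*(d+1))*d - 2)) + (j-1)*(k*(k+1)*(d-1))
        + (k-1)*((k*(d+1))*(d+1)+2)*(j-1)*(k-j) := by
      have a1 : 0 ≤ (k-j) := by linarith
      have a2 : 0 ≤ (j-1) := by linarith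
      have a3 : 0 ≤ (k-1) := by linarith
      positivity
    have hmul : 0 ≤ (k-1)*(((k*(d+1)+1)*(k*(d+1)-2*j)*((k*(d+1))*d-(k*(d+1))+j+1))
        - ((d-1)*(k*(d+1))*(k*(d+1)-j)*(k*(d+1)+1-j))) := by rw [hid]; exact hrhs
    nlinarith [hmul, hk1]

lemma Breal (m k : ℕ) (d : ℝ) (hd : 1 < d) (hk : 0 < k) (hkm : (k:ℝ)*(d+1) = m)
    (j : ℕ) (hj : k+1 ≤ j) (hjm : j ≤ m) :
    (m:ℝ)*d*(m.choose j : ℝ) ≤ ((m:ℝ)*d - m + j)*((m+1).choose j : ℝ) := by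
  have hd0 : (0:ℝ) < d := by linarith
  have hcid : ((m+1).choose j : ℝ) * ((m:ℝ)+1-j) = ((m:ℝ)+1) * (m.choose j : ℝ) := by
    have h := chooseId m j
    have h' : (((m+1).choose j * (m+1-j) : ℕ) : ℝ) = (((m+1) * m.choose j : ℕ) : ℝ) := by
      exact_mod_cast congrArg (Nat.cast (R := ℝ)) h
    push_cast [Nat.cast_sub (by omega : j ≤ m+1)] at h'
    linarith [h']
  have hpos : (0:ℝ) < ((m+1).choose j : ℝ) := by
    exact_mod_cast Nat.choose_pos (by omega : j ≤ m+1)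
  have hj' : (k:ℝ)+1 ≤ (j:ℝ) := by exact_mod_cast hj
  have hk1 : (1:ℝ) ≤ (k:ℝ) := by exact_mod_cast hk
  have hkey : (m:ℝ)*d*((m:ℝ)+1-j) ≤ ((m:ℝ)*d - m + j)*((m:ℝ)+1) := by
    rw [← hkm]
    nlinarith [mul_nonneg (by linarith : (0:ℝ) ≤ (j:ℝ) - ((k:ℝ)+1))
      (by nlinarith : (0:ℝ) ≤ (k:ℝ)*(d+1)*d + (k:ℝ)*(d+1) + 1)]
  have h3 : (m:ℝ)*d*(m.choose j : ℝ) * ((m:ℝ)+1) ≤ ((m:ℝ)*d - m + j)*((m+1).choose j : ℝ) * ((m:ℝ)+1) := by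
    calc (m:ℝ)*d*(m.choose j : ℝ) * ((m:ℝ)+1)
        = ((m:ℝ)*d*((m:ℝ)+1-j)) * ((m+1).choose j : ℝ) := by
          rw [show (m:ℝ)*d*(m.choose j : ℝ) * ((m:ℝ)+1) = (m:ℝ)*d*(((m:ℝ)+1) * (m.choose j : ℝ)) by ring,
            ← hcid]; ring
      _ ≤ (((m:ℝ)*d - m + j)*((m:ℝ)+1)) * ((m+1).choose j : ℝ) :=
          mul_le_mul_of_nonneg_right hkey hpos.le
      _ = ((m:ℝ)*d - m + j)*((m+1).choose j : ℝ) * ((m:ℝ)+1) := by ring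
  exact le_of_mul_le_mul_right h3 (by positivity)

lemma Areal (m k : ℕ) (d : ℝ) (hd : 1 < d) (hk : 0 < k) (hkm : (k:ℝ)*(d+1) = m)
    (hm3 : 3 ≤ m) (j : ℕ) (hj1 : 1 ≤ j) (hjk : j ≤ k) (hjm : j + 1 < m) :
    (d-1)*(m:ℝ)*(m.choose (j+1) : ℝ)
      ≤ (((m+1).choose (j+1) : ℝ) - ((m+1).choose j : ℝ)) * ((m:ℝ)*d - (m:ℝ) + ((j:ℝ)+1)) := by
  have hd0 : (0:ℝ) < d := by linarith
  have f1 : (m.choose (j+1) : ℝ) * ((m:ℝ)+1) = ((m+1).choose (j+1) : ℝ) * ((m:ℝ)-j) := by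
    have h := chooseId m (j+1)
    have h' : (((m+1).choose (j+1) * (m+1-(j+1)) : ℕ) : ℝ) = (((m+1) * m.choose (j+1) : ℕ) : ℝ) := by
      exact_mod_cast congrArg (Nat.cast (R := ℝ)) h
    push_cast [Nat.cast_sub (by omega : j ≤ m)] at h'
    push_cast
    linarith [h']
  have f2 : ((m+1).choose (j+1) : ℝ) * ((j:ℝ)+1) = ((m+1).choose j : ℝ) * ((m:ℝ)+1-j) := by
    have h := Nat.choose_succ_right_eq (m+1) j
    have h' : (((m+1).choose (j+1) * (j+1) : ℕ) : ℝ) = (((m+1).choose j * (m+1-j) : ℕ) : ℝ) := by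
      exact_mod_cast congrArg (Nat.cast (R := ℝ)) h
    push_cast [Nat.cast_sub (by omega : j ≤ m+1)] at h'
    linarith [h']
  have hXpos : (0:ℝ) < ((m+1).choose (j+1) : ℝ) := by
    exact_mod_cast Nat.choose_pos (by omega : j+1 ≤ m+1)
  have hk1 : (1:ℝ) ≤ (k:ℝ) := by exact_mod_cast hk
  have hj1' : (1:ℝ) ≤ (j:ℝ) := by exact_mod_cast hj1
  have hjk' : (j:ℝ) ≤ (k:ℝ) := by exact_mod_cast hjk
  have hm3' : (3:ℝ) ≤ (k:ℝ)*(d+1) := by rw [hkm]; exact_mod_cast hm3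
  have hP := hPoly (k:ℝ) d (j:ℝ) hk1 hd hj1' hjk' hm3'
  rw [hkm] at hP
  -- hP : (d-1)*m*(m-j)*(m+1-j) ≤ (m+1)*(m-2j)*(m*d-m+j+1)
  have hjm' : (j:ℝ) < (m:ℝ) := by exact_mod_cast (by omega : j < m)
  have hfacpos : (0:ℝ) < ((m:ℝ)+1)*((m:ℝ)+1-(j:ℝ)) := by nlinarith
  have hmul : (d-1)*(m:ℝ)*(m.choose (j+1) : ℝ) * (((m:ℝ)+1)*((m:ℝ)+1-(j:ℝ)))
      ≤ ((((m+1).choose (j+1) : ℝ) - ((m+1).choose j : ℝ)) * ((m:ℝ)*d - (m:ℝ) + ((j:ℝ)+1)))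
        * (((m:ℝ)+1)*((m:ℝ)+1-(j:ℝ))) := by
    calc (d-1)*(m:ℝ)*(m.choose (j+1) : ℝ) * (((m:ℝ)+1)*((m:ℝ)+1-(j:ℝ)))
        = ((d-1)*(m:ℝ)*((m:ℝ)-(j:ℝ))*((m:ℝ)+1-(j:ℝ))) * ((m+1).choose (j+1) : ℝ) := by
          linear_combination ((d-1)*(m:ℝ)*((m:ℝ)+1-(j:ℝ))) * f1
      _ ≤ (((m:ℝ)+1)*((m:ℝ)-2*(j:ℝ))*((m:ℝ)*d-(m:ℝ)+(j:ℝ)+1)) * ((m+1).choose (j+1) : ℝ) :=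
          mul_le_mul_of_nonneg_right hP hXpos.le
      _ = ((((m+1).choose (j+1) : ℝ) - ((m+1).choose j : ℝ)) * ((m:ℝ)*d - (m:ℝ) + ((j:ℝ)+1)))
            * (((m:ℝ)+1)*((m:ℝ)+1-(j:ℝ))) := by
          linear_combination (-(((m:ℝ)*d-(m:ℝ)+(j:ℝ)+1)) * ((m:ℝ)+1)) * f2
  exact le_of_mul_le_mul_right hmul hfacpos

lemma qGeom (m j : ℕ) (d : ℝ) (hd : 1 < d) (hjm : j < m) :
    qCoeff m d j * ((m:ℝ)*d - m + j) < (m.choose j : ℝ) * d ^ (m-j) * ((m:ℝ)*d) := by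
  have hd0 : (0:ℝ) < d := by linarith
  have hm0 : (0:ℝ) < (m:ℝ) := by exact_mod_cast (by omega : 0 < m)
  have hjm' : (j:ℝ) < (m:ℝ) := by exact_mod_cast hjm
  have hmd0 : (0:ℝ) < (m:ℝ)*d := mul_pos hm0 hd0
  set q : ℝ := ((m:ℝ) - j)/((m:ℝ)*d) with hq
  have hq0 : 0 < q := div_pos (by linarith) hmd0
  have hq1 : q < 1 := by
    rw [hq, div_lt_one hmd0]
    nlinarith [Nat.cast_nonneg (α := ℝ) j]
  have hterm : ∀ i ∈ Icc j m, d ^ (i-j) * (i.choose j : ℝ)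
      ≤ (m.choose j : ℝ) * d ^ (m-j) * q ^ (m-i) := by
    intro i hi
    simp only [mem_Icc] at hi
    have hnat := termBound m j (le_of_lt hjm) (m-i) (by omega)
    rw [show m-(m-i) = i by omega] at hnat
    have hcast : (i.choose j : ℝ) * ((m:ℝ)) ^ (m-i) ≤ (m.choose j : ℝ) * ((m:ℝ)-(j:ℝ)) ^ (m-i) := by
      have h := (Nat.cast_le (α := ℝ)).2 hnat
      push_cast [Nat.cast_sub (le_of_lt hjm)] at h
      exact h
    have hDpos : (0:ℝ) < ((m:ℝ)*d) ^ (m-i) := pow_pos hmd0 _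
    rw [hq, div_pow, ← mul_div_assoc, le_div_iff₀ hDpos]
    calc d ^ (i-j) * (i.choose j : ℝ) * ((m:ℝ)*d) ^ (m-i)
        = ((i.choose j : ℝ) * ((m:ℝ)) ^ (m-i)) * (d ^ (i-j) * d ^ (m-i)) := by
          rw [mul_pow]; ring
      _ = ((i.choose j : ℝ) * ((m:ℝ)) ^ (m-i)) * d ^ (m-j) := by
          rw [← pow_add, show i-j + (m-i) = m-j by omega]
      _ ≤ ((m.choose j : ℝ) * ((m:ℝ)-(j:ℝ)) ^ (m-i)) * d ^ (m-j) :=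
          mul_le_mul_of_nonneg_right hcast (by positivity)
      _ = (m.choose j : ℝ) * d ^ (m-j) * ((m:ℝ)-(j:ℝ)) ^ (m-i) := by ring
  have hsum : qCoeff m d j ≤ (m.choose j : ℝ) * d ^ (m-j) * (∑ i ∈ Icc j m, q ^ (m-i)) := by
    unfold qCoeff
    rw [Finset.mul_sum]
    exact Finset.sum_le_sum hterm
  have hgs : (∑ i ∈ Icc j m, q ^ (m-i)) = ∑ t ∈ range (m+1-j), q ^ t := by
    rw [show Icc j m = Ico j (m+1) from (Finset.Ico_add_one_right_eq_Icc j m).symm,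
      Finset.sum_Ico_eq_sum_range, ← Finset.sum_range_reflect]
    apply Finset.sum_congr rfl
    intro t ht
    simp only [mem_range] at ht
    congr 1
    omega
  rw [hgs] at hsum
  have hgeom : (∑ t ∈ range (m+1-j), q ^ t) * (1-q) = 1 - q ^ (m+1-j) := by
    have h := geom_sum_mul q (m+1-j)
    linear_combination -h
  have hlt : (∑ t ∈ range (m+1-j), q ^ t) * (1-q) < 1 := by
    rw [hgeom]
    nlinarith [pow_pos hq0 (m+1-j)]
  have hden : (m:ℝ)*d - m + j = ((m:ℝ)*d) * (1-q) := by
    rw [hq]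
    field_simp
    ring
  have hCd : (0:ℝ) < (m.choose j : ℝ) * d ^ (m-j) :=
    mul_pos (by exact_mod_cast Nat.choose_pos (le_of_lt hjm)) (pow_pos hd0 _)
  have h1q : (0:ℝ) < (m:ℝ)*d*(1-q) := by nlinarith
  calc qCoeff m d j * ((m:ℝ)*d - m + j)
      = qCoeff m d j * ((m:ℝ)*d*(1-q)) := by rw [hden]
    _ ≤ ((m.choose j : ℝ) * d ^ (m-j) * (∑ t ∈ range (m+1-j), q ^ t)) * ((m:ℝ)*d*(1-q)) :=
        mul_le_mul_of_nonneg_right hsum h1q.le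
    _ = ((m.choose j : ℝ) * d ^ (m-j) * ((m:ℝ)*d)) * ((∑ t ∈ range (m+1-j), q ^ t) * (1-q)) := by
        ring
    _ < ((m.choose j : ℝ) * d ^ (m-j) * ((m:ℝ)*d)) * 1 :=
        mul_lt_mul_of_pos_left hlt (by positivity)
    _ = (m.choose j : ℝ) * d ^ (m-j) * ((m:ℝ)*d) := by ring

lemma inc_lt (m k : ℕ) (d : ℝ) (hd : 1 < d) (hk : 0 < k) (hkm : (k:ℝ)*(d+1) = m)
    (h2k : 2*k < m) (i : ℕ) (hik : i < k) : qCoeff m d i < qCoeff m d (i+1) := by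
  have hd0 : (0:ℝ) < d := by linarith
  set j := i + 1 with hjdef
  have hj1 : 1 ≤ j := by omega
  have hjk : j ≤ k := by omega
  have hjm : j < m := by omega
  have hj1m : j + 1 < m := by omega
  have hden : (0:ℝ) < (m:ℝ)*d - (m:ℝ) + ((j:ℝ)+1) := by
    have : (0:ℝ) < (m:ℝ) := by exact_mod_cast (by omega : 0 < m)
    nlinarith [Nat.cast_nonneg (α := ℝ) j]
  have hgeo := qGeom m (j+1) d hd hj1m
  have hA := Areal m k d hd hk hkm (by omega) j hj1 hjk hj1m
  -- (d-1) * qCoeff m d (j+1) < (C(m+1,j+1) - C(m+1,j)) * d^(m-j)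
  have h1 : (d-1) * qCoeff m d (j+1) * ((m:ℝ)*d - (m:ℝ) + ((j:ℝ)+1))
      < ((((m+1).choose (j+1) : ℝ) - ((m+1).choose j : ℝ)) * d ^ (m-j))
        * ((m:ℝ)*d - (m:ℝ) + ((j:ℝ)+1)) := by
    have hcast : ((m:ℝ)*d - (m:ℝ)) + (((j:ℝ))+1) = (m:ℝ)*d - (m:ℝ) + ((j+1 : ℕ) : ℝ) := by
      push_cast; ring
    calc (d-1) * qCoeff m d (j+1) * ((m:ℝ)*d - (m:ℝ) + ((j:ℝ)+1))
        = (d-1) * (qCoeff m d (j+1) * ((m:ℝ)*d - (m:ℝ) + ((j+1:ℕ):ℝ))) := by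
          push_cast; ring
      _ < (d-1) * ((((m.choose (j+1) : ℕ)):ℝ) * d ^ (m-(j+1)) * ((m:ℝ)*d)) := by
          apply mul_lt_mul_of_pos_left hgeo (by linarith)
      _ = ((d-1)*(m:ℝ)*((m.choose (j+1) : ℕ):ℝ)) * (d ^ (m-(j+1)) * d) := by ring
      _ = ((d-1)*(m:ℝ)*((m.choose (j+1) : ℕ):ℝ)) * d ^ (m-j) := by
          rw [← pow_succ, show m-(j+1)+1 = m-j by omega]
      _ ≤ ((((m+1).choose (j+1) : ℝ) - ((m+1).choose j : ℝ)) * ((m:ℝ)*d - (m:ℝ) + ((j:ℝ)+1)))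
            * d ^ (m-j) := mul_le_mul_of_nonneg_right hA (by positivity)
      _ = ((((m+1).choose (j+1) : ℝ) - ((m+1).choose j : ℝ)) * d ^ (m-j))
            * ((m:ℝ)*d - (m:ℝ) + ((j:ℝ)+1)) := by ring
  have h2 : (d-1) * qCoeff m d (j+1)
      < (((m+1).choose (j+1) : ℝ) - ((m+1).choose j : ℝ)) * d ^ (m-j) :=
    lt_of_mul_lt_mul_right h1 hden.le
  rw [sub_mul] at h2
  have hid := qId m d j hjm
  have hE : (((m+1).choose j : ℝ)) * d ^ (m-j) < qCoeff m d j := by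
    rw [hid]
    linarith
  have hidi := qId m d i (by omega)
  rw [hidi, show m - i = (m-j)+1 by omega, pow_succ]
  nlinarith [hE, hd0]

lemma dec_lt (m k : ℕ) (d : ℝ) (hd : 1 < d) (hk : 0 < k) (hkm : (k:ℝ)*(d+1) = m)
    (h2k : 2*k < m) (i : ℕ) (hki : k ≤ i) (him : i < m) :
    qCoeff m d (i+1) < qCoeff m d i := by
  have hd0 : (0:ℝ) < d := by linarith
  set j := i + 1 with hjdef
  have hE : qCoeff m d j < (((m+1).choose j : ℝ)) * d ^ (m-j) := by
    rcases eq_or_lt_of_le (show j ≤ m by omega) with hjm | hjm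
    · rw [hjm, qTop, Nat.sub_self, pow_zero, Nat.choose_succ_self_right]
      have : (1:ℝ) ≤ (m:ℝ) := by exact_mod_cast (by omega : 1 ≤ m)
      push_cast
      linarith
    · have hgeo := qGeom m j d hd hjm
      have hB := Breal m k d hd hk hkm j (by omega) (by omega)
      have hden : (0:ℝ) < (m:ℝ)*d - (m:ℝ) + (j:ℝ) := by
        have : (0:ℝ) < (m:ℝ) := by exact_mod_cast (by omega : 0 < m)
        nlinarith [Nat.cast_nonneg (α := ℝ) j]
      have h1 : qCoeff m d j * ((m:ℝ)*d - (m:ℝ) + (j:ℝ))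
          < ((((m+1).choose j : ℝ)) * d ^ (m-j)) * ((m:ℝ)*d - (m:ℝ) + (j:ℝ)) := by
        calc qCoeff m d j * ((m:ℝ)*d - (m:ℝ) + (j:ℝ))
            < (m.choose j : ℝ) * d ^ (m-j) * ((m:ℝ)*d) := hgeo
          _ = ((m:ℝ)*d*(m.choose j : ℝ)) * d ^ (m-j) := by ring
          _ ≤ (((m:ℝ)*d - (m:ℝ) + (j:ℝ))*((m+1).choose j : ℝ)) * d ^ (m-j) :=
              mul_le_mul_of_nonneg_right hB (by positivity)
          _ = ((((m+1).choose j : ℝ)) * d ^ (m-j)) * ((m:ℝ)*d - (m:ℝ) + (j:ℝ)) := by ring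
      exact lt_of_mul_lt_mul_right h1 hden.le
  have hidi := qId m d i him
  rw [hidi, show m - i = (m-j)+1 by omega, pow_succ]
  nlinarith [hE, hd0]

/-- Corollary 3.3.  Let `d > 1`.  If `m/(d+1)` is a positive integer,
then `Q_m(x+d)` has the unique mode `m̄ = ⌈(m−d)/(d+1)⌉`, which equals `m/(d+1)`. -/
theorem stmt_13 (m : ℕ) (hm : 0 < m) (d : ℝ) (hd : 1 < d)
    (hint : ∃ k : ℕ, 0 < k ∧ (k : ℝ) * (d + 1) = (m : ℝ)) :
    (mbar m d : ℝ) * (d + 1) = (m : ℝ) ∧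
      ∀ t, IsMode (qCoeff m d) m t ↔ t = mbar m d := by

  obtain ⟨k, hk0, hkm⟩ := hint
  have hd0 : (0:ℝ) < d := by linarith
  have hk1 : (1:ℝ) ≤ (k:ℝ) := by exact_mod_cast hk0
  have h2k : 2*k < m := by
    have h : ((2*k : ℕ) : ℝ) < (m : ℝ) := by push_cast; nlinarith
    exact_mod_cast h
  have hmb : mbar m d = k := by
    unfold mbar
    have h1 : ⌈((m:ℝ) - d) / (d+1)⌉ = (k:ℤ) := by
      rw [Int.ceil_eq_iff]
      constructor
      · push_cast
        rw [lt_div_iff₀ (by linarith : (0:ℝ) < d+1)]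
        nlinarith [hkm]
      · push_cast
        rw [div_le_iff₀ (by linarith : (0:ℝ) < d+1)]
        nlinarith [hkm]
    rw [h1]
    simp
  have hinc : ∀ i, i < k → qCoeff m d i < qCoeff m d (i+1) :=
    fun i hi => inc_lt m k d hd hk0 hkm h2k i hi
  have hdec : ∀ i, k ≤ i → i < m → qCoeff m d (i+1) < qCoeff m d i :=
    fun i h1 h2 => dec_lt m k d hd hk0 hkm h2k i h1 h2
  refine ⟨by rw [hmb]; exact hkm, ?_⟩
  intro t
  rw [hmb]
  constructor
  · rintro ⟨htm, hup, hdn⟩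
    by_contra hne
    rcases lt_or_gt_of_ne hne with hlt | hgt
    · have h1 := hinc t hlt
      have h2 := hdn t (le_refl t) (by omega)
      linarith
    · have h1 := hup k hgt
      have h2 := hdec k (le_refl k) (by omega)
      linarith
  · rintro rfl
    exact ⟨by omega, fun i hi => (hinc i hi).le, fun i h1 h2 => (hdec i h1 h2).le⟩
end
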